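/- arXiv:2006.10689 — 6 statements merged into one kernel-verified Lean document; each statement's English description precedes it below -/
import Mathlib

section
/- Let μ be a probability measure on the vertex set of a finite graph 𝒢, let A and B be disjoint sets of vertices such that every edge leaving A enters B, and define D = log μ(A) − log μ(B). Let X₀, X₁, X₂, … be any Markov chain on 𝒢 (moving only along edges of 𝒢, self-loops allowed) whose stationary distribution is μ, initialized from the conditional distribution X₀ ∼ μ(·|A) (assume μ(A) > 0 and μ(B) > 0). Let τ = inf{t ∈ ℕ : X_t ∉ A} be the exit time from A. Then for every t ≥ 1, Pr{τ ≤ t} ≤ t·exp(−D). -/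
open MeasureTheory ProbabilityTheory
open scoped ENNReal

/-- A free energy well (a "bottleneck" pair of regions `A`, `B` with
`D = log μ(A) - log μ(B)`) implies that a Markov chain on a finite graph with stationary
distribution `μ`, moving only along edges (self-loops allowed) and initialized from the
conditional distribution `μ(·|A)`, needs time `≳ exp(D)` to exit `A`:
`Pr{τ ≤ t} ≤ t · exp(-D)` for every `t ≥ 1`. -/
theorem stmt_0
    {V : Type*} [Fintype V] [MeasurableSpace V] [MeasurableSingletonClass V]
    -- the graph: a symmetric adjacency relation
    (adj : V → V → Prop) (hsymm : ∀ u v, adj u v → adj v u)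
    -- the regions A and B
    (A B : Set V) (hAB : Disjoint A B)
    -- every edge leaving A enters B
    (hEdge : ∀ u v, adj u v → u ∈ A → v ∉ A → v ∈ B)
    -- the stationary distribution μ, with μ(A) > 0 and μ(B) > 0
    (μ : Measure V) [IsProbabilityMeasure μ] (hA : 0 < μ A) (hB : 0 < μ B)
    -- the transition kernel: supported on edges (and self-loops), with μ stationary
    (κ : V → Measure V) (hκ : ∀ v, IsProbabilityMeasure (κ v))
    (hsupp : ∀ v u, ¬ adj v u → u ≠ v → κ v {u} = 0)
    (hstat : μ.bind κ = μ)
    -- the Markov chain X₀, X₁, X₂, …, initialized from μ(·|A)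
    {Ω : Type*} [MeasurableSpace Ω] (P : Measure Ω) [IsProbabilityMeasure P]
    (X : ℕ → Ω → V) (hX : ∀ i, Measurable (X i))
    (hinit : Measure.map (X 0) P = ProbabilityTheory.cond μ A)
    (hmarkov : ∀ (i : ℕ) (v : V) (s : Set V),
      P ({ω | X i ω = v} ∩ {ω | X (i + 1) ω ∈ s}) = P {ω | X i ω = v} * κ v s)
    -- the free energy well depth
    (D : ℝ) (hD : D = Real.log (μ A).toReal - Real.log (μ B).toReal) :
    -- conclusion: Pr{τ ≤ t} ≤ t · exp(-D), where τ = inf{t : X_t ∉ A}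
    ∀ t : ℕ, 1 ≤ t →
      (P {ω | ∃ s ≤ t, X s ω ∉ A}).toReal ≤ (t : ℝ) * Real.exp (-D) := by
  intro t ht
  classical
  have hmV : ∀ s : Set V, MeasurableSet s := fun s => s.toFinite.measurableSet
  have hμAt : μ A ≠ ⊤ := measure_ne_top μ A
  have hμBt : μ B ≠ ⊤ := measure_ne_top μ B
  -- decomposition of events over the finitely many values of X i
  have hdecomp : ∀ (i : ℕ) (s : Set V) (E : Set Ω), MeasurableSet E →
      P ({ω | X i ω ∈ s} ∩ E) = ∑ v ∈ s.toFinset, P ({ω | X i ω = v} ∩ E) := by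
    intro i s E hE
    have hU : {ω | X i ω ∈ s} ∩ E = ⋃ v ∈ s.toFinset, ({ω | X i ω = v} ∩ E) := by
      ext ω
      simp only [Set.mem_iUnion, Set.mem_inter_iff, Set.mem_setOf_eq, Finset.mem_coe,
        Set.mem_toFinset, exists_prop]
      constructor
      · rintro ⟨hs, hEω⟩; exact ⟨X i ω, hs, rfl, hEω⟩
      · rintro ⟨v, hv, rfl, hEω⟩; exact ⟨hv, hEω⟩
    rw [hU, measure_biUnion_finset]
    · intro a _ b _ hab
      refine Set.disjoint_left.2 ?_
      rintro ω ⟨ha, -⟩ ⟨hb, -⟩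
      exact hab (ha ▸ hb ▸ rfl)
    · intro v _
      exact ((hX i) (measurableSet_singleton v)).inter hE
  have hdecomp' : ∀ (i : ℕ) (s : Set V),
      P {ω | X i ω ∈ s} = ∑ v ∈ s.toFinset, P {ω | X i ω = v} := by
    intro i s
    have := hdecomp i s Set.univ MeasurableSet.univ
    simpa using this
  -- stationarity, pointwise
  have hbind : ∀ s : Set V, ∑ u, μ {u} * κ u s = μ s := by
    intro s
    have h1 : μ.bind κ s = ∫⁻ u, κ u s ∂μ :=
      Measure.bind_apply (hmV s) (measurable_of_countable κ).aemeasurable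
    rw [hstat] at h1
    rw [h1, lintegral_fintype]
    exact Finset.sum_congr rfl fun u _ => mul_comm _ _
  -- kernel bound: from inside A, exiting A means entering B
  have hker : ∀ v ∈ A, κ v Aᶜ ≤ κ v B := by
    intro v hv
    have hsumS : ∀ s : Set V, κ v s = ∑ u ∈ s.toFinset, κ v {u} := by
      intro s
      have hU : s = ⋃ u ∈ s.toFinset, ({u} : Set V) := by
        ext x; simp
      conv_lhs => rw [hU]
      rw [measure_biUnion_finset]
      · intro a _ b _ hab
        simpa using hab
      · intro u _; exact measurableSet_singleton u
    rw [hsumS Aᶜ, hsumS B]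
    refine Finset.sum_le_sum_of_ne_zero ?_
    intro u hu hne
    simp only [Set.mem_toFinset, Set.mem_compl_iff] at hu ⊢
    have huv : u ≠ v := fun h => hu (h ▸ hv)
    have hadj : adj v u := by
      by_contra hna
      exact hne (hsupp v u hna huv)
    exact hEdge v u hadj hv hu
  -- domination of the law of X i by μ / μ(A)
  have hdom : ∀ (i : ℕ) (v : V), P {ω | X i ω = v} * μ A ≤ μ {v} := by
    intro i
    induction i with
    | zero =>
      intro v
      have hmap : P {ω | X 0 ω = v} = (μ A)⁻¹ * μ (A ∩ {v}) := by
        have h1 : Measure.map (X 0) P {v} = P {ω | X 0 ω = v} := by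
          rw [Measure.map_apply (hX 0) (measurableSet_singleton v)]
          rfl
        rw [← h1, hinit, cond_apply (hmV A)]
      rw [hmap, mul_comm ((μ A)⁻¹) _, mul_assoc, ENNReal.inv_mul_cancel hA.ne' hμAt,
        mul_one]
      exact measure_mono Set.inter_subset_right
    | succ i ih =>
      intro v
      have hstepv : P {ω | X (i + 1) ω = v} =
          ∑ u, P {ω | X i ω = u} * κ u {v} := by
        have h1 : {ω | X (i + 1) ω = v} =
            {ω | X i ω ∈ (Set.univ : Set V)} ∩ {ω | X (i + 1) ω ∈ ({v} : Set V)} := by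
          ext ω; simp
        rw [h1, hdecomp i Set.univ {ω | X (i + 1) ω ∈ ({v} : Set V)}
          ((hX (i + 1)) (measurableSet_singleton v))]
        simp only [Set.toFinset_univ]
        refine Finset.sum_congr rfl fun u _ => ?_
        exact hmarkov i u {v}
      calc P {ω | X (i + 1) ω = v} * μ A
          = ∑ u, P {ω | X i ω = u} * μ A * κ u {v} := by
            rw [hstepv, Finset.sum_mul]
            exact Finset.sum_congr rfl fun u _ => by ring
        _ ≤ ∑ u, μ {u} * κ u {v} :=
            Finset.sum_le_sum fun u _ => mul_le_mul_left (ih u) _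
        _ = μ {v} := hbind {v}
  -- one-step exit probability bound
  have hstep : ∀ i : ℕ,
      P ({ω | X i ω ∈ A} ∩ {ω | X (i + 1) ω ∈ Aᶜ}) * μ A ≤ μ B := by
    intro i
    rw [hdecomp i A {ω | X (i + 1) ω ∈ Aᶜ} ((hX (i + 1)) (hmV Aᶜ)), Finset.sum_mul]
    calc ∑ v ∈ A.toFinset, P ({ω | X i ω = v} ∩ {ω | X (i + 1) ω ∈ Aᶜ}) * μ A
        = ∑ v ∈ A.toFinset, P {ω | X i ω = v} * μ A * κ v Aᶜ := by
          refine Finset.sum_congr rfl fun v _ => ?_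
          rw [hmarkov i v Aᶜ]; ring
      _ ≤ ∑ v ∈ A.toFinset, μ {v} * κ v B := by
          refine Finset.sum_le_sum fun v hv => ?_
          rw [Set.mem_toFinset] at hv
          exact mul_le_mul' (hdom i v) (hker v hv)
      _ ≤ ∑ v, μ {v} * κ v B := Finset.sum_le_sum_of_subset (Finset.subset_univ _)
      _ = μ B := hbind B
  -- X 0 is in A almost surely
  have h0 : P {ω | X 0 ω ∈ Aᶜ} = 0 := by
    have h1 : Measure.map (X 0) P Aᶜ = P {ω | X 0 ω ∈ Aᶜ} := by
      rw [Measure.map_apply (hX 0) (hmV Aᶜ)]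
      rfl
    rw [← h1, hinit, cond_apply (hmV A)]
    simp
  -- covering the exit event by the first-exit decomposition
  have hcover : {ω | ∃ s ≤ t, X s ω ∉ A} ⊆
      {ω | X 0 ω ∈ Aᶜ} ∪
        ⋃ i ∈ Finset.range t, ({ω | X i ω ∈ A} ∩ {ω | X (i + 1) ω ∈ Aᶜ}) := by
    rintro ω ⟨s, hs, hsA⟩
    by_cases h00 : X 0 ω ∈ A
    · right
      have hex : ∃ n, X n ω ∉ A := ⟨s, hsA⟩
      set n := Nat.find hex with hn
      have hnA : X n ω ∉ A := Nat.find_spec hex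
      have hns : n ≤ s := Nat.find_min' hex hsA
      have hn0 : n ≠ 0 := fun h => hnA (h ▸ h00)
      obtain ⟨m, hm⟩ := Nat.exists_eq_succ_of_ne_zero hn0
      have hmA : X m ω ∈ A := by
        by_contra hmA
        exact Nat.find_min hex (by omega) hmA
      have hmt : m < t := by omega
      have hm1 : X (m + 1) ω ∈ Aᶜ := by
        have h := hnA; rw [hm] at h; exact h
      exact Set.mem_iUnion.2 ⟨m, Set.mem_iUnion.2 ⟨Finset.mem_range.2 hmt, hmA, hm1⟩⟩
    · left; exact h00
  -- probability bound in ℝ≥0∞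
  have hstep' : ∀ i : ℕ,
      P ({ω | X i ω ∈ A} ∩ {ω | X (i + 1) ω ∈ Aᶜ}) ≤ μ B / μ A := by
    intro i
    rw [ENNReal.le_div_iff_mul_le (Or.inl hA.ne') (Or.inl hμAt)]
    exact hstep i
  have hmain : P {ω | ∃ s ≤ t, X s ω ∉ A} ≤ (t : ℝ≥0∞) * (μ B / μ A) := by
    refine le_trans (measure_mono hcover) ?_
    refine le_trans (measure_union_le _ _) ?_
    rw [h0, zero_add]
    refine le_trans (measure_biUnion_finset_le _ _) ?_
    refine le_trans (Finset.sum_le_sum fun i _ => hstep' i) ?_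
    rw [Finset.sum_const, Finset.card_range, nsmul_eq_mul]
  -- pass to real numbers
  have hApos : 0 < (μ A).toReal := ENNReal.toReal_pos hA.ne' hμAt
  have hBpos : 0 < (μ B).toReal := ENNReal.toReal_pos hB.ne' hμBt
  have hdivt : (μ B / μ A : ℝ≥0∞) ≠ ⊤ := by
    exact (ENNReal.div_lt_top hμBt hA.ne').ne
  have hRHSt : ((t : ℝ≥0∞) * (μ B / μ A)) ≠ ⊤ :=
    ENNReal.mul_ne_top (ENNReal.natCast_ne_top t) hdivt
  have h2 : (P {ω | ∃ s ≤ t, X s ω ∉ A}).toReal ≤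
      ((t : ℝ≥0∞) * (μ B / μ A)).toReal :=
    ENNReal.toReal_mono hRHSt hmain
  refine h2.trans_eq ?_
  rw [ENNReal.toReal_mul, ENNReal.toReal_div]
  congr 1
  rw [hD, neg_sub, Real.exp_sub, Real.exp_log hBpos, Real.exp_log hApos]
end

section
/- Fix a constant δ > 0. There is an n₀ = n₀(δ) such that for every n ≥ n₀, every k, every k' ≤ n^{1−δ}, every k-sparse signal x ∈ {0,1}ⁿ, every β ≥ 0, every λ > 0, and every ℓ satisfying ℓ ≥ 2e·k·(k'/n)^{1−δ} and 1 ≤ 2ℓ ≤ min{k, k'}, with probability at least 1 − 2^{−(ℓ−2)/2} over W ∼ GOE(n), the free energy well depth satisfies D_{β,ℓ} ≥ −(4βλ/k)·ℓ² + (log 2 / 2)·ℓ − log 2. -/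
open MeasureTheory ProbabilityTheory Filter Asymptotics

noncomputable def goeMeasure (n : ℕ) : Measure (Fin n → Fin n → ℝ) :=
  Measure.map (fun g i j => g (min i j, max i j))
    (Measure.pi fun p : Fin n × Fin n =>
      gaussianReal 0 (if p.1 = p.2 then 2 / (n : NNReal) else 1 / (n : NNReal)))

noncomputable def quadForm {n : ℕ} (Y : Fin n → Fin n → ℝ) (S : Finset (Fin n)) : ℝ :=
  ∑ i ∈ S, ∑ j ∈ S, Y i j

noncomputable def Ymat {n : ℕ} (k : ℕ) (lam : ℝ) (x : Finset (Fin n))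
    (W : Fin n → Fin n → ℝ) : Fin n → Fin n → ℝ :=
  fun i j => lam / k * ((if i ∈ x then (1 : ℝ) else 0) * (if j ∈ x then (1 : ℝ) else 0)) + W i j

open Classical in
noncomputable def regionSum {n : ℕ} (k' : ℕ) (β : ℝ) (Y : Fin n → Fin n → ℝ)
    (P : Finset (Fin n) → Prop) : ℝ :=
  ∑ S ∈ Finset.univ.filter (fun S : Finset (Fin n) => S.card = k' ∧ P S),
    Real.exp (β * quadForm Y S)

noncomputable def gibbsProb {n : ℕ} (k' : ℕ) (β : ℝ) (Y : Fin n → Fin n → ℝ)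
    (P : Finset (Fin n) → Prop) : ℝ :=
  regionSum k' β Y P / regionSum k' β Y fun _ => True

noncomputable def FEWdepthY {n : ℕ} (k' : ℕ) (β ℓ : ℝ) (x : Finset (Fin n))
    (Y : Fin n → Fin n → ℝ) : ℝ :=
  Real.log (gibbsProb k' β Y fun S => ((x ∩ S).card : ℝ) < ℓ) -
    Real.log (gibbsProb k' β Y fun S => ℓ ≤ ((x ∩ S).card : ℝ) ∧ ((x ∩ S).card : ℝ) ≤ 2 * ℓ)

noncomputable def FEWdepth {n : ℕ} (k k' : ℕ) (lam β ℓ : ℝ) (x : Finset (Fin n))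
    (W : Fin n → Fin n → ℝ) : ℝ :=
  FEWdepthY k' β ℓ x (Ymat k lam x W)

noncomputable def phiVal {n : ℕ} (k' ℓ : ℕ) (Y : Fin n → Fin n → ℝ) (x : Finset (Fin n)) : ℝ :=
  sInf {r : ℝ | ∃ S : Finset (Fin n), S.card = k' ∧ (x ∩ S).card = ℓ ∧ r = -quadForm Y S}

noncomputable def gammaCurve (n k k' : ℕ) (lam : ℝ) (ℓ : ℕ) : ℝ :=
  -(lam * (ℓ : ℝ) ^ 2 / k) -
    2 * k' * Real.sqrt (1 / (n : ℝ) *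
      Real.log ((k.choose ℓ : ℝ) * ((n - k).choose (k' - ℓ) : ℝ)))

noncomputable def ellCrit (n k k' : ℕ) (lam : ℝ) : ℝ :=
  1 / (2 * lam) * k * Real.sqrt ((k' : ℝ) / ((n : ℝ) * Real.log ((n : ℝ) / (k' : ℝ)))) *
    Real.log (1 / (2 * lam) * Real.sqrt ((n : ℝ) / ((k' : ℝ) * Real.log ((n : ℝ) / (k' : ℝ)))))

def AssumLambda (k : ℕ → ℕ) (lam : ℕ → ℝ) : Prop :=
  ((fun n => (k n : ℝ) / n * Real.log ((n : ℝ) / (k n : ℝ))) =o[atTop] lam) ∧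
    (lam =o[atTop] fun n => min 1 ((k n : ℝ) / (Real.sqrt n * Real.log n)))

def AssumKprime (k k' : ℕ → ℕ) (lam : ℕ → ℝ) : Prop :=
  ((fun n => (k n : ℝ) ^ 2 / (lam n ^ 2 * n) * (Real.log ((n : ℝ) / (k n : ℝ))) ^ 2 /
      Real.log (lam n * n / (k n * Real.log ((n : ℝ) / (k n : ℝ))))) =o[atTop]
    fun n => (k' n : ℝ)) ∧
  ((fun n => (k' n : ℝ)) =o[atTop] fun n => lam n ^ 2 * n / Real.log n ^ 3) ∧
  ((fun n => (k' n : ℝ)) =o[atTop]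
    fun n => ((k n : ℝ) ^ 2 * n / (lam n ^ 2 * Real.log n)) ^ ((1 : ℝ) / 3))

def hasOGP {n : ℕ} (k k' : ℕ) (Y : Fin n → Fin n → ℝ) (x : Finset (Fin n)) (ζ₁ ζ₂ : ℕ) : Prop :=
  ζ₁ ≤ min k k' ∧ ζ₂ ≤ min k k' ∧ ζ₁ + 2 < ζ₂ ∧
    ∃ r : ℝ,
      (∃ v w : Finset (Fin n), v.card = k' ∧ w.card = k' ∧
        (x ∩ v).card ≤ ζ₁ ∧ ζ₂ ≤ (x ∩ w).card ∧ -quadForm Y v ≤ r ∧ -quadForm Y w ≤ r) ∧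
      ∀ v : Finset (Fin n), v.card = k' → -quadForm Y v ≤ r →
        (x ∩ v).card ≤ ζ₁ ∨ ζ₂ ≤ (x ∩ v).card

namespace StmtOne


variable {n : ℕ}

def pairMap (π : Equiv.Perm (Fin n)) (p : Fin n × Fin n) : Fin n × Fin n :=
  if p.1 ≤ p.2 ↔ π p.1 ≤ π p.2 then (π p.1, π p.2) else (π p.2, π p.1)

lemma pairMap_fst_le_snd_iff (π : Equiv.Perm (Fin n)) (p : Fin n × Fin n) :
    ((pairMap π p).1 ≤ (pairMap π p).2) ↔ p.1 ≤ p.2 := by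
  unfold pairMap
  by_cases hp : p.1 ≤ p.2 <;> by_cases hπ : π p.1 ≤ π p.2
  · rw [if_pos (iff_of_true hp hπ)]; exact iff_of_true hπ hp
  · rw [if_neg (fun hi => hπ (hi.mp hp))]
    exact iff_of_true (le_of_not_ge hπ) hp
  · rw [if_neg (fun hi => hp (hi.mpr hπ))]
    refine iff_of_false (fun hh => ?_) hp
    exact hp (le_of_eq (π.injective (le_antisymm hπ hh)))
  · rw [if_pos (iff_of_false hp hπ)]; exact iff_of_false hπ hp

lemma pairMap_diag_iff (π : Equiv.Perm (Fin n)) (p : Fin n × Fin n) :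
    ((pairMap π p).1 = (pairMap π p).2) ↔ p.1 = p.2 := by
  unfold pairMap
  split
  · exact ⟨fun hh => π.injective hh, fun hh => by rw [hh]⟩
  · exact ⟨fun hh => (π.injective hh).symm, fun hh => by rw [hh]⟩

lemma pairMap_injective (π : Equiv.Perm (Fin n)) : Function.Injective (pairMap π) := by
  rintro ⟨p1, p2⟩ ⟨q1, q2⟩ h
  have horient : (p1 ≤ p2) ↔ (q1 ≤ q2) := by
    rw [← pairMap_fst_le_snd_iff π (p1, p2), ← pairMap_fst_le_snd_iff π (q1, q2), h]
  have haux : ∀ a b : Fin n, (a ≤ b ↔ b ≤ a) → a = b := fun a b hab => by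
    rcases le_total a b with h1 | h1
    · exact le_antisymm h1 (hab.mp h1)
    · exact le_antisymm (hab.mpr h1) h1
  unfold pairMap at h
  split at h <;> split at h <;> rw [Prod.mk.injEq] at h <;> obtain ⟨h1, h2⟩ := h
  · exact Prod.ext (π.injective h1) (π.injective h2)
  · have e1 : p1 = q2 := π.injective h1
    have e2 : p2 = q1 := π.injective h2
    subst e1
    subst e2
    have he : p1 = p2 := haux _ _ (horient.trans (Iff.rfl))
    subst he
    rfl
  · have e1 : p2 = q1 := π.injective h1
    have e2 : p1 = q2 := π.injective h2
    subst e1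
    subst e2
    have he : p1 = p2 := haux _ _ (horient.trans (Iff.rfl))
    subst he
    rfl
  · exact Prod.ext (π.injective h2) (π.injective h1)

noncomputable def pairPerm (π : Equiv.Perm (Fin n)) : Equiv.Perm (Fin n × Fin n) :=
  Equiv.ofBijective (pairMap π) (Finite.injective_iff_bijective.mp (pairMap_injective π))

@[simp] lemma pairPerm_apply (π : Equiv.Perm (Fin n)) (p : Fin n × Fin n) :
    pairPerm π p = pairMap π p := rfl

lemma pairMap_minmax (π : Equiv.Perm (Fin n)) (i j : Fin n) :
    pairMap π (min i j, max i j) = (min (π i) (π j), max (π i) (π j)) := by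
  rcases le_total i j with hij | hij <;> rcases le_total (π i) (π j) with hππ | hππ
  · rw [min_eq_left hij, max_eq_right hij, min_eq_left hππ, max_eq_right hππ]
    unfold pairMap
    rw [if_pos (iff_of_true hij hππ)]
  · rw [min_eq_left hij, max_eq_right hij, min_eq_right hππ, max_eq_left hππ]
    unfold pairMap
    by_cases hc : ((i, j).1 ≤ (i, j).2 ↔ π (i, j).1 ≤ π (i, j).2)
    · rw [if_pos hc]
      have : π i = π j := le_antisymm (hc.mp hij) hππ
      simp [this]
    · rw [if_neg hc]
  · rw [min_eq_right hij, max_eq_left hij, min_eq_left hππ, max_eq_right hππ]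
    unfold pairMap
    by_cases hc : ((j, i).1 ≤ (j, i).2 ↔ π (j, i).1 ≤ π (j, i).2)
    · rw [if_pos hc]
      have : π j = π i := le_antisymm (hc.mp hij) hππ
      simp [this]
    · rw [if_neg hc]
  · rw [min_eq_right hij, max_eq_left hij, min_eq_right hππ, max_eq_left hππ]
    unfold pairMap
    rw [if_pos (iff_of_true hij hππ)]

lemma measurable_symmize :
    Measurable (fun g : Fin n × Fin n → ℝ =>
      (fun i j => g (min i j, max i j) : Fin n → Fin n → ℝ)) :=
  measurable_pi_lambda _ (fun _ => measurable_pi_lambda _ (fun _ => measurable_pi_apply _))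

lemma measurable_conj (π : Equiv.Perm (Fin n)) :
    Measurable (fun W : Fin n → Fin n → ℝ =>
      (fun i j => W (π i) (π j) : Fin n → Fin n → ℝ)) :=
  measurable_pi_lambda _ (fun i => measurable_pi_lambda _ (fun j =>
    (measurable_pi_apply (π j)).comp (measurable_pi_apply (π i))))

lemma measurable_precomp (π : Equiv.Perm (Fin n)) :
    Measurable (fun g : Fin n × Fin n → ℝ => g ∘ (pairPerm π)) :=
  measurable_pi_lambda _ (fun p => measurable_pi_apply _)

lemma goeMeasure_map_conj (π : Equiv.Perm (Fin n)) :
    (goeMeasure n).map (fun W i j => W (π i) (π j)) = goeMeasure n := by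
  set v : Fin n × Fin n → NNReal :=
    fun p => if p.1 = p.2 then 2 / (n : NNReal) else 1 / (n : NNReal) with hv
  have hvinv : ∀ p, v (pairPerm π p) = v p := by
    intro p
    simp only [hv, pairPerm_apply]
    by_cases h : p.1 = p.2
    · rw [if_pos ((pairMap_diag_iff π p).mpr h), if_pos h]
    · rw [if_neg (fun hh => h ((pairMap_diag_iff π p).mp hh)), if_neg h]
  unfold goeMeasure
  rw [Measure.map_map (measurable_conj π) measurable_symmize]
  have hcomp : ((fun W : Fin n → Fin n → ℝ => fun i j => W (π i) (π j)) ∘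
      (fun g : Fin n × Fin n → ℝ => fun i j => g (min i j, max i j)))
      = (fun g : Fin n × Fin n → ℝ => fun i j => g (min i j, max i j)) ∘
        (fun g => g ∘ (pairPerm π)) := by
    funext g
    funext i j
    simp only [Function.comp_apply, Function.comp]
    rw [pairPerm_apply, pairMap_minmax]
  rw [hcomp, ← Measure.map_map measurable_symmize (measurable_precomp π)]
  congr 1
  have hmp := (measurePreserving_piCongrLeft (fun p => gaussianReal 0 (v p)) (pairPerm π)).symm
  have hfun : ⇑(MeasurableEquiv.piCongrLeft (fun _ : Fin n × Fin n => ℝ) (pairPerm π)).symm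
      = fun g : Fin n × Fin n → ℝ => g ∘ (pairPerm π) := by
    funext g
    exact funext fun p => Equiv.piCongrLeft_symm_apply _ _ g p
  have hμeq : (fun p : Fin n × Fin n => gaussianReal 0 (v (pairPerm π p)))
      = fun p => gaussianReal 0 (v p) := by
    funext p; rw [hvinv]
  have := hmp.map_eq
  rw [hfun] at this
  rw [this, hμeq]

instance goe_prob (n : ℕ) : IsProbabilityMeasure (goeMeasure n) := by
  unfold goeMeasure
  exact Measure.isProbabilityMeasure_map measurable_symmize.aemeasurable

lemma measurable_quadForm (S : Finset (Fin n)) :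
    Measurable fun W : Fin n → Fin n → ℝ => quadForm W S := by
  unfold quadForm
  exact Finset.measurable_sum _ fun i _ => Finset.measurable_sum _ fun j _ =>
    (measurable_pi_apply j).comp (measurable_pi_apply i)

lemma measurable_regionSum (k' : ℕ) (β : ℝ) (P : Finset (Fin n) → Prop) :
    Measurable fun W : Fin n → Fin n → ℝ => regionSum k' β W P := by
  unfold regionSum
  exact Finset.measurable_sum _ fun S _ => ((measurable_quadForm S).const_mul β).exp

lemma quadForm_conj (π : Equiv.Perm (Fin n)) (W : Fin n → Fin n → ℝ) (S : Finset (Fin n)) :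
    quadForm W (S.image ⇑π) = quadForm (fun i j => W (π i) (π j)) S := by
  unfold quadForm
  rw [Finset.sum_image (fun a _ b _ h => π.injective h)]
  exact Finset.sum_congr rfl fun i _ => by
    rw [Finset.sum_image (fun a _ b _ h => π.injective h)]

lemma regionSum_tot_conj (k' : ℕ) (β : ℝ) (π : Equiv.Perm (Fin n)) (W : Fin n → Fin n → ℝ) :
    regionSum k' β (fun i j => W (π i) (π j)) (fun _ => True)
      = regionSum k' β W (fun _ => True) := by
  classical
  unfold regionSum
  refine Finset.sum_nbij' (i := fun S => S.image ⇑π) (j := fun T => T.image ⇑π.symm)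
    ?_ ?_ ?_ ?_ ?_
  · intro S hS
    simp only [Finset.mem_filter, Finset.mem_univ, true_and] at hS ⊢
    exact ⟨by rw [Finset.card_image_of_injective _ π.injective]; exact hS.1, trivial⟩
  · intro S hS
    simp only [Finset.mem_filter, Finset.mem_univ, true_and] at hS ⊢
    exact ⟨by rw [Finset.card_image_of_injective _ π.symm.injective]; exact hS.1, trivial⟩
  · intro S _
    rw [Finset.image_image, Equiv.symm_comp_self, Finset.image_id]
  · intro S _
    rw [Finset.image_image, Equiv.self_comp_symm, Finset.image_id]
  · intro S _
    rw [quadForm_conj]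

lemma exists_perm_image (S T : Finset (Fin n)) (h : S.card = T.card) :
    ∃ π : Equiv.Perm (Fin n), S.image ⇑π = T := by
  classical
  have hc : Sᶜ.card = Tᶜ.card := by
    rw [Finset.card_compl, Finset.card_compl, h]
  let e : {a // a ∈ S} ≃ {a // a ∈ T} := Finset.equivOfCardEq h
  let f : {a // ¬ a ∈ S} ≃ {a // ¬ a ∈ T} :=
    ((Equiv.subtypeEquivRight (fun a => (Finset.mem_compl (s := S)).symm)).trans
      (Finset.equivOfCardEq hc)).trans (Equiv.subtypeEquivRight (fun a => Finset.mem_compl))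
  refine ⟨Equiv.subtypeCongr e f, ?_⟩
  have happly : ∀ a (ha : a ∈ S), (Equiv.subtypeCongr e f) a = (e ⟨a, ha⟩ : Fin n) := by
    intro a ha
    simp [Equiv.subtypeCongr, Equiv.sumCompl_symm_apply_of_pos ha]
  apply Finset.eq_of_subset_of_card_le
  · intro b hb
    rw [Finset.mem_image] at hb
    obtain ⟨a, ha, rfl⟩ := hb
    rw [happly a ha]
    exact (e ⟨a, ha⟩).2
  · rw [Finset.card_image_of_injective _ (Equiv.subtypeCongr e f).injective, h]

noncomputable def fracFn (n k' : ℕ) (β : ℝ) (S : Finset (Fin n)) :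
    (Fin n → Fin n → ℝ) → ENNReal :=
  fun W => ENNReal.ofReal
    (Real.exp (β * quadForm W S) / regionSum k' β W (fun _ => True))

lemma measurable_fracFn (k' : ℕ) (β : ℝ) (S : Finset (Fin n)) :
    Measurable (fracFn n k' β S) := by
  unfold fracFn
  exact (Measurable.div ((measurable_quadForm S).const_mul β).exp
    (measurable_regionSum k' β _)).ennreal_ofReal

lemma lintegral_fracFn_eq (k' : ℕ) (β : ℝ) (S T : Finset (Fin n)) (h : S.card = T.card) :
    ∫⁻ W, fracFn n k' β S W ∂(goeMeasure n) = ∫⁻ W, fracFn n k' β T W ∂(goeMeasure n) := by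
  obtain ⟨π, hπ⟩ := exists_perm_image T S h.symm
  have hconj := goeMeasure_map_conj (n := n) π
  conv_rhs => rw [← hconj]
  rw [lintegral_map (measurable_fracFn k' β T) (measurable_conj π)]
  refine lintegral_congr fun W => ?_
  unfold fracFn
  rw [← quadForm_conj π W T, hπ, regionSum_tot_conj]

lemma regionSum_tot_pos (k' : ℕ) (β : ℝ) (W : Fin n → Fin n → ℝ) (hk' : k' ≤ n) :
    0 < regionSum k' β W (fun _ => True) := by
  classical
  unfold regionSum
  apply Finset.sum_pos
  · intro S _
    exact Real.exp_pos _
  · obtain ⟨S, -, hS⟩ := Finset.exists_subset_card_eq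
      (s := (Finset.univ : Finset (Fin n))) (n := k')
      (by simpa [Finset.card_univ] using hk')
    exact ⟨S, by simp [Finset.mem_filter, hS]⟩

lemma lintegral_fracFn_value (k' : ℕ) (hk' : k' ≤ n) (β : ℝ) (S : Finset (Fin n))
    (hS : S.card = k') :
    ∫⁻ W, fracFn n k' β S W ∂(goeMeasure n) = ((n.choose k' : ℕ) : ENNReal)⁻¹ := by
  classical
  have hsum : ∀ W : Fin n → Fin n → ℝ,
      ∑ T ∈ Finset.powersetCard k' (Finset.univ : Finset (Fin n)), fracFn n k' β T W = 1 := by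
    intro W
    have hZ : regionSum k' β W (fun _ => True)
        = ∑ T ∈ Finset.powersetCard k' (Finset.univ : Finset (Fin n)),
            Real.exp (β * quadForm W T) := by
      unfold regionSum
      apply Finset.sum_congr _ (fun _ _ => rfl)
      ext T
      simp [Finset.mem_powersetCard]
    have hZpos := regionSum_tot_pos k' β W hk'
    unfold fracFn
    rw [← ENNReal.ofReal_sum_of_nonneg (fun T _ => by positivity)]
    rw [← Finset.sum_div, ← hZ, div_self (ne_of_gt hZpos), ENNReal.ofReal_one]
  have htot : ∑ T ∈ Finset.powersetCard k' (Finset.univ : Finset (Fin n)),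
      ∫⁻ W, fracFn n k' β T W ∂(goeMeasure n) = 1 := by
    rw [← lintegral_finset_sum _ (fun T _ => measurable_fracFn k' β T)]
    calc ∫⁻ W, ∑ T ∈ Finset.powersetCard k' (Finset.univ : Finset (Fin n)),
          fracFn n k' β T W ∂(goeMeasure n)
        = ∫⁻ _, (1 : ENNReal) ∂(goeMeasure n) := by
          exact lintegral_congr fun W => hsum W
      _ = 1 := by simp
  have hconst : ∀ T ∈ Finset.powersetCard k' (Finset.univ : Finset (Fin n)),
      ∫⁻ W, fracFn n k' β T W ∂(goeMeasure n)
        = ∫⁻ W, fracFn n k' β S W ∂(goeMeasure n) := by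
    intro T hT
    rw [Finset.mem_powersetCard] at hT
    exact lintegral_fracFn_eq k' β T S (by rw [hT.2, hS])
  rw [Finset.sum_congr rfl hconst, Finset.sum_const, Finset.card_powersetCard,
    Finset.card_univ, Fintype.card_fin] at htot
  have hne : ((n.choose k' : ℕ) : ENNReal) ≠ 0 :=
    Nat.cast_ne_zero.mpr (Nat.choose_pos hk').ne' 
  have hnetop : ((n.choose k' : ℕ) : ENNReal) ≠ ⊤ := ENNReal.natCast_ne_top _
  rw [nsmul_eq_mul] at htot
  calc ∫⁻ W, fracFn n k' β S W ∂(goeMeasure n)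
      = ((n.choose k' : ℕ) : ENNReal)⁻¹ *
        (((n.choose k' : ℕ) : ENNReal) * ∫⁻ W, fracFn n k' β S W ∂(goeMeasure n)) := by
        rw [← mul_assoc, ENNReal.inv_mul_cancel hne hnetop, one_mul]
    _ = ((n.choose k' : ℕ) : ENNReal)⁻¹ := by rw [htot, mul_one]

lemma count_high (x : Finset (Fin n)) (k' t : ℕ) (F : Finset (Finset (Fin n)))
    (hF : ∀ S ∈ F, S.card = k' ∧ t ≤ (x ∩ S).card) :
    F.card ≤ x.card.choose t * (n - t).choose (k' - t) := by
  classical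
  have hch : ∀ S : Finset (Fin n), S ∈ F → ∃ T, T ⊆ x ∩ S ∧ T.card = t := fun S hS =>
    Finset.exists_subset_card_eq (hF S hS).2
  set cf : Finset (Fin n) → Finset (Fin n) :=
    fun S => if h : S ∈ F then (hch S h).choose else ∅ with hcf
  have hcf1 : ∀ S ∈ F, cf S ⊆ x ∩ S := by
    intro S hS
    rw [hcf]
    simp only [dif_pos hS]
    exact (hch S hS).choose_spec.1
  have hcf2 : ∀ S ∈ F, (cf S).card = t := by
    intro S hS
    rw [hcf]
    simp only [dif_pos hS]
    exact (hch S hS).choose_spec.2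
  have hmap : ∀ S ∈ F, cf S ∈ Finset.powersetCard t x := by
    intro S hS
    rw [Finset.mem_powersetCard]
    exact ⟨(hcf1 S hS).trans (Finset.inter_subset_left), hcf2 S hS⟩
  rw [Finset.card_eq_sum_card_fiberwise hmap]
  have hfiber : ∀ T ∈ Finset.powersetCard t x,
      (F.filter (fun S => cf S = T)).card ≤ (n - t).choose (k' - t) := by
    intro T hT
    rw [Finset.mem_powersetCard] at hT
    have : (F.filter (fun S => cf S = T)).card
        ≤ ((Finset.univ \ T).powersetCard (k' - t)).card := by
      apply Finset.card_le_card_of_injOn (fun S => S \ T)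
      · intro S hS
        rw [Finset.mem_coe, Finset.mem_filter] at hS
        obtain ⟨hSF, hSc⟩ := hS
        have hTS : T ⊆ S := by
          rw [← hSc]
          exact (hcf1 S hSF).trans Finset.inter_subset_right
        rw [Finset.mem_coe, Finset.mem_powersetCard]
        constructor
        · intro a ha
          rw [Finset.mem_sdiff] at ha ⊢
          exact ⟨Finset.mem_univ a, ha.2⟩
        · rw [Finset.card_sdiff_of_subset hTS, (hF S hSF).1, hT.2]
      · intro S1 h1 S2 h2 heq
        rw [Finset.mem_coe, Finset.mem_filter] at h1 h2
        have hT1 : T ⊆ S1 := by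
          rw [← h1.2]; exact (hcf1 S1 h1.1).trans Finset.inter_subset_right
        have hT2 : T ⊆ S2 := by
          rw [← h2.2]; exact (hcf1 S2 h2.1).trans Finset.inter_subset_right
        dsimp only at heq
        rw [← Finset.union_sdiff_of_subset hT1, ← Finset.union_sdiff_of_subset hT2, heq]
    refine this.trans ?_
    rw [Finset.card_powersetCard, Finset.card_sdiff_of_subset (Finset.subset_univ T),
      Finset.card_univ, Fintype.card_fin, hT.2]
  calc ∑ T ∈ Finset.powersetCard t x, (F.filter (fun S => cf S = T)).card
      ≤ ∑ _T ∈ Finset.powersetCard t x, (n - t).choose (k' - t) :=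
        Finset.sum_le_sum hfiber
    _ = x.card.choose t * (n - t).choose (k' - t) := by
        rw [Finset.sum_const, Finset.card_powersetCard, smul_eq_mul]

lemma chain_choose : ∀ (t m j : ℕ), m.choose j * m ^ t ≤ (m + t).choose (j + t) * (j + t) ^ t := by
  intro t
  induction t with
  | zero => simp
  | succ t ih =>
    intro m j
    have hid : (m + 1) * m.choose j = (m + 1).choose (j + 1) * (j + 1) :=
      Nat.add_one_mul_choose_eq m j
    have h1 : m.choose j * m ≤ (m + 1).choose (j + 1) * (j + 1) := by
      calc m.choose j * m ≤ m.choose j * (m + 1) :=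
            Nat.mul_le_mul_left _ (Nat.le_succ m)
        _ = (m + 1) * m.choose j := Nat.mul_comm _ _
        _ = (m + 1).choose (j + 1) * (j + 1) := hid
    calc m.choose j * m ^ (t + 1) = (m.choose j * m) * m ^ t := by ring
      _ ≤ ((m + 1).choose (j + 1) * (j + 1)) * m ^ t := Nat.mul_le_mul_right _ h1
      _ = (j + 1) * ((m + 1).choose (j + 1) * m ^ t) := by ring
      _ ≤ (j + 1) * ((m + 1).choose (j + 1) * (m + 1) ^ t) := by
          apply Nat.mul_le_mul_left
          apply Nat.mul_le_mul_left
          exact Nat.pow_le_pow_left (Nat.le_succ m) t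
      _ ≤ (j + 1) * ((m + 1 + t).choose (j + 1 + t) * (j + 1 + t) ^ t) :=
          Nat.mul_le_mul_left _ (ih (m + 1) (j + 1))
      _ ≤ (j + 1 + t) * ((m + 1 + t).choose (j + 1 + t) * (j + 1 + t) ^ t) :=
          Nat.mul_le_mul_right _ (by omega)
      _ = (m + (t + 1)).choose (j + (t + 1)) * (j + (t + 1)) ^ (t + 1) := by
          have e1 : m + 1 + t = m + (t + 1) := by omega
          have e2 : j + 1 + t = j + (t + 1) := by omega
          rw [e1, e2]
          ring

lemma pow_le_factorial_mul_exp : ∀ t : ℕ, (t : ℝ) ^ t ≤ (t.factorial : ℝ) * Real.exp t := by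
  intro t
  induction t with
  | zero => simp
  | succ t ih =>
    have hstep : ((t : ℝ) + 1) ^ t ≤ (t : ℝ) ^ t * Real.exp 1 := by
      rcases Nat.eq_zero_or_pos t with rfl | ht
      · simpa using Real.one_le_exp (by norm_num)
      · have htpos : (0 : ℝ) < t := by exact_mod_cast ht
        have h1 : (t : ℝ) + 1 ≤ t * Real.exp (1 / t) := by
          have h2 := Real.add_one_le_exp (1 / (t : ℝ))
          calc (t : ℝ) + 1 = t * (1 / t + 1) := by field_simp; ring
            _ ≤ t * Real.exp (1 / t) := by
                exact mul_le_mul_of_nonneg_left h2 htpos.le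
        calc ((t : ℝ) + 1) ^ t ≤ ((t : ℝ) * Real.exp (1 / t)) ^ t :=
              pow_le_pow_left₀ (by positivity) h1 t
          _ = (t : ℝ) ^ t * (Real.exp (1 / t)) ^ t := mul_pow _ _ _
          _ = (t : ℝ) ^ t * Real.exp 1 := by
              rw [← Real.exp_nat_mul]
              congr 1
              field_simp
    have hcast : ((t + 1 : ℕ) : ℝ) = (t : ℝ) + 1 := by push_cast; ring
    rw [hcast]
    calc ((t : ℝ) + 1) ^ (t + 1) = ((t : ℝ) + 1) * ((t : ℝ) + 1) ^ t := by ring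
      _ ≤ ((t : ℝ) + 1) * ((t : ℝ) ^ t * Real.exp 1) :=
          mul_le_mul_of_nonneg_left hstep (by positivity)
      _ ≤ ((t : ℝ) + 1) * (((t.factorial : ℝ) * Real.exp t) * Real.exp 1) :=
          mul_le_mul_of_nonneg_left
            (mul_le_mul_of_nonneg_right ih (Real.exp_pos 1).le) (by positivity)
      _ = ((t + 1).factorial : ℝ) * Real.exp ((t : ℝ) + 1) := by
          rw [Nat.factorial_succ, Real.exp_add]
          push_cast
          ring

lemma choose_le_epow (k t : ℕ) (ht : 0 < t) :
    (k.choose t : ℝ) ≤ (Real.exp 1 * k / t) ^ t := by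
  have h1 : (k.choose t : ℝ) * (t.factorial : ℝ) ≤ (k : ℝ) ^ t := by
    have h2 : t.factorial * k.choose t = k.descFactorial t :=
      (Nat.descFactorial_eq_factorial_mul_choose k t).symm
    have h3 : k.descFactorial t ≤ k ^ t := Nat.descFactorial_le_pow k t
    have h4 : k.choose t * t.factorial ≤ k ^ t := by
      rw [Nat.mul_comm, h2]; exact h3
    exact_mod_cast h4
  have hfact := pow_le_factorial_mul_exp t
  have htpos : (0 : ℝ) < t := by exact_mod_cast ht
  have hfpos : (0 : ℝ) < (t.factorial : ℝ) := by exact_mod_cast t.factorial_pos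
  have h5 : (k.choose t : ℝ) ≤ (k : ℝ) ^ t / (t.factorial : ℝ) := by
    rw [le_div_iff₀ hfpos]
    exact h1
  refine h5.trans ?_
  have he : Real.exp (t : ℝ) = Real.exp 1 ^ t := by
    rw [← Real.exp_nat_mul]
    norm_num
  rw [div_pow, mul_pow, div_le_div_iff₀ hfpos (by positivity)]
  calc (k : ℝ) ^ t * (t : ℝ) ^ t ≤ (k : ℝ) ^ t * ((t.factorial : ℝ) * Real.exp t) :=
        mul_le_mul_of_nonneg_left hfact (by positivity)
    _ = Real.exp 1 ^ t * (k : ℝ) ^ t * (t.factorial : ℝ) := by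
        rw [he]
        ring

lemma deterministic_core {k k' : ℕ} (x : Finset (Fin n)) (hx : x.card = k)
    (β lam ℓ ε : ℝ) (hβ : 0 ≤ β) (hlam : 0 < lam) (hkpos : 0 < k)
    (hℓ1 : 1 ≤ ℓ) (hεpos : 0 < ε) (hεhalf : ε ≤ 1 / 2)
    (hlogε : Real.log 2 / 2 * ℓ ≤ -Real.log ε)
    (h2ℓk : 2 * ℓ ≤ (k : ℝ)) (h2ℓk' : 2 * ℓ ≤ (k' : ℝ)) (hroom : k + k' ≤ n)
    (W : Fin n → Fin n → ℝ)
    (hW : regionSum k' β W (fun S => ℓ ≤ ((x ∩ S).card : ℝ))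
       ≤ ε * regionSum k' β W (fun _ => True)) :
    -(4 * β * lam / k) * ℓ ^ 2 + Real.log 2 / 2 * ℓ - Real.log 2
      ≤ FEWdepth k k' lam β ℓ x W := by
  classical
  have hk'n : k' ≤ n := le_trans (Nat.le_add_left _ _) hroom
  have hkR : (0 : ℝ) < k := by exact_mod_cast hkpos
  -- quadratic form decomposition
  have hchi : ∀ S : Finset (Fin n),
      (∑ i ∈ S, (if i ∈ x then (1 : ℝ) else 0)) = ((x ∩ S).card : ℝ) := by
    intro S
    rw [Finset.sum_boole, Finset.filter_mem_eq_inter, Finset.inter_comm]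
  have hquad : ∀ S : Finset (Fin n), quadForm (Ymat k lam x W) S
      = lam / k * ((x ∩ S).card : ℝ) ^ 2 + quadForm W S := by
    intro S
    have hexp : quadForm (Ymat k lam x W) S
        = (∑ i ∈ S, ∑ j ∈ S,
            lam / k * ((if i ∈ x then (1 : ℝ) else 0) * (if j ∈ x then (1 : ℝ) else 0)))
          + ∑ i ∈ S, ∑ j ∈ S, W i j := by
      unfold quadForm Ymat
      rw [← Finset.sum_add_distrib]
      refine Finset.sum_congr rfl fun i _ => ?_
      rw [← Finset.sum_add_distrib]
    rw [hexp]
    unfold quadForm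
    congr 1
    calc (∑ i ∈ S, ∑ j ∈ S,
          lam / k * ((if i ∈ x then (1 : ℝ) else 0) * (if j ∈ x then (1 : ℝ) else 0)))
        = lam / k * ((∑ i ∈ S, (if i ∈ x then (1 : ℝ) else 0))
            * (∑ j ∈ S, (if j ∈ x then (1 : ℝ) else 0))) := by
          rw [Finset.sum_mul_sum, Finset.mul_sum]
          refine Finset.sum_congr rfl fun i _ => ?_
          rw [Finset.mul_sum]
      _ = lam / k * ((x ∩ S).card : ℝ) ^ 2 := by rw [hchi S]; ring
  -- region sums
  have hFtotpos : 0 < regionSum k' β W (fun _ => True) := regionSum_tot_pos k' β W hk'n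
  -- split of total sum
  have hsplit : regionSum k' β W (fun _ => True)
      = regionSum k' β W (fun S => ((x ∩ S).card : ℝ) < ℓ)
        + regionSum k' β W (fun S => ℓ ≤ ((x ∩ S).card : ℝ)) := by
    unfold regionSum
    rw [← Finset.sum_filter_add_sum_filter_not _
      (fun S : Finset (Fin n) => ((x ∩ S).card : ℝ) < ℓ)
      (fun S => Real.exp (β * quadForm W S))]
    congr 1
    · apply Finset.sum_congr _ fun _ _ => rfl
      rw [Finset.filter_filter]
      ext S
      simp [Finset.mem_filter]
    · apply Finset.sum_congr _ fun _ _ => rfl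
      rw [Finset.filter_filter]
      ext S
      simp [Finset.mem_filter, not_lt]
  -- A side lower bound
  have hAW : (1 - ε) * regionSum k' β W (fun _ => True)
      ≤ regionSum k' β W (fun S => ((x ∩ S).card : ℝ) < ℓ) := by
    nlinarith [hsplit, hFtotpos, hW]
  have hAY : regionSum k' β W (fun S => ((x ∩ S).card : ℝ) < ℓ)
      ≤ regionSum k' β (Ymat k lam x W) (fun S => ((x ∩ S).card : ℝ) < ℓ) := by
    unfold regionSum
    refine Finset.sum_le_sum fun S _ => ?_
    rw [Real.exp_le_exp]
    apply mul_le_mul_of_nonneg_left _ hβ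
    rw [hquad S]
    have h0 : 0 ≤ lam / k * ((x ∩ S).card : ℝ) ^ 2 := by positivity
    linarith
  -- B side upper bound
  have hBY : regionSum k' β (Ymat k lam x W)
      (fun S => ℓ ≤ ((x ∩ S).card : ℝ) ∧ ((x ∩ S).card : ℝ) ≤ 2 * ℓ)
      ≤ Real.exp (β * (lam / k * (2 * ℓ) ^ 2))
        * regionSum k' β W (fun S => ℓ ≤ ((x ∩ S).card : ℝ)) := by
    have hstep1 : regionSum k' β (Ymat k lam x W)
        (fun S => ℓ ≤ ((x ∩ S).card : ℝ) ∧ ((x ∩ S).card : ℝ) ≤ 2 * ℓ)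
        ≤ Real.exp (β * (lam / k * (2 * ℓ) ^ 2))
          * regionSum k' β W (fun S => ℓ ≤ ((x ∩ S).card : ℝ) ∧ ((x ∩ S).card : ℝ) ≤ 2 * ℓ) := by
      unfold regionSum
      rw [Finset.mul_sum]
      refine Finset.sum_le_sum fun S hS => ?_
      simp only [Finset.mem_filter, Finset.mem_univ, true_and] at hS
      obtain ⟨-, hmlo, hmhi⟩ := hS
      rw [hquad S, mul_add, Real.exp_add]
      apply mul_le_mul_of_nonneg_right _ (Real.exp_pos _).le
      rw [Real.exp_le_exp]
      apply mul_le_mul_of_nonneg_left _ hβ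
      apply mul_le_mul_of_nonneg_left _ (by positivity)
      have hm0 : (0 : ℝ) ≤ ((x ∩ S).card : ℝ) := Nat.cast_nonneg _
      nlinarith
    refine hstep1.trans ?_
    apply mul_le_mul_of_nonneg_left _ (Real.exp_pos _).le
    unfold regionSum
    apply Finset.sum_le_sum_of_subset_of_nonneg
    · intro S hS
      simp only [Finset.mem_filter, Finset.mem_univ, true_and] at hS ⊢
      exact ⟨hS.1, hS.2.1⟩
    · intro S _ _
      exact (Real.exp_pos _).le
  -- B nonempty, positivity of B sum
  have hBpos : 0 < regionSum k' β (Ymat k lam x W)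
      (fun S => ℓ ≤ ((x ∩ S).card : ℝ) ∧ ((x ∩ S).card : ℝ) ≤ 2 * ℓ) := by
    set m := Nat.ceil ℓ with hm
    have hm1 : ℓ ≤ (m : ℝ) := Nat.le_ceil ℓ
    have hm2 : (m : ℝ) ≤ 2 * ℓ := by
      have h := Nat.ceil_lt_add_one (by linarith : (0 : ℝ) ≤ ℓ)
      have h2 : (m : ℝ) < ℓ + 1 := h
      linarith
    have hmk : m ≤ k := by exact_mod_cast hm2.trans h2ℓk
    have hmk' : m ≤ k' := by exact_mod_cast hm2.trans h2ℓk'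
    obtain ⟨T, hTx, hTcard⟩ := Finset.exists_subset_card_eq
      (show m ≤ x.card by rw [hx]; exact hmk)
    obtain ⟨U, hUc, hUcard⟩ := Finset.exists_subset_card_eq
      (show k' - m ≤ xᶜ.card by
        rw [Finset.card_compl, Fintype.card_fin, hx]
        omega)
    have hdisj : Disjoint T U := by
      rw [Finset.disjoint_left]
      intro a haT haU
      exact (Finset.mem_compl.mp (hUc haU)) (hTx haT)
    have hcard : (T ∪ U).card = k' := by
      rw [Finset.card_union_of_disjoint hdisj, hTcard, hUcard]
      omega
    have hxTU : x ∩ (T ∪ U) = T := by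
      rw [Finset.inter_union_distrib_left]
      have h1 : x ∩ T = T := Finset.inter_eq_right.mpr hTx
      have h2 : x ∩ U = ∅ := by
        rw [Finset.eq_empty_iff_forall_notMem]
        intro a ha
        rw [Finset.mem_inter] at ha
        exact (Finset.mem_compl.mp (hUc ha.2)) ha.1
      rw [h1, h2, Finset.union_empty]
    unfold regionSum
    apply Finset.sum_pos (fun S _ => Real.exp_pos _)
    refine ⟨T ∪ U, ?_⟩
    simp only [Finset.mem_filter, Finset.mem_univ, true_and]
    refine ⟨hcard, ?_, ?_⟩
    · rw [hxTU, hTcard]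
      exact hm1
    · rw [hxTU, hTcard]
      exact hm2
  -- total Y sum positive
  have hTotYpos : 0 < regionSum k' β (Ymat k lam x W) (fun _ => True) :=
    regionSum_tot_pos k' β (Ymat k lam x W) hk'n
  have hAYpos : 0 < regionSum k' β (Ymat k lam x W) (fun S => ((x ∩ S).card : ℝ) < ℓ) := by
    have h1 : 0 < (1 - ε) * regionSum k' β W (fun _ => True) := by nlinarith
    linarith [hAW.trans hAY]
  -- final assembly
  unfold FEWdepth FEWdepthY gibbsProb
  rw [Real.log_div (ne_of_gt hAYpos) (ne_of_gt hTotYpos),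
    Real.log_div (ne_of_gt hBpos) (ne_of_gt hTotYpos)]
  set RA := regionSum k' β (Ymat k lam x W) (fun S => ((x ∩ S).card : ℝ) < ℓ) with hRA
  set RB := regionSum k' β (Ymat k lam x W)
    (fun S => ℓ ≤ ((x ∩ S).card : ℝ) ∧ ((x ∩ S).card : ℝ) ≤ 2 * ℓ) with hRB
  set RT := regionSum k' β (Ymat k lam x W) (fun _ => True) with hRT
  set F := regionSum k' β W (fun _ => True) with hF
  clear_value RA RB RT F
  have hlogA : Real.log ((1 - ε) * F) ≤ Real.log RA := by
    apply Real.log_le_log (by nlinarith)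
    exact hAW.trans hAY
  have hlogB : Real.log RB ≤ Real.log (Real.exp (β * (lam / k * (2 * ℓ) ^ 2)) * (ε * F)) := by
    apply Real.log_le_log hBpos
    refine hBY.trans ?_
    apply mul_le_mul_of_nonneg_left hW (Real.exp_pos _).le
  have e1 : Real.log ((1 - ε) * F) = Real.log (1 - ε) + Real.log F :=
    Real.log_mul (ne_of_gt (by linarith : (0:ℝ) < 1 - ε)) (ne_of_gt hFtotpos)
  have e2 : Real.log (Real.exp (β * (lam / k * (2 * ℓ) ^ 2)) * (ε * F))
      = β * (lam / k * (2 * ℓ) ^ 2) + (Real.log ε + Real.log F) := by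
    rw [Real.log_mul (Real.exp_ne_zero _) (mul_ne_zero (ne_of_gt hεpos) (ne_of_gt hFtotpos)),
      Real.log_exp,
      Real.log_mul (ne_of_gt hεpos) (ne_of_gt hFtotpos)]
  have hlog2 : -Real.log 2 ≤ Real.log (1 - ε) := by
    rw [← Real.log_inv]
    apply Real.log_le_log (by norm_num)
    rw [show ((2 : ℝ))⁻¹ = 1 / 2 by norm_num]
    linarith
  have hCeq : β * (lam / k * (2 * ℓ) ^ 2) = (4 * β * lam / k) * ℓ ^ 2 := by
    ring
  have key : -(4 * β * lam / k) * ℓ ^ 2 + Real.log 2 / 2 * ℓ - Real.log 2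
      ≤ Real.log RA - Real.log RB := by
    have h1 : Real.log (1 - ε) + Real.log F ≤ Real.log RA := by rw [← e1]; exact hlogA
    have h2 : Real.log RB ≤ β * (lam / k * (2 * ℓ) ^ 2) + (Real.log ε + Real.log F) := by
      rw [← e2]; exact hlogB
    linarith
  linarith [key]

end StmtOne

set_option maxHeartbeats 1600000 in
open StmtOne in
/-- Theorem: high-temperature free energy well depth bound.
For any `δ > 0` there is `n₀(δ)` such that for all `n ≥ n₀`, all `k`, all `k' ≤ n^{1-δ}`,
any `k`-sparse signal `x`, any `β ≥ 0`, `λ > 0`, and any `ℓ` with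
`ℓ ≥ 2 e k (k'/n)^{1-δ}` and `1 ≤ 2ℓ ≤ min{k,k'}`, with probability at least
`1 - 2^{-(ℓ-2)/2}` over `W ∼ GOE(n)`, the free energy well at correlation `ℓ` has depth
`D_{β,ℓ} ≥ -(4βλ/k)ℓ² + (log 2 / 2)ℓ - log 2`. -/
theorem stmt_1 (δ : ℝ) (hδ : 0 < δ) :
    ∃ n₀ : ℕ, ∀ n : ℕ, n₀ ≤ n → ∀ k k' : ℕ, (k' : ℝ) ≤ (n : ℝ) ^ ((1 : ℝ) - δ) →
    ∀ x : Finset (Fin n), x.card = k →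
    ∀ β : ℝ, 0 ≤ β → ∀ lam : ℝ, 0 < lam → ∀ ℓ : ℝ,
    2 * Real.exp 1 * k * ((k' : ℝ) / n) ^ ((1 : ℝ) - δ) ≤ ℓ →
    1 ≤ 2 * ℓ → 2 * ℓ ≤ min (k : ℝ) (k' : ℝ) →
    ENNReal.ofReal (1 - (2 : ℝ) ^ (-(ℓ - 2) / 2)) ≤
      goeMeasure n {W | -(4 * β * lam / k) * ℓ ^ 2 + Real.log 2 / 2 * ℓ - Real.log 2 ≤
        FEWdepth k k' lam β ℓ x W} := by
  classical
  refine ⟨16 + Nat.ceil ((16 : ℝ) ^ (δ⁻¹ * δ⁻¹)), ?_⟩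
  intro n hn k k' hk'bound x hx β hβ lam hlam ℓ hℓlow hℓhalf hℓmin
  by_cases hℓ2 : ℓ ≤ 2
  · have h1 : (1 : ℝ) ≤ (2 : ℝ) ^ (-(ℓ - 2) / 2) :=
      Real.one_le_rpow (by norm_num) (by linarith)
    rw [ENNReal.ofReal_of_nonpos (by linarith)]
    exact zero_le
  push_neg at hℓ2
  -- basic numeric facts
  have hn16 : (16 : ℝ) ≤ (n : ℝ) := by
    have h : (16 : ℕ) ≤ n := le_trans (by omega) hn
    exact_mod_cast h
  have hnpos : (0 : ℝ) < n := by linarith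
  have hn1 : (1 : ℝ) ≤ (n : ℝ) := by linarith
  have hnceil : ((16 : ℝ) ^ (δ⁻¹ * δ⁻¹)) ≤ (n : ℝ) := by
    have h1 : Nat.ceil ((16 : ℝ) ^ (δ⁻¹ * δ⁻¹)) ≤ n := by omega
    exact Nat.ceil_le.mp h1
  have hδδ : (16 : ℝ) ≤ (n : ℝ) ^ (δ * δ) := by
    have h0 : (0 : ℝ) ≤ (16 : ℝ) ^ (δ⁻¹ * δ⁻¹) := Real.rpow_nonneg (by norm_num) _
    calc (16 : ℝ) = ((16 : ℝ) ^ (δ⁻¹ * δ⁻¹)) ^ (δ * δ) := by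
          rw [← Real.rpow_mul (by norm_num : (0:ℝ) ≤ 16),
            show (δ⁻¹ * δ⁻¹) * (δ * δ) = 1 by field_simp]
          exact (Real.rpow_one _).symm
      _ ≤ (n : ℝ) ^ (δ * δ) := Real.rpow_le_rpow h0 hnceil (by positivity)
  have h2ℓk : 2 * ℓ ≤ (k : ℝ) := le_trans hℓmin (min_le_left _ _)
  have h2ℓk' : 2 * ℓ ≤ (k' : ℝ) := le_trans hℓmin (min_le_right _ _)
  have hkR : (0 : ℝ) < (k : ℝ) := by linarith
  have hk'R : (0 : ℝ) < (k' : ℝ) := by linarith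
  have hkpos : 0 < k := by exact_mod_cast hkR
  have hℓpos : (0 : ℝ) < ℓ := by linarith
  -- k'/n bound
  have hkn' : (k' : ℝ) / n ≤ (n : ℝ) ^ (-δ) := by
    rw [div_le_iff₀ hnpos]
    calc (k' : ℝ) ≤ (n : ℝ) ^ ((1 : ℝ) - δ) := hk'bound
      _ = (n : ℝ) ^ (-δ) * n := by
          rw [show (1 : ℝ) - δ = -δ + 1 by ring, Real.rpow_add hnpos, Real.rpow_one]
  have hnδ16 : (16 : ℝ) ≤ (n : ℝ) ^ δ := by
    rcases le_total δ 1 with h | h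
    · calc (16 : ℝ) ≤ (n : ℝ) ^ (δ * δ) := hδδ
        _ ≤ (n : ℝ) ^ δ := Real.rpow_le_rpow_of_exponent_le hn1 (by nlinarith)
    · calc (16 : ℝ) ≤ (n : ℝ) := hn16
        _ = (n : ℝ) ^ (1 : ℝ) := (Real.rpow_one _).symm
        _ ≤ (n : ℝ) ^ δ := Real.rpow_le_rpow_of_exponent_le hn1 h
  have hnmδ : (n : ℝ) ^ (-δ) ≤ 1 / 16 := by
    rw [Real.rpow_neg hnpos.le, ← one_div]
    exact one_div_le_one_div_of_le (by norm_num) hnδ16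
  have hnd : (n : ℝ) ^ (-(δ * δ)) ≤ 1 / 16 := by
    rw [Real.rpow_neg hnpos.le, ← one_div]
    exact one_div_le_one_div_of_le (by norm_num) hδδ
  have hk'n16 : (k' : ℝ) ≤ n / 16 := by
    calc (k' : ℝ) = ((k' : ℝ) / n) * n := by field_simp
      _ ≤ (n : ℝ) ^ (-δ) * n := mul_le_mul_of_nonneg_right hkn' hnpos.le
      _ ≤ (1 / 16) * n := mul_le_mul_of_nonneg_right hnmδ hnpos.le
      _ = n / 16 := by ring
  -- key product bound
  have hfrac : (0 : ℝ) < (k' : ℝ) / n := by positivity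
  have hkk' : (k : ℝ) * k' / n ≤ ℓ / (2 * Real.exp 1) * (n : ℝ) ^ (-(δ * δ)) := by
    have hsplitpow : ((k' : ℝ) / n) ^ ((1 : ℝ) - δ) * ((k' : ℝ) / n) ^ δ = (k' : ℝ) / n := by
      rw [← Real.rpow_add hfrac, show (1 : ℝ) - δ + δ = 1 by ring, Real.rpow_one]
    have he : (0 : ℝ) < 2 * Real.exp 1 := by positivity
    have hstep : (k : ℝ) * ((k' : ℝ) / n) ≤ (ℓ / (2 * Real.exp 1)) * ((k' : ℝ) / n) ^ δ := by
      calc (k : ℝ) * ((k' : ℝ) / n)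
          = ((k : ℝ) * ((k' : ℝ) / n) ^ ((1 : ℝ) - δ)) * ((k' : ℝ) / n) ^ δ := by
            rw [mul_assoc, hsplitpow]
        _ ≤ (ℓ / (2 * Real.exp 1)) * ((k' : ℝ) / n) ^ δ := by
            apply mul_le_mul_of_nonneg_right _ (Real.rpow_nonneg hfrac.le δ)
            rw [le_div_iff₀ he]
            calc (k : ℝ) * ((k' : ℝ) / n) ^ ((1 : ℝ) - δ) * (2 * Real.exp 1)
                = 2 * Real.exp 1 * k * ((k' : ℝ) / n) ^ ((1 : ℝ) - δ) := by ring
              _ ≤ ℓ := hℓlow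
    have hpow2 : ((k' : ℝ) / n) ^ δ ≤ (n : ℝ) ^ (-(δ * δ)) := by
      calc ((k' : ℝ) / n) ^ δ ≤ ((n : ℝ) ^ (-δ)) ^ δ :=
            Real.rpow_le_rpow hfrac.le hkn' hδ.le
        _ = (n : ℝ) ^ (-(δ * δ)) := by
            rw [← Real.rpow_mul hnpos.le]
            ring_nf
    calc (k : ℝ) * k' / n = (k : ℝ) * ((k' : ℝ) / n) := by ring
      _ ≤ (ℓ / (2 * Real.exp 1)) * ((k' : ℝ) / n) ^ δ := hstep
      _ ≤ (ℓ / (2 * Real.exp 1)) * (n : ℝ) ^ (-(δ * δ)) := by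
          apply mul_le_mul_of_nonneg_left hpow2 (by positivity)
  have he1 : (1 : ℝ) ≤ Real.exp 1 := by
    linarith [Real.add_one_le_exp (1 : ℝ)]
  have hkk'2 : (k : ℝ) * k' ≤ ℓ / (2 * Real.exp 1) * (n : ℝ) ^ (-(δ * δ)) * n := by
    calc (k : ℝ) * k' = ((k : ℝ) * k' / n) * n := by field_simp
      _ ≤ (ℓ / (2 * Real.exp 1) * (n : ℝ) ^ (-(δ * δ))) * n :=
          mul_le_mul_of_nonneg_right hkk' hnpos.le
  have hkn16 : (k : ℝ) ≤ n / 16 := by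
    have h3 : (k : ℝ) * (2 * ℓ) ≤ ℓ / 32 * n := by
      calc (k : ℝ) * (2 * ℓ) ≤ (k : ℝ) * k' := by
            apply mul_le_mul_of_nonneg_left h2ℓk' hkR.le
        _ ≤ ℓ / (2 * Real.exp 1) * (n : ℝ) ^ (-(δ * δ)) * n := hkk'2
        _ ≤ ℓ / 2 * (1 / 16) * n := by
            apply mul_le_mul_of_nonneg_right _ hnpos.le
            apply mul_le_mul _ hnd (Real.rpow_nonneg hnpos.le _) (by positivity)
            apply div_le_div_of_nonneg_left hℓpos.le (by norm_num)
            linarith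
        _ = ℓ / 32 * n := by ring
    nlinarith [h3, hℓpos, hnpos]
  have hroomN : k + k' ≤ n := by
    have h : (k : ℝ) + k' ≤ n := by linarith
    exact_mod_cast h
  have hk'n : k' ≤ n := le_trans (Nat.le_add_left _ _) hroomN
  -- t and ε
  set t := Nat.ceil ℓ with htdef
  have ht1 : ℓ ≤ (t : ℝ) := Nat.le_ceil ℓ
  have ht2 : (t : ℝ) ≤ 2 * ℓ := by
    have h := Nat.ceil_lt_add_one (by linarith : (0 : ℝ) ≤ ℓ)
    have h2 : (t : ℝ) < ℓ + 1 := h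
    linarith
  have htk : t ≤ k := by exact_mod_cast ht2.trans h2ℓk
  have htk' : t ≤ k' := by exact_mod_cast ht2.trans h2ℓk'
  have htn2 : (t : ℝ) ≤ n / 2 := by
    calc (t : ℝ) ≤ 2 * ℓ := ht2
      _ ≤ k' := h2ℓk'
      _ ≤ n / 16 := hk'n16
      _ ≤ n / 2 := by linarith
  have htn : t ≤ n := by
    have h : (t : ℝ) ≤ n := by linarith
    exact_mod_cast h
  have htpos : 0 < t := by
    have h : (0 : ℝ) < (t : ℝ) := by linarith
    exact_mod_cast h
  have hntpos : (0 : ℝ) < (n : ℝ) - t := by linarith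
  clear_value t
  set ε := (2 : ℝ) ^ (-(ℓ / 2) : ℝ) with hεdef
  have hεpos : 0 < ε := Real.rpow_pos_of_pos (by norm_num) _
  have hεhalf : ε ≤ 1 / 2 := by
    calc ε ≤ (2 : ℝ) ^ (-(1 : ℝ)) :=
          Real.rpow_le_rpow_of_exponent_le (by norm_num) (by linarith)
      _ = 1 / 2 := by
          rw [Real.rpow_neg_one]
          norm_num
  have hlogε : Real.log 2 / 2 * ℓ ≤ -Real.log ε := by
    rw [hεdef, Real.log_rpow (by norm_num)]
    have h0 : -(-(ℓ / 2) * Real.log 2) = Real.log 2 / 2 * ℓ := by ring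
    rw [h0]
  clear_value ε
  -- combinatorial quantity
  set pstar : ℝ := ((k.choose t * (n - t).choose (k' - t) : ℕ) : ℝ) / ((n.choose k' : ℕ) : ℝ)
    with hpstardef
  clear_value pstar
  have hNpos : (0 : ℝ) < ((n.choose k' : ℕ) : ℝ) := by exact_mod_cast Nat.choose_pos hk'n
  have hchainR : (((n - t).choose (k' - t) : ℕ) : ℝ) * ((n : ℝ) - t) ^ t
      ≤ ((n.choose k' : ℕ) : ℝ) * (k' : ℝ) ^ t := by
    have h := StmtOne.chain_choose t (n - t) (k' - t)
    rw [show n - t + t = n by omega, show k' - t + t = k' by omega] at h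
    have hcast : ((n - t : ℕ) : ℝ) = (n : ℝ) - t := by
      push_cast [Nat.cast_sub htn]
      ring
    calc (((n - t).choose (k' - t) : ℕ) : ℝ) * ((n : ℝ) - t) ^ t
        = (((n - t).choose (k' - t) * (n - t) ^ t : ℕ) : ℝ) := by
          rw [← hcast]
          push_cast
          ring
      _ ≤ ((n.choose k' * k' ^ t : ℕ) : ℝ) := by exact_mod_cast h
      _ = ((n.choose k' : ℕ) : ℝ) * (k' : ℝ) ^ t := by push_cast; ring
  have hB : (((n - t).choose (k' - t) : ℕ) : ℝ)
      ≤ ((n.choose k' : ℕ) : ℝ) * ((k' : ℝ) / ((n : ℝ) - t)) ^ t := by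
    rw [div_pow, ← mul_div_assoc, le_div_iff₀ (by positivity)]
    exact hchainR
  have hchoosek : ((k.choose t : ℕ) : ℝ) ≤ (Real.exp 1 * k / t) ^ t :=
    StmtOne.choose_le_epow k t htpos
  have hpstar1 : pstar ≤ (Real.exp 1 * k / t) ^ t * ((k' : ℝ) / ((n : ℝ) - t)) ^ t := by
    rw [hpstardef, div_le_iff₀ hNpos]
    push_cast
    calc ((k.choose t : ℕ) : ℝ) * (((n - t).choose (k' - t) : ℕ) : ℝ)
        ≤ (Real.exp 1 * k / t) ^ t
            * (((n.choose k' : ℕ) : ℝ) * ((k' : ℝ) / ((n : ℝ) - t)) ^ t) := by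
          apply mul_le_mul hchoosek hB (by positivity) (by positivity)
      _ = (Real.exp 1 * k / t) ^ t * ((k' : ℝ) / ((n : ℝ) - t)) ^ t
            * ((n.choose k' : ℕ) : ℝ) := by ring
  have hρ : Real.exp 1 * ((k : ℝ) * k')
      ≤ (n : ℝ) ^ (-(δ * δ)) * ((t : ℝ) * ((n : ℝ) - t)) := by
    have h2 : ℓ / 2 * n ≤ (t : ℝ) * ((n : ℝ) - t) := by
      have h3 : ℓ * ((n : ℝ) / 2) ≤ (t : ℝ) * ((n : ℝ) - t) :=
        mul_le_mul ht1 (by linarith) (by linarith) (by linarith)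
      linarith
    calc Real.exp 1 * ((k : ℝ) * k')
        ≤ Real.exp 1 * (ℓ / (2 * Real.exp 1) * (n : ℝ) ^ (-(δ * δ)) * n) :=
          mul_le_mul_of_nonneg_left hkk'2 (Real.exp_pos 1).le
      _ = (n : ℝ) ^ (-(δ * δ)) * (ℓ / 2 * n) := by
          field_simp
      _ ≤ (n : ℝ) ^ (-(δ * δ)) * ((t : ℝ) * ((n : ℝ) - t)) :=
          mul_le_mul_of_nonneg_left h2 (Real.rpow_nonneg hnpos.le _)
  have hρdiv : Real.exp 1 * k / t * ((k' : ℝ) / ((n : ℝ) - t)) ≤ (n : ℝ) ^ (-(δ * δ)) := by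
    rw [div_mul_div_comm, div_le_iff₀ (by positivity)]
    calc Real.exp 1 * (k : ℝ) * k' = Real.exp 1 * ((k : ℝ) * k') := by ring
      _ ≤ (n : ℝ) ^ (-(δ * δ)) * ((t : ℝ) * ((n : ℝ) - t)) := hρ
  have hpstar2 : pstar ≤ ((n : ℝ) ^ (-(δ * δ))) ^ t := by
    refine hpstar1.trans ?_
    rw [← mul_pow]
    exact pow_le_pow_left₀ (by positivity) hρdiv t
  have hb0 : (0 : ℝ) < (n : ℝ) ^ (-(δ * δ)) := Real.rpow_pos_of_pos hnpos _
  have hp3 : pstar ≤ ((n : ℝ) ^ (-(δ * δ))) ^ (ℓ : ℝ) := by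
    calc pstar ≤ ((n : ℝ) ^ (-(δ * δ))) ^ t := hpstar2
      _ = ((n : ℝ) ^ (-(δ * δ))) ^ ((t : ℕ) : ℝ) := (Real.rpow_natCast _ t).symm
      _ ≤ ((n : ℝ) ^ (-(δ * δ))) ^ (ℓ : ℝ) :=
          Real.rpow_le_rpow_of_exponent_ge hb0 (by linarith [hnd]) ht1
  have h24 : (2 : ℝ) ^ (4 : ℝ) = 16 := by
    rw [show (4 : ℝ) = ((4 : ℕ) : ℝ) by norm_num, Real.rpow_natCast]
    norm_num
  have hp4 : pstar ≤ (2 : ℝ) ^ ((-(4 : ℝ)) * ℓ) := by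
    have h16 : (1 / 16 : ℝ) = (2 : ℝ) ^ (-(4 : ℝ)) := by
      rw [Real.rpow_neg (by norm_num), h24]
      norm_num
    calc pstar ≤ ((n : ℝ) ^ (-(δ * δ))) ^ (ℓ : ℝ) := hp3
      _ ≤ ((1 : ℝ) / 16) ^ (ℓ : ℝ) := Real.rpow_le_rpow hb0.le hnd (by linarith)
      _ = ((2 : ℝ) ^ (-(4 : ℝ))) ^ (ℓ : ℝ) := by rw [h16]
      _ = (2 : ℝ) ^ ((-(4 : ℝ)) * ℓ) := by
          rw [← Real.rpow_mul (by norm_num : (0 : ℝ) ≤ 2)]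
  have hεinv : ε⁻¹ = (2 : ℝ) ^ (ℓ / 2 : ℝ) := by
    rw [hεdef, Real.rpow_neg (by norm_num : (0 : ℝ) ≤ 2), inv_inv]
  have hfinalreal : pstar / ε ≤ (2 : ℝ) ^ (-(ℓ - 2) / 2) := by
    have hpsnonneg : 0 ≤ pstar := by
      rw [hpstardef]
      positivity
    rw [div_eq_mul_inv, hεinv]
    calc pstar * (2 : ℝ) ^ (ℓ / 2 : ℝ)
        ≤ (2 : ℝ) ^ ((-(4 : ℝ)) * ℓ) * (2 : ℝ) ^ (ℓ / 2 : ℝ) :=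
          mul_le_mul_of_nonneg_right hp4 (Real.rpow_nonneg (by norm_num) _)
      _ = (2 : ℝ) ^ ((-(4 : ℝ)) * ℓ + ℓ / 2) := (Real.rpow_add (by norm_num) _ _).symm
      _ ≤ (2 : ℝ) ^ (-(ℓ - 2) / 2) :=
          Real.rpow_le_rpow_of_exponent_le (by norm_num) (by linarith)
  -- measure-theoretic part
  set Gset : Set (Fin n → Fin n → ℝ) := {W : Fin n → Fin n → ℝ |
      regionSum k' β W (fun S => ℓ ≤ ((x ∩ S).card : ℝ))
        ≤ ε * regionSum k' β W (fun _ => True)} with hGset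
  have hGmeas : MeasurableSet Gset :=
    measurableSet_le (StmtOne.measurable_regionSum _ _ _)
      ((StmtOne.measurable_regionSum _ _ _).const_mul ε)
  have hsubset : Gset ⊆ {W | -(4 * β * lam / k) * ℓ ^ 2 + Real.log 2 / 2 * ℓ - Real.log 2 ≤
      FEWdepth k k' lam β ℓ x W} := by
    intro W hW
    exact StmtOne.deterministic_core x hx β lam ℓ ε hβ hlam hkpos (by linarith) hεpos hεhalf
      hlogε h2ℓk h2ℓk' hroomN W hW
  have hlint : ∫⁻ W, ENNReal.ofReal (regionSum k' β W (fun S => ℓ ≤ ((x ∩ S).card : ℝ))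
      / regionSum k' β W (fun _ => True)) ∂(goeMeasure n) ≤ ENNReal.ofReal pstar := by
    set FC := Finset.filter (fun S : Finset (Fin n) => ℓ ≤ ((x ∩ S).card : ℝ))
      (Finset.powersetCard k' (Finset.univ : Finset (Fin n))) with hFC
    have hreg : ∀ W : Fin n → Fin n → ℝ,
        regionSum k' β W (fun S => ℓ ≤ ((x ∩ S).card : ℝ))
          = ∑ S ∈ FC, Real.exp (β * quadForm W S) := by
      intro W
      unfold regionSum
      apply Finset.sum_congr _ fun _ _ => rfl
      rw [hFC]
      ext S
      simp [Finset.mem_powersetCard, Finset.mem_filter, and_comm]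
    have hpt : ∀ W : Fin n → Fin n → ℝ,
        ENNReal.ofReal (regionSum k' β W (fun S => ℓ ≤ ((x ∩ S).card : ℝ))
          / regionSum k' β W (fun _ => True)) = ∑ S ∈ FC, StmtOne.fracFn n k' β S W := by
      intro W
      rw [hreg W, Finset.sum_div, ENNReal.ofReal_sum_of_nonneg]
      · rfl
      · intro S _
        have h0 := StmtOne.regionSum_tot_pos k' β W hk'n
        positivity
    calc ∫⁻ W, ENNReal.ofReal (regionSum k' β W (fun S => ℓ ≤ ((x ∩ S).card : ℝ))
          / regionSum k' β W (fun _ => True)) ∂(goeMeasure n)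
        = ∑ S ∈ FC, ∫⁻ W, StmtOne.fracFn n k' β S W ∂(goeMeasure n) := by
          rw [← lintegral_finset_sum _ (fun S _ => StmtOne.measurable_fracFn k' β S)]
          exact lintegral_congr hpt
      _ = ∑ _S ∈ FC, ((n.choose k' : ℕ) : ENNReal)⁻¹ := by
          apply Finset.sum_congr rfl
          intro S hS
          rw [hFC, Finset.mem_filter, Finset.mem_powersetCard] at hS
          exact StmtOne.lintegral_fracFn_value k' hk'n β S hS.1.2
      _ = (FC.card : ENNReal) * ((n.choose k' : ℕ) : ENNReal)⁻¹ := by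
          rw [Finset.sum_const, nsmul_eq_mul]
      _ ≤ ((k.choose t * (n - t).choose (k' - t) : ℕ) : ENNReal)
            * ((n.choose k' : ℕ) : ENNReal)⁻¹ := by
          apply mul_le_mul_left
          have hcount : FC.card ≤ x.card.choose t * (n - t).choose (k' - t) := by
            apply StmtOne.count_high x k' t FC
            intro S hS
            rw [hFC, Finset.mem_filter, Finset.mem_powersetCard] at hS
            refine ⟨hS.1.2, ?_⟩
            rw [htdef]
            exact Nat.ceil_le.mpr hS.2
          rw [hx] at hcount
          exact_mod_cast hcount
      _ = ENNReal.ofReal pstar := by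
          rw [hpstardef, ENNReal.ofReal_div_of_pos hNpos, div_eq_mul_inv,
            ENNReal.ofReal_natCast, ENNReal.ofReal_natCast]
  have hcompl : goeMeasure n Gsetᶜ ≤ ENNReal.ofReal ((2 : ℝ) ^ (-(ℓ - 2) / 2)) := by
    have hfmeas : Measurable (fun W : Fin n → Fin n → ℝ => ENNReal.ofReal
        (regionSum k' β W (fun S => ℓ ≤ ((x ∩ S).card : ℝ))
          / regionSum k' β W (fun _ => True))) :=
      ((StmtOne.measurable_regionSum _ _ _).div
        (StmtOne.measurable_regionSum _ _ _)).ennreal_ofReal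
    have hmarkov := mul_meas_ge_le_lintegral₀ (μ := goeMeasure n) hfmeas.aemeasurable
      (ENNReal.ofReal ε)
    have hsub2 : Gsetᶜ ⊆ {W : Fin n → Fin n → ℝ | ENNReal.ofReal ε ≤ ENNReal.ofReal
        (regionSum k' β W (fun S => ℓ ≤ ((x ∩ S).card : ℝ))
          / regionSum k' β W (fun _ => True))} := by
      intro W hWc
      simp only [hGset, Set.mem_compl_iff, Set.mem_setOf_eq, not_le] at hWc
      have hFt := StmtOne.regionSum_tot_pos k' β W hk'n
      have hle : ε ≤ regionSum k' β W (fun S => ℓ ≤ ((x ∩ S).card : ℝ))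
          / regionSum k' β W (fun _ => True) := by
        rw [le_div_iff₀ hFt]
        linarith
      exact ENNReal.ofReal_le_ofReal hle
    have hεne : ENNReal.ofReal ε ≠ 0 := by
      simp only [ne_eq, ENNReal.ofReal_eq_zero, not_le]
      exact hεpos
    calc goeMeasure n Gsetᶜ
        ≤ goeMeasure n {W : Fin n → Fin n → ℝ | ENNReal.ofReal ε ≤ ENNReal.ofReal
            (regionSum k' β W (fun S => ℓ ≤ ((x ∩ S).card : ℝ))
              / regionSum k' β W (fun _ => True))} := measure_mono hsub2
      _ ≤ (∫⁻ W, ENNReal.ofReal (regionSum k' β W (fun S => ℓ ≤ ((x ∩ S).card : ℝ))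
            / regionSum k' β W (fun _ => True)) ∂(goeMeasure n)) / ENNReal.ofReal ε := by
          rw [ENNReal.le_div_iff_mul_le (Or.inl hεne) (Or.inl ENNReal.ofReal_ne_top)]
          rw [mul_comm]
          exact hmarkov
      _ ≤ ENNReal.ofReal pstar / ENNReal.ofReal ε := ENNReal.div_le_div_right hlint _
      _ = ENNReal.ofReal (pstar / ε) := (ENNReal.ofReal_div_of_pos hεpos).symm
      _ ≤ ENNReal.ofReal ((2 : ℝ) ^ (-(ℓ - 2) / 2)) := ENNReal.ofReal_le_ofReal hfinalreal
  have hqnonneg : (0 : ℝ) ≤ (2 : ℝ) ^ (-(ℓ - 2) / 2) :=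
    (Real.rpow_pos_of_pos (by norm_num) _).le
  calc ENNReal.ofReal (1 - (2 : ℝ) ^ (-(ℓ - 2) / 2))
      = 1 - ENNReal.ofReal ((2 : ℝ) ^ (-(ℓ - 2) / 2)) := by
        rw [ENNReal.ofReal_sub _ hqnonneg, ENNReal.ofReal_one]
    _ ≤ 1 - goeMeasure n Gsetᶜ := tsub_le_tsub_left hcompl 1
    _ = goeMeasure n Gset := by
        rw [prob_compl_eq_one_sub hGmeas]
        exact ENNReal.sub_sub_cancel ENNReal.one_ne_top prob_le_one
    _ ≤ goeMeasure n {W | -(4 * β * lam / k) * ℓ ^ 2 + Real.log 2 / 2 * ℓ - Real.log 2 ≤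
          FEWdepth k k' lam β ℓ x W} := measure_mono hsubset
end

section
/- Let λ > 0 and k, k', n ∈ ℕ with k, k' ≤ n, k, k', n → ∞, k, k' = o(n), and suppose Assumptions (λ) and (k') hold. Define ℓ_c = (1/(2λ))·k·√( k'/(n·log(n/k')) )·log( (1/(2λ))·√( n/(k'·log(n/k')) ) ). Then ℓ_c = O( (1/λ)·k·√( (k'/n)·log n ) ), ℓ_c = ω( k'k/n ), and ℓ_c = o( min{k, k'} ). -/
open MeasureTheory ProbabilityTheory Filter Asymptotics

noncomputable def lcR (N K K' lam : ℝ) : ℝ :=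
  1 / (2 * lam) * K * Real.sqrt (K' / (N * Real.log (N / K'))) *
    Real.log (1 / (2 * lam) * Real.sqrt (N / (K' * Real.log (N / K'))))

set_option maxHeartbeats 1000000 in
lemma stmt7_core (N K K' lam : ℝ)
    (hlam : 0 < lam) (hlam1 : lam ≤ 1)
    (hK1 : 1 ≤ K) (hK'1 : 1 ≤ K')
    (hK3 : K ≤ N / 3)
    (hlogN : 6 ≤ Real.log N)
    (h6 : K' ≤ lam ^ 2 * N / Real.log N ^ 3)
    (h7 : K / N * Real.log (N / K) ≤ Real.exp (-2) * lam)
    (h8 : K ^ 2 / (lam ^ 2 * N) * Real.log (N / K) ^ 2 /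
        Real.log (lam * N / (K * Real.log (N / K))) ≤ K') :
    0 ≤ lcR N K K' lam ∧
    lcR N K K' lam ≤ 1 / (2 * lam) * K * Real.sqrt (K' / N * Real.log N) ∧
    lcR N K K' lam = K * K' / N *
      (1 / (2 * lam) * Real.sqrt (N / (K' * Real.log (N / K'))) *
        Real.log (1 / (2 * lam) * Real.sqrt (N / (K' * Real.log (N / K'))))) ∧
    Real.log N / 2 ≤ 1 / (2 * lam) * Real.sqrt (N / (K' * Real.log (N / K'))) ∧
    1 ≤ Real.log (1 / (2 * lam) * Real.sqrt (N / (K' * Real.log (N / K')))) ∧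
    lcR N K K' lam ^ 2 ≤ 3 / 4 * (K ^ 2 / (lam ^ 2 * N) * Real.log (N / K) ^ 2 /
        Real.log (lam * N / (K * Real.log (N / K))) * K') := by
  have hN3 : (3:ℝ) ≤ N := by linarith
  have hN0 : (0:ℝ) < N := by linarith
  have hK0 : (0:ℝ) < K := by linarith
  have hK'0 : (0:ℝ) < K' := by linarith
  have hlogN0 : (0:ℝ) < Real.log N := by linarith
  have hlam2 : (0:ℝ) < lam ^ 2 := by positivity
  have he13 : Real.exp 1 ≤ 3 := Real.exp_one_lt_d9.le.trans (by norm_num)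
  have hNK3 : (3:ℝ) ≤ N / K := by rw [le_div_iff₀ hK0]; linarith
  have hNK0 : (0:ℝ) < N / K := by linarith
  have hNK : 1 ≤ Real.log (N / K) := by
    rw [Real.le_log_iff_exp_le hNK0]; linarith
  have hNKlog0 : (0:ℝ) < Real.log (N / K) := by linarith
  -- L facts
  set L := Real.log (N / K') with hLdef
  have hKN' : Real.log N ^ 3 / lam ^ 2 ≤ N / K' := by
    rw [div_le_div_iff₀ (by positivity) hK'0]
    calc Real.log N ^ 3 * K' = K' * Real.log N ^ 3 := by ring
    _ ≤ lam ^ 2 * N / Real.log N ^ 3 * Real.log N ^ 3 := by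
        apply mul_le_mul_of_nonneg_right h6 (by positivity)
    _ = N * lam ^ 2 := by field_simp
  have hNK'0 : (0:ℝ) < N / K' := lt_of_lt_of_le (by positivity) hKN'
  have hloglog : 1 ≤ Real.log (Real.log N) := by
    rw [Real.le_log_iff_exp_le hlogN0]; linarith
  have hx0 : 0 ≤ -Real.log lam := by
    simpa using Real.log_nonpos hlam.le hlam1
  have hLlow : 2 * (-Real.log lam) + 3 * Real.log (Real.log N) ≤ L := by
    have h1 : Real.log (Real.log N ^ 3 / lam ^ 2) ≤ L :=
      Real.log_le_log (by positivity) hKN'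
    rw [Real.log_div (by positivity) (by positivity), Real.log_pow, Real.log_pow] at h1
    push_cast at h1
    linarith
  have hL3 : 3 ≤ L := by linarith
  have hL0 : (0:ℝ) < L := by linarith
  have hL1 : (1:ℝ) ≤ L := by linarith
  have hxL : -Real.log lam ≤ L / 2 := by linarith
  have hLup : L ≤ Real.log N := Real.log_le_log hNK'0 (div_le_self hN0.le hK'1)
  -- A facts
  set A := 1 / (2 * lam) * Real.sqrt (N / (K' * L)) with hAdef
  have hargA : (0:ℝ) < N / (K' * L) := by positivity
  have hA : Real.log N / 2 ≤ A := by
    have h1 : Real.log N ^ 2 / lam ^ 2 ≤ N / (K' * L) := by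
      have h2 : Real.log N ^ 3 / lam ^ 2 / Real.log N ≤ (N / K') / L := by
        gcongr
      calc Real.log N ^ 2 / lam ^ 2 = Real.log N ^ 3 / lam ^ 2 / Real.log N := by
            field_simp
      _ ≤ (N / K') / L := h2
      _ = N / (K' * L) := by rw [div_div]
    have h3 : Real.log N / lam ≤ Real.sqrt (N / (K' * L)) := by
      have h4 : Real.sqrt (Real.log N ^ 2 / lam ^ 2) ≤ Real.sqrt (N / (K' * L)) :=
        Real.sqrt_le_sqrt h1
      rwa [show Real.log N ^ 2 / lam ^ 2 = (Real.log N / lam) ^ 2 by ring,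
        Real.sqrt_sq (by positivity)] at h4
    have h5 : Real.log N / 2 ≤ 1 / (2 * lam) * (Real.log N / lam) := by
      rw [div_mul_div_comm, one_mul]
      apply div_le_div_of_nonneg_left hlogN0.le (by positivity)
      have h6' : lam * lam ≤ 1 := mul_le_one₀ hlam1 hlam.le hlam1
      linarith
    calc Real.log N / 2 ≤ 1 / (2 * lam) * (Real.log N / lam) := h5
    _ ≤ A := by
        rw [hAdef]
        exact mul_le_mul_of_nonneg_left h3 (by positivity)
  have hA0 : (0:ℝ) < A := by linarith
  have hlogA1 : 1 ≤ Real.log A := by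
    rw [Real.le_log_iff_exp_le hA0]; linarith
  have hlogAL : Real.log A ≤ L := by
    have h1 : Real.log A = -(Real.log 2 + Real.log lam) + Real.log (N / (K' * L)) / 2 := by
      rw [hAdef, Real.log_mul (by positivity) (by positivity),
        Real.log_sqrt hargA.le, one_div, Real.log_inv,
        Real.log_mul (by norm_num) hlam.ne']
    have h2 : Real.log (N / (K' * L)) ≤ L := by
      have h3 : N / (K' * L) ≤ N / K' := by
        rw [← div_div]
        exact div_le_self (by positivity) hL1
      exact Real.log_le_log hargA h3
    have hlog2 : 0 ≤ Real.log 2 := Real.log_nonneg (by norm_num)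
    linarith
  -- D facts
  set D := Real.log (lam * N / (K * Real.log (N / K))) with hDdef
  set E := lam * N / (K * Real.log (N / K)) with hEdef
  have hKlogpos : (0:ℝ) < K * Real.log (N / K) := by positivity
  have hE2 : Real.exp 2 ≤ E := by
    have h1 : K * Real.log (N / K) ≤ Real.exp (-2) * lam * N := by
      have h2 : K * Real.log (N / K) / N ≤ Real.exp (-2) * lam := by
        rwa [div_mul_eq_mul_div] at h7
      calc K * Real.log (N / K) = K * Real.log (N / K) / N * N := by field_simp
      _ ≤ Real.exp (-2) * lam * N := mul_le_mul_of_nonneg_right h2 hN0.le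
    rw [hEdef, le_div_iff₀ hKlogpos]
    calc Real.exp 2 * (K * Real.log (N / K)) ≤ Real.exp 2 * (Real.exp (-2) * lam * N) := by
          apply mul_le_mul_of_nonneg_left h1 (Real.exp_pos 2).le
    _ = Real.exp 2 * Real.exp (-2) * (lam * N) := by ring
    _ = lam * N := by rw [← Real.exp_add]; norm_num
  have hE0 : (0:ℝ) < E := lt_of_lt_of_le (Real.exp_pos 2) hE2
  have hD2 : 2 ≤ D := by
    rw [hDdef]
    exact (Real.le_log_iff_exp_le hE0).mpr hE2
  have hD0 : (0:ℝ) < D := by linarith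
  have hDup : D ≤ Real.log (N / K) := by
    rw [hDdef]
    apply Real.log_le_log hE0
    rw [hEdef, div_le_div_iff₀ hKlogpos hK0]
    have h9 : lam ≤ Real.log (N / K) := hlam1.trans hNK
    have h10 := mul_le_mul_of_nonneg_right h9 (mul_pos hN0 hK0).le
    linarith [h10]
  have hL3D : L ≤ 3 * D := by
    have hQ0 : (0:ℝ) < K ^ 2 / (lam ^ 2 * N) * Real.log (N / K) ^ 2 / D :=
      div_pos (by positivity) hD0
    have hNK'Q : N / K' ≤ N / (K ^ 2 / (lam ^ 2 * N) * Real.log (N / K) ^ 2 / D) :=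
      div_le_div_of_nonneg_left hN0.le hQ0 h8
    have hNQ : N / (K ^ 2 / (lam ^ 2 * N) * Real.log (N / K) ^ 2 / D) = D * E ^ 2 := by
      rw [hEdef]
      field_simp
    have h1 : L ≤ Real.log (D * E ^ 2) :=
      Real.log_le_log hNK'0 (hNK'Q.trans_eq hNQ)
    rw [Real.log_mul hD0.ne' (pow_ne_zero 2 hE0.ne'), Real.log_pow] at h1
    have hlogE : Real.log E = D := hDdef.symm
    rw [hlogE] at h1
    push_cast at h1
    have h2 : Real.log D ≤ D := (Real.log_le_sub_one_of_pos hD0).trans (by linarith)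
    linarith
  -- conclusions
  have hsqnn : (0:ℝ) ≤ K' / (N * L) := by positivity
  have hlc : lcR N K K' lam = 1 / (2 * lam) * K * Real.sqrt (K' / (N * L)) * Real.log A := by
    rw [lcR, ← hLdef, ← hAdef]
  have hlc0 : 0 ≤ lcR N K K' lam := by
    rw [hlc]
    apply mul_nonneg (by positivity) (by linarith)
  refine ⟨hlc0, ?_, ?_, hA, hlogA1, ?_⟩
  · -- part 1 bound
    rw [hlc]
    calc 1 / (2 * lam) * K * Real.sqrt (K' / (N * L)) * Real.log A
        ≤ 1 / (2 * lam) * K * Real.sqrt (K' / (N * L)) * L := by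
          apply mul_le_mul_of_nonneg_left hlogAL (by positivity)
    _ = 1 / (2 * lam) * K * Real.sqrt (K' * L / N) := by
          have hsL : Real.sqrt (K' / (N * L)) * L = Real.sqrt (K' * L / N) := by
            rw [show K' * L / N = K' / (N * L) * L ^ 2 by field_simp,
              Real.sqrt_mul hsqnn, Real.sqrt_sq hL0.le]
          rw [← hsL]; ring
    _ ≤ 1 / (2 * lam) * K * Real.sqrt (K' / N * Real.log N) := by
          apply mul_le_mul_of_nonneg_left _ (by positivity)
          apply Real.sqrt_le_sqrt
          rw [div_mul_eq_mul_div]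
          gcongr
  · -- identity lc = K K'/N * (A log A)
    rw [hlc, hAdef]
    have hs : Real.sqrt (K' / (N * L)) = K' / N * Real.sqrt (N / (K' * L)) := by
      rw [show K' / (N * L) = (K' / N) ^ 2 * (N / (K' * L)) by field_simp,
        Real.sqrt_mul (sq_nonneg _), Real.sqrt_sq (by positivity)]
    rw [hs]; ring
  · -- part 3 k' bound
    rw [hlc]
    have hexp : (1 / (2 * lam) * K * Real.sqrt (K' / (N * L)) * Real.log A) ^ 2
        = K ^ 2 * K' / (4 * lam ^ 2 * N) * (Real.log A ^ 2 / L) := by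
      calc (1 / (2 * lam) * K * Real.sqrt (K' / (N * L)) * Real.log A) ^ 2
          = (1 / (2 * lam)) ^ 2 * K ^ 2 * Real.sqrt (K' / (N * L)) ^ 2 * Real.log A ^ 2 := by
            ring
      _ = (1 / (2 * lam)) ^ 2 * K ^ 2 * (K' / (N * L)) * Real.log A ^ 2 := by
            rw [Real.sq_sqrt hsqnn]
      _ = K ^ 2 * K' / (4 * lam ^ 2 * N) * (Real.log A ^ 2 / L) := by
            field_simp
            ring
    rw [hexp]
    have hs1 : Real.log A ^ 2 / L ≤ 3 * (Real.log (N / K) ^ 2 / D) := by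
      have h1 : Real.log A ^ 2 / L ≤ L := by
        rw [div_le_iff₀ hL0]
        calc Real.log A ^ 2 ≤ L ^ 2 := pow_le_pow_left₀ (by linarith) hlogAL 2
        _ = L * L := by ring
      have h2 : D ≤ Real.log (N / K) ^ 2 / D := by
        rw [le_div_iff₀ hD0]
        calc D * D = D ^ 2 := by ring
        _ ≤ Real.log (N / K) ^ 2 := pow_le_pow_left₀ hD0.le hDup 2
      linarith
    calc K ^ 2 * K' / (4 * lam ^ 2 * N) * (Real.log A ^ 2 / L)
        ≤ K ^ 2 * K' / (4 * lam ^ 2 * N) * (3 * (Real.log (N / K) ^ 2 / D)) := by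
          apply mul_le_mul_of_nonneg_left hs1 (by positivity)
    _ = 3 / 4 * (K ^ 2 / (lam ^ 2 * N) * Real.log (N / K) ^ 2 / D * K') := by
          field_simp

/-- Theorem FM2, part 1: asymptotics of the critical overlap `ℓ_c`.
Under Assumptions (λ) and (k') with `k, k' ≤ n`, `k, k' → ∞` and `k, k' = o(n)`:
`ℓ_c = O((1/λ)·k·√((k'/n)·log n))`, `ℓ_c = ω(k'k/n)`, and `ℓ_c = o(min{k,k'})`. -/
theorem stmt_7 (k k' : ℕ → ℕ) (lam : ℕ → ℝ) (hlam : ∀ n, 0 < lam n)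
    (hkle : ∀ n, k n ≤ n) (hk'le : ∀ n, k' n ≤ n)
    (hkTop : Tendsto (fun n => k n) atTop atTop) (hk'Top : Tendsto (fun n => k' n) atTop atTop)
    (hko : (fun n => (k n : ℝ)) =o[atTop] fun n => (n : ℝ))
    (hk'o : (fun n => (k' n : ℝ)) =o[atTop] fun n => (n : ℝ))
    (hAL : AssumLambda k lam) (hAK : AssumKprime k k' lam) :
    ((fun n => ellCrit n (k n) (k' n) (lam n)) =O[atTop]
      fun n => 1 / lam n * (k n : ℝ) * Real.sqrt ((k' n : ℝ) / n * Real.log n)) ∧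
    ((fun n => (k' n : ℝ) * (k n : ℝ) / n) =o[atTop]
      fun n => ellCrit n (k n) (k' n) (lam n)) ∧
    ((fun n => ellCrit n (k n) (k' n) (lam n)) =o[atTop]
      fun n => (min (k n) (k' n) : ℝ)) := by
  obtain ⟨hAL1, hAL2⟩ := hAL
  obtain ⟨hAK1, hAK2, -⟩ := hAK
  have hellc : ∀ n, ellCrit n (k n) (k' n) (lam n) = lcR n (k n) (k' n) (lam n) :=
    fun n => rfl
  have hlogNev : ∀ C : ℝ, ∀ᶠ n : ℕ in atTop, C ≤ Real.log n := fun C =>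
    (Real.tendsto_log_atTop.comp tendsto_natCast_atTop_atTop).eventually_ge_atTop C
  have hk1 : ∀ᶠ n in atTop, (1:ℝ) ≤ (k n : ℝ) := by
    filter_upwards [hkTop.eventually_ge_atTop 1] with n h
    exact_mod_cast h
  have hk'1 : ∀ᶠ n in atTop, (1:ℝ) ≤ (k' n : ℝ) := by
    filter_upwards [hk'Top.eventually_ge_atTop 1] with n h
    exact_mod_cast h
  have hk3 : ∀ᶠ n in atTop, (k n : ℝ) ≤ (n:ℝ) / 3 := by
    filter_upwards [hko.def (by norm_num : (0:ℝ) < 1/3)] with n h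
    rw [Real.norm_eq_abs, Real.norm_eq_abs, abs_of_nonneg (Nat.cast_nonneg _),
      abs_of_nonneg (Nat.cast_nonneg _)] at h
    linarith
  have hlam1 : ∀ᶠ n in atTop, lam n ≤ 1 := by
    filter_upwards [hAL2.def one_pos, hlogNev 6] with n h hl
    have h0 : (0:ℝ) ≤ min 1 ((k n : ℝ) / (Real.sqrt n * Real.log n)) := by
      apply le_min (by norm_num)
      apply div_nonneg (Nat.cast_nonneg _)
      exact mul_nonneg (Real.sqrt_nonneg _) (by linarith)
    rw [Real.norm_eq_abs, Real.norm_eq_abs, abs_of_pos (hlam n), abs_of_nonneg h0,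
      one_mul] at h
    exact h.trans (min_le_left _ _)
  have hE6gen : ∀ c : ℝ, 0 < c → ∀ᶠ n in atTop,
      (k' n : ℝ) ≤ c * (lam n ^ 2 * n / Real.log n ^ 3) := by
    intro c hc
    filter_upwards [hAK2.def hc, hlogNev 6] with n h hl
    have hr : (0:ℝ) ≤ lam n ^ 2 * n / Real.log n ^ 3 :=
      div_nonneg (by positivity) (pow_nonneg (by linarith) 3)
    rwa [Real.norm_eq_abs, Real.norm_eq_abs, abs_of_nonneg (Nat.cast_nonneg _),
      abs_of_nonneg hr] at h
  have hE8gen : ∀ c : ℝ, 0 < c → ∀ᶠ n in atTop,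
      (k n : ℝ) ^ 2 / (lam n ^ 2 * n) * Real.log ((n : ℝ) / (k n : ℝ)) ^ 2 /
        Real.log (lam n * n / (k n * Real.log ((n : ℝ) / (k n : ℝ)))) ≤ c * (k' n : ℝ) := by
    intro c hc
    filter_upwards [hAK1.def hc] with n h
    rw [Real.norm_eq_abs, Real.norm_eq_abs, abs_of_nonneg (Nat.cast_nonneg (k' n) : (0:ℝ) ≤ (k' n : ℝ))] at h
    exact (le_abs_self _).trans h
  have hE7 : ∀ᶠ n in atTop, (k n : ℝ) / n * Real.log ((n:ℝ) / (k n : ℝ)) ≤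
      Real.exp (-2) * lam n := by
    filter_upwards [hAL1.def (Real.exp_pos (-2))] with n h
    rw [Real.norm_eq_abs, Real.norm_eq_abs, abs_of_pos (hlam n)] at h
    exact (le_abs_self _).trans h
  have hE6 : ∀ᶠ n in atTop, (k' n : ℝ) ≤ lam n ^ 2 * n / Real.log n ^ 3 := by
    filter_upwards [hE6gen 1 one_pos] with n h
    linarith
  have hE8 : ∀ᶠ n in atTop,
      (k n : ℝ) ^ 2 / (lam n ^ 2 * n) * Real.log ((n : ℝ) / (k n : ℝ)) ^ 2 /
        Real.log (lam n * n / (k n * Real.log ((n : ℝ) / (k n : ℝ)))) ≤ (k' n : ℝ) := by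
    filter_upwards [hE8gen 1 one_pos] with n h
    linarith
  have hcore : ∀ᶠ n : ℕ in atTop,
      0 ≤ lcR n (k n) (k' n) (lam n) ∧
      lcR n (k n) (k' n) (lam n) ≤ 1 / (2 * lam n) * (k n : ℝ) *
        Real.sqrt ((k' n : ℝ) / n * Real.log n) ∧
      lcR n (k n) (k' n) (lam n) = (k n : ℝ) * (k' n : ℝ) / n *
        (1 / (2 * lam n) * Real.sqrt ((n:ℝ) / ((k' n : ℝ) * Real.log ((n:ℝ) / (k' n : ℝ)))) *
          Real.log (1 / (2 * lam n) *
            Real.sqrt ((n:ℝ) / ((k' n : ℝ) * Real.log ((n:ℝ) / (k' n : ℝ)))))) ∧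
      Real.log n / 2 ≤ 1 / (2 * lam n) *
        Real.sqrt ((n:ℝ) / ((k' n : ℝ) * Real.log ((n:ℝ) / (k' n : ℝ)))) ∧
      1 ≤ Real.log (1 / (2 * lam n) *
        Real.sqrt ((n:ℝ) / ((k' n : ℝ) * Real.log ((n:ℝ) / (k' n : ℝ))))) ∧
      lcR n (k n) (k' n) (lam n) ^ 2 ≤ 3 / 4 *
        ((k n : ℝ) ^ 2 / (lam n ^ 2 * n) * Real.log ((n : ℝ) / (k n : ℝ)) ^ 2 /
          Real.log (lam n * n / (k n * Real.log ((n : ℝ) / (k n : ℝ)))) * (k' n : ℝ)) := by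
    filter_upwards [hk1, hk'1, hk3, hlam1, hlogNev 6, hE6, hE7, hE8]
      with n h1 h2 h3 h4 h5 hh6 hh7 hh8
    exact stmt7_core _ _ _ _ (hlam n) h4 h1 h2 h3 h5 hh6 hh7 hh8
  refine ⟨?_, ?_, ?_⟩
  · -- part 1
    rw [isBigO_iff]
    refine ⟨1, ?_⟩
    filter_upwards [hcore] with n hc
    obtain ⟨h0, hB, -, -, -, -⟩ := hc
    rw [Real.norm_eq_abs, Real.norm_eq_abs, hellc n, abs_of_nonneg h0, one_mul]
    have h1 : (1:ℝ) / (2 * lam n) ≤ 1 / lam n :=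
      div_le_div_of_nonneg_left one_pos.le (hlam n) (by linarith [hlam n])
    calc lcR n (k n) (k' n) (lam n)
        ≤ 1 / (2 * lam n) * (k n : ℝ) * Real.sqrt ((k' n : ℝ) / n * Real.log n) := hB
    _ ≤ 1 / lam n * (k n : ℝ) * Real.sqrt ((k' n : ℝ) / n * Real.log n) :=
        mul_le_mul_of_nonneg_right
          (mul_le_mul_of_nonneg_right h1 (Nat.cast_nonneg _)) (Real.sqrt_nonneg _)
    _ ≤ |1 / lam n * (k n : ℝ) * Real.sqrt ((k' n : ℝ) / n * Real.log n)| := le_abs_self _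
  · -- part 2
    rw [isLittleO_iff]
    intro c hc
    filter_upwards [hcore, hlogNev (2 / c), hk1] with n hcm hlc hkk
    obtain ⟨h0, -, hId, hAge, hlA, -⟩ := hcm
    set A := 1 / (2 * lam n) *
      Real.sqrt ((n:ℝ) / ((k' n : ℝ) * Real.log ((n:ℝ) / (k' n : ℝ)))) with hAdef
    have hA1c : 1 / c ≤ A := by
      calc 1 / c = (2 / c) / 2 := by ring
      _ ≤ Real.log n / 2 := by linarith
      _ ≤ A := hAge
    have hA0 : 0 ≤ A := le_trans (by positivity) hA1c
    have h1 : 1 / c ≤ A * Real.log A :=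
      hA1c.trans (le_mul_of_one_le_right hA0 hlA)
    rw [Real.norm_eq_abs, Real.norm_eq_abs, hellc n, abs_of_nonneg h0]
    have hKKN : (0:ℝ) ≤ (k n : ℝ) * (k' n : ℝ) / n := by positivity
    rw [abs_of_nonneg (by positivity : (0:ℝ) ≤ (k' n : ℝ) * (k n : ℝ) / n)]
    calc (k' n : ℝ) * (k n : ℝ) / n
        = c * ((k n : ℝ) * (k' n : ℝ) / n) * (1 / c) := by
          have hN0 : (0:ℝ) < n :=
            lt_of_lt_of_le one_pos (hkk.trans (by exact_mod_cast hkle n))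
          field_simp
    _ ≤ c * ((k n : ℝ) * (k' n : ℝ) / n) * (A * Real.log A) :=
        mul_le_mul_of_nonneg_left h1 (by positivity)
    _ = c * lcR n (k n) (k' n) (lam n) := by rw [hId]; ring
  · -- part 3
    rw [isLittleO_iff]
    intro c hc
    filter_upwards [hcore, hE6gen (c ^ 2) (by positivity), hE8gen (4 * c ^ 2 / 3) (by positivity),
      hk1, hk'1, hlogNev 6, hlam1] with n hcm hc2 hc8 hk hk' hl6 hl1
    obtain ⟨h0, hB, -, -, -, hE⟩ := hcm
    have hlogN0 : (0:ℝ) < Real.log n := by linarith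
    have hlam0 := hlam n
    have hkN : (k n : ℝ) ≤ n := by exact_mod_cast hkle n
    have hN0 : (0:ℝ) < n := lt_of_lt_of_le one_pos (hk.trans hkN)
    have hK'0 : (0:ℝ) < (k' n : ℝ) := lt_of_lt_of_le one_pos hk'
    have h1 : (k' n : ℝ) * Real.log n ^ 3 ≤ c ^ 2 * lam n ^ 2 * n := by
      rw [show c ^ 2 * (lam n ^ 2 * (n:ℝ) / Real.log n ^ 3)
          = c ^ 2 * lam n ^ 2 * (n:ℝ) / Real.log n ^ 3 by ring,
        le_div_iff₀ (pow_pos hlogN0 3)] at hc2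
      exact hc2
    have harg : (k' n : ℝ) / n * Real.log n ≤ (c * lam n / Real.log n) ^ 2 := by
      rw [div_mul_eq_mul_div, div_pow, div_le_div_iff₀ hN0 (by positivity)]
      calc (k' n : ℝ) * Real.log n * Real.log n ^ 2 = (k' n : ℝ) * Real.log n ^ 3 := by ring
      _ ≤ c ^ 2 * lam n ^ 2 * n := h1
      _ = (c * lam n) ^ 2 * n := by ring
    have hsq : Real.sqrt ((k' n : ℝ) / n * Real.log n) ≤ c * lam n / Real.log n := by
      have h2 := Real.sqrt_le_sqrt harg
      rwa [Real.sqrt_sq (by positivity)] at h2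
    have hck : lcR n (k n) (k' n) (lam n) ≤ c * k n := by
      calc lcR n (k n) (k' n) (lam n)
          ≤ 1 / (2 * lam n) * (k n : ℝ) * Real.sqrt ((k' n : ℝ) / n * Real.log n) := hB
      _ ≤ 1 / (2 * lam n) * (k n : ℝ) * (c * lam n / Real.log n) :=
          mul_le_mul_of_nonneg_left hsq (by positivity)
      _ = c * (k n : ℝ) * (1 / (2 * Real.log n)) := by
          field_simp
      _ ≤ c * (k n : ℝ) * 1 := by
          apply mul_le_mul_of_nonneg_left _ (by positivity)
          rw [div_le_one (by linarith)]
          linarith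
      _ = c * (k n : ℝ) := mul_one _
    have hck' : lcR n (k n) (k' n) (lam n) ≤ c * k' n := by
      have h2 : lcR n (k n) (k' n) (lam n) ^ 2 ≤ (c * (k' n : ℝ)) ^ 2 := by
        calc lcR n (k n) (k' n) (lam n) ^ 2
            ≤ 3 / 4 * ((k n : ℝ) ^ 2 / (lam n ^ 2 * n) * Real.log ((n : ℝ) / (k n : ℝ)) ^ 2 /
              Real.log (lam n * n / (k n * Real.log ((n : ℝ) / (k n : ℝ)))) * (k' n : ℝ)) := hE
        _ ≤ 3 / 4 * (4 * c ^ 2 / 3 * (k' n : ℝ) * (k' n : ℝ)) := by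
            apply mul_le_mul_of_nonneg_left _ (by norm_num)
            exact mul_le_mul_of_nonneg_right hc8 hK'0.le
        _ = (c * (k' n : ℝ)) ^ 2 := by ring
      have h3 := Real.sqrt_le_sqrt h2
      rwa [Real.sqrt_sq h0, Real.sqrt_sq (by positivity)] at h3
    rw [Real.norm_eq_abs, Real.norm_eq_abs, hellc n, abs_of_nonneg h0]
    have hmin : |min ((k n : ℝ)) ((k' n : ℝ))| = min ((k n : ℝ)) ((k' n : ℝ)) :=
      abs_of_nonneg (le_min (Nat.cast_nonneg _) (Nat.cast_nonneg _))
    rw [hmin]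
    rcases le_total (k n) (k' n) with h | h
    · rw [min_eq_left (by exact_mod_cast h : (k n : ℝ) ≤ (k' n : ℝ))]
      exact hck
    · rw [min_eq_right (by exact_mod_cast h : (k' n : ℝ) ≤ (k n : ℝ))]
      exact hck'
end

section
/- Under Assumptions (λ) and (k') with k, k' = o(n), for arbitrary ε > 0 the following holds for sufficiently large n: for every integer ℓ with ⌊kk'/n⌋ ≤ ℓ and ℓ = o(min{k, k'}), Γ_{k'}(ℓ+1) − Γ_{k'}(ℓ) ≤ (1+ε)·√( k'/(n·log(n/k')) )·log( (ℓ+1)·n / (k'·k) ) ≤ (1+ε)·√( (k'/n)·log(n/k') ). -/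
open MeasureTheory ProbabilityTheory Filter Asymptotics

lemma normclean {a b c : ℝ} (hb : 0 ≤ b) (h : ‖a‖ ≤ c * ‖b‖) : a ≤ c * b := by
  rw [Real.norm_eq_abs, Real.norm_eq_abs, abs_of_nonneg hb] at h
  exact (le_abs_self a).trans h

lemma choose_log_lb (m r : ℕ) (hr : 0 < r) (hrm : r ≤ m) :
    (r : ℝ) * Real.log (((m + 1 - r : ℕ) : ℝ) / (r : ℝ)) ≤ Real.log (m.choose r) := by
  have h0 : (0:ℝ) < ((m + 1 - r : ℕ) : ℝ) := by
    have : 0 < m + 1 - r := by omega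
    exact_mod_cast this
  have hrpos : (0:ℝ) < (r:ℝ) := by exact_mod_cast hr
  have hfact : ((r.factorial : ℝ)) ≤ (r:ℝ)^r := by exact_mod_cast Nat.factorial_le_pow r
  have hfactpos : (0:ℝ) < (r.factorial : ℝ) := by exact_mod_cast r.factorial_pos
  have h2 : (((m + 1 - r : ℕ) : ℝ))^r / (r:ℝ)^r ≤ ((m + 1 - r : ℕ) : ℝ)^r / (r.factorial : ℝ) := by
    apply div_le_div_of_nonneg_left (by positivity) hfactpos hfact
  have h3 := Nat.pow_le_choose (α := ℝ) r m
  have h4 : ((((m + 1 - r : ℕ) : ℝ))/(r:ℝ))^r ≤ (m.choose r : ℝ) := by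
    rw [div_pow]; exact le_trans h2 h3
  have h5 : Real.log (((((m + 1 - r : ℕ) : ℝ))/(r:ℝ))^r) ≤ Real.log (m.choose r) :=
    Real.log_le_log (by positivity) h4
  rwa [Real.log_pow] at h5

lemma eqtrick (n' k₀ S Q' t e : ℝ) (hn : n' ≠ 0) (hS : S ≠ 0) (he : 1 + e ≠ 0)
    (hQ : Q' * (n' * S) = k₀) : k₀ * (t / n') / (S * (1 / (1 + e))) = (1 + e) * Q' * t := by
  rw [← hQ]; field_simp

lemma sqrt_diff_le (x y : ℝ) (hy : 0 ≤ y) (hxy : y ≤ x) (hsy : 0 < Real.sqrt y) :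
    Real.sqrt x - Real.sqrt y ≤ (x - y) / (2 * Real.sqrt y) := by
  rw [le_div_iff₀ (by linarith : (0:ℝ) < 2 * Real.sqrt y)]
  nlinarith [Real.sq_sqrt (hy.trans hxy), Real.sq_sqrt hy,
    sq_nonneg (Real.sqrt x - Real.sqrt y)]

lemma key_ineq (N K K' Lc lam ε Xa Xb T L' : ℝ)
    (hN : 0 < N) (hK : 0 < K) (hK' : 0 < K') (hLc : 0 ≤ Lc) (hε : 0 < ε) (hlam : 0 < lam)
    (hL' : 0 < L') (hT : 0 < T)
    (hXb : K' * L' / ((1 + ε) ^ 2 * N) ≤ Xb)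
    (hXdiff : Xa - Xb ≤ (T + (Real.log (K / (K - Lc)) + Real.log (K' / (K' - Lc)))) / N)
    (hKsub : 0 < K - Lc) (hK'sub : 0 < K' - Lc)
    (h2lk : 2 * Lc ≤ K) (h2lk' : 2 * Lc ≤ K')
    (hQ6 : K' / (N * L') ≤ (lam / (2 * (1 + ε))) ^ 2)
    (hQ7 : K' / (N * L') ≤ (lam * K' / (2 * (1 + ε) * K)) ^ 2) :
    2 * K' * (Real.sqrt Xa - Real.sqrt Xb) ≤
      lam * (2 * Lc + 1) / K + (1 + ε) * Real.sqrt (K' / (N * L')) * T := by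
  have hεp : (0:ℝ) < 1 + ε := by linarith
  have hQnn : 0 ≤ Real.sqrt (K' / (N * L')) := Real.sqrt_nonneg _
  have hQ1 : Real.sqrt (K' / (N * L')) ≤ lam / (2 * (1 + ε)) := by
    have h := Real.sqrt_le_sqrt hQ6
    rwa [Real.sqrt_sq (by positivity)] at h
  have hQ2 : Real.sqrt (K' / (N * L')) ≤ lam * K' / (2 * (1 + ε) * K) := by
    have h := Real.sqrt_le_sqrt hQ7
    rwa [Real.sqrt_sq (by positivity)] at h
  have hQa : (1 + ε) * Real.sqrt (K' / (N * L')) ≤ lam / 2 := by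
    have h := mul_le_mul_of_nonneg_left hQ1 hεp.le
    rwa [show (1 + ε) * (lam / (2 * (1 + ε))) = lam / 2 from by field_simp] at h
  have hQb : (1 + ε) * Real.sqrt (K' / (N * L')) ≤ lam * K' / (2 * K) := by
    have h := mul_le_mul_of_nonneg_left hQ2 hεp.le
    rwa [show (1 + ε) * (lam * K' / (2 * (1 + ε) * K)) = lam * K' / (2 * K) from by
      field_simp] at h
  have hη1 : Real.log (K / (K - Lc)) ≤ 2 * Lc / K := by
    have h1 := Real.log_le_sub_one_of_pos (show (0:ℝ) < K / (K - Lc) by positivity)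
    have h2 : K / (K - Lc) - 1 = Lc / (K - Lc) := by field_simp; ring
    have h3 : Lc / (K - Lc) ≤ 2 * Lc / K := by
      rw [div_le_div_iff₀ hKsub hK]; nlinarith
    linarith
  have hη2 : Real.log (K' / (K' - Lc)) ≤ 2 * Lc / K' := by
    have h1 := Real.log_le_sub_one_of_pos (show (0:ℝ) < K' / (K' - Lc) by positivity)
    have h2 : K' / (K' - Lc) - 1 = Lc / (K' - Lc) := by field_simp; ring
    have h3 : Lc / (K' - Lc) ≤ 2 * Lc / K' := by
      rw [div_le_div_iff₀ hK'sub hK']; nlinarith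
    linarith
  have hη1nn : 0 ≤ Real.log (K / (K - Lc)) := by
    apply Real.log_nonneg; rw [le_div_iff₀ hKsub]; linarith
  have hη2nn : 0 ≤ Real.log (K' / (K' - Lc)) := by
    apply Real.log_nonneg; rw [le_div_iff₀ hK'sub]; linarith
  have hetabound : (1 + ε) * Real.sqrt (K' / (N * L')) *
      (Real.log (K / (K - Lc)) + Real.log (K' / (K' - Lc))) ≤ lam * (2 * Lc + 1) / K := by
    have t1 : (1 + ε) * Real.sqrt (K' / (N * L')) * Real.log (K / (K - Lc)) ≤
        lam / 2 * (2 * Lc / K) := mul_le_mul hQa hη1 hη1nn (by positivity)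
    have t2 : (1 + ε) * Real.sqrt (K' / (N * L')) * Real.log (K' / (K' - Lc)) ≤
        lam * K' / (2 * K) * (2 * Lc / K') := mul_le_mul hQb hη2 hη2nn (by positivity)
    have e1 : lam / 2 * (2 * Lc / K) = lam * Lc / K := by ring
    have e2 : lam * K' / (2 * K) * (2 * Lc / K') = lam * Lc / K := by
      field_simp
    have e4 : 0 < lam / K := by positivity
    rw [e1] at t1; rw [e2] at t2
    have e3 : lam * (2 * Lc + 1) / K = lam * Lc / K + lam * Lc / K + lam / K := by ring
    linarith
  rcases le_or_gt Xa Xb with hc | hc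
  · have hs := Real.sqrt_le_sqrt hc
    have h0 : 2 * K' * (Real.sqrt Xa - Real.sqrt Xb) ≤ 0 :=
      mul_nonpos_of_nonneg_of_nonpos (by positivity) (by linarith)
    have h1 : 0 < lam * (2 * Lc + 1) / K := by positivity
    have h2 : 0 ≤ (1 + ε) * Real.sqrt (K' / (N * L')) * T :=
      mul_nonneg (mul_nonneg hεp.le hQnn) hT.le
    linarith
  · have hXbpos : 0 < Xb := lt_of_lt_of_le (by positivity) hXb
    have hXapos : 0 < Xa := lt_trans hXbpos hc
    have hsb : 0 < Real.sqrt Xb := Real.sqrt_pos.mpr hXbpos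
    have hdiff : Real.sqrt Xa - Real.sqrt Xb ≤ (Xa - Xb) / (2 * Real.sqrt Xb) :=
      sqrt_diff_le Xa Xb hXbpos.le hc.le hsb
    have hSpos : 0 < Real.sqrt (K' * L' / N) :=
      Real.sqrt_pos.mpr (div_pos (mul_pos hK' hL') hN)
    have hsbB : Real.sqrt (K' * L' / N) * (1 / (1 + ε)) ≤ Real.sqrt Xb := by
      have h1 : Real.sqrt (K' * L' / ((1 + ε) ^ 2 * N)) ≤ Real.sqrt Xb := Real.sqrt_le_sqrt hXb
      rwa [show K' * L' / ((1 + ε) ^ 2 * N) = K' * L' / N * (1 / (1 + ε)) ^ 2 from by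
            field_simp,
        Real.sqrt_mul (le_of_lt (div_pos (mul_pos hK' hL') hN)), Real.sqrt_sq (by positivity)]
        at h1
    have hQeq : Real.sqrt (K' / (N * L')) * (N * Real.sqrt (K' * L' / N)) = K' := by
      have h1 : Real.sqrt (K' / (N * L')) * Real.sqrt (K' * L' / N) =
          Real.sqrt (K' / (N * L') * (K' * L' / N)) :=
        (Real.sqrt_mul (le_of_lt (div_pos hK' (mul_pos hN hL'))) _).symm
      have h2 : K' / (N * L') * (K' * L' / N) = (K' / N) ^ 2 := by field_simp
      have h3 : Real.sqrt ((K' / N) ^ 2) = K' / N := Real.sqrt_sq (by positivity)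
      calc Real.sqrt (K' / (N * L')) * (N * Real.sqrt (K' * L' / N))
          = N * (Real.sqrt (K' / (N * L')) * Real.sqrt (K' * L' / N)) := by ring
        _ = N * (K' / N) := by rw [h1, h2, h3]
        _ = K' := by field_simp
    have hTη : 0 ≤ T + (Real.log (K / (K - Lc)) + Real.log (K' / (K' - Lc))) := by linarith
    have main : 2 * K' * (Real.sqrt Xa - Real.sqrt Xb) ≤
        (1 + ε) * Real.sqrt (K' / (N * L')) *
          (T + (Real.log (K / (K - Lc)) + Real.log (K' / (K' - Lc)))) := by
      calc 2 * K' * (Real.sqrt Xa - Real.sqrt Xb)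
          ≤ 2 * K' * ((Xa - Xb) / (2 * Real.sqrt Xb)) :=
            mul_le_mul_of_nonneg_left hdiff (by positivity)
        _ = K' * (Xa - Xb) / Real.sqrt Xb := by field_simp
        _ ≤ K' * ((T + (Real.log (K / (K - Lc)) + Real.log (K' / (K' - Lc)))) / N) /
            Real.sqrt Xb := by
            apply div_le_div_of_nonneg_right _ hsb.le
            exact mul_le_mul_of_nonneg_left hXdiff hK'.le
        _ ≤ K' * ((T + (Real.log (K / (K - Lc)) + Real.log (K' / (K' - Lc)))) / N) /
            (Real.sqrt (K' * L' / N) * (1 / (1 + ε))) := by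
            apply div_le_div_of_nonneg_left
              (mul_nonneg hK'.le (div_nonneg hTη hN.le))
              (mul_pos hSpos (by positivity)) hsbB
        _ = (1 + ε) * Real.sqrt (K' / (N * L')) *
            (T + (Real.log (K / (K - Lc)) + Real.log (K' / (K' - Lc)))) :=
            eqtrick N K' (Real.sqrt (K' * L' / N)) (Real.sqrt (K' / (N * L')))
              (T + (Real.log (K / (K - Lc)) + Real.log (K' / (K' - Lc)))) ε
              hN.ne' hSpos.ne' hεp.ne' hQeq
    linarith

lemma q6aux (x nl lam ε : ℝ) (hx : 0 ≤ x) (hnl : 0 < nl) (hε : 0 < ε)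
    (h6 : 16*(1+ε)^2*x ≤ lam^2*nl) : x/nl ≤ (lam/(2*(1+ε)))^2 := by
  have hεp : (0:ℝ) < 1 + ε := by linarith
  rw [div_pow, div_le_div_iff₀ hnl (by positivity)]
  nlinarith [hx, hε.le, mul_nonneg hε.le hx, mul_nonneg (mul_nonneg hε.le hε.le) hx]

lemma q7aux (x nl lam ε Kv : ℝ) (hx : 0 ≤ x) (hnl : 0 < nl) (hε : 0 < ε) (hK : 0 < Kv)
    (h7 : 16*(1+ε)^2*Kv^2 ≤ lam^2*nl*x) : x/nl ≤ (lam*x/(2*(1+ε)*Kv))^2 := by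
  have hεp : (0:ℝ) < 1 + ε := by linarith
  rw [div_pow, div_le_div_iff₀ hnl (by positivity)]
  have h := mul_le_mul_of_nonneg_right h7 hx
  nlinarith [h, mul_nonneg (mul_nonneg hε.le (sq_nonneg Kv)) hx,
    mul_nonneg (mul_nonneg (mul_nonneg hε.le hε.le) (sq_nonneg Kv)) hx,
    mul_nonneg (sq_nonneg Kv) hx]

set_option maxHeartbeats 2000000 in
lemma core (n k k' l : ℕ) (lam ε : ℝ)
    (hε : 0 < ε) (hlam : 0 < lam)
    (h4k : 4*k ≤ n) (h4k' : 4*k' ≤ n) (h8 : 8 ≤ k) (h8' : 8 ≤ k') (h8l : 8*l ≤ min k k')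
    (hlb : k*k' < (l+1)*n)
    (hdel : (l:ℝ) + 1 ≤ ε/(1+ε) * k')
    (hL1 : (1+ε)/ε ≤ Real.log ((n:ℝ)/(k':ℝ)))
    (h6 : 16*(1+ε)^2*(k':ℝ) ≤ lam^2*n*Real.log ((n:ℝ)/(k':ℝ)))
    (h7 : 16*(1+ε)^2*(k:ℝ)^2 ≤ lam^2*n*Real.log ((n:ℝ)/(k':ℝ)) * k') :
    gammaCurve n k k' lam (l + 1) - gammaCurve n k k' lam l ≤
        (1 + ε) * Real.sqrt ((k' : ℝ) / ((n : ℝ) * Real.log ((n : ℝ) / (k' : ℝ)))) *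
          Real.log (((l : ℝ) + 1) * (n : ℝ) / ((k' : ℝ) * (k : ℝ))) ∧
      (1 + ε) * Real.sqrt ((k' : ℝ) / ((n : ℝ) * Real.log ((n : ℝ) / (k' : ℝ)))) *
          Real.log (((l : ℝ) + 1) * (n : ℝ) / ((k' : ℝ) * (k : ℝ))) ≤
        (1 + ε) * Real.sqrt ((k' : ℝ) / (n : ℝ) * Real.log ((n : ℝ) / (k' : ℝ))) := by
  -- nat facts
  have h8lk : 8*l ≤ k := le_trans h8l (Nat.min_le_left _ _)
  have h8lk' : 8*l ≤ k' := le_trans h8l (Nat.min_le_right _ _)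
  have hl1k : l + 1 ≤ k := by omega
  have hl2k' : l + 2 ≤ k' := by omega
  have hkn : k ≤ n := by omega
  have hk'nk : k' ≤ n - k := by omega
  have hεp : (0:ℝ) < 1 + ε := by linarith
  have hεne : (1+ε) ≠ 0 := ne_of_gt hεp
  -- real positivity
  have hN : (0:ℝ) < n := by
    have h32 : (32:ℝ) ≤ n := by exact_mod_cast (by omega : 32 ≤ n)
    linarith only [h32]
  have hK : (0:ℝ) < k := by
    have hx : (8:ℝ) ≤ k := by exact_mod_cast h8
    linarith only [hx]
  have hK' : (0:ℝ) < k' := by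
    have hx : (8:ℝ) ≤ k' := by exact_mod_cast h8'
    linarith only [hx]
  have hLc : (0:ℝ) ≤ l := Nat.cast_nonneg l
  have h2lkR : 2*(l:ℝ) ≤ k := by exact_mod_cast (by omega : 2*l ≤ k)
  have h2lk'R : 2*(l:ℝ) ≤ k' := by exact_mod_cast (by omega : 2*l ≤ k')
  have hKsub : (0:ℝ) < (k:ℝ) - l := by linarith only [h2lkR, hK, hLc]
  have hK'sub : (0:ℝ) < (k':ℝ) - l := by linarith only [h2lk'R, hK', hLc]
  have hNne : (n:ℝ) ≠ 0 := ne_of_gt hN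
  have hKne : (k:ℝ) ≠ 0 := ne_of_gt hK
  have hK'ne : (k':ℝ) ≠ 0 := ne_of_gt hK'
  -- L'
  have hεε : (1:ℝ) ≤ (1+ε)/ε := by
    rw [le_div_iff₀ hε]; linarith only [hε]
  have hL'1 : (1:ℝ) ≤ Real.log ((n:ℝ)/(k':ℝ)) := le_trans hεε hL1
  have hL'pos : (0:ℝ) < Real.log ((n:ℝ)/(k':ℝ)) := by linarith only [hL'1]
  have hL'ne : Real.log ((n:ℝ)/(k':ℝ)) ≠ 0 := ne_of_gt hL'pos
  -- choose positivity
  have ha1 : (0:ℝ) < ((k.choose l : ℕ) : ℝ) := by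
    exact_mod_cast Nat.choose_pos (by omega : l ≤ k)
  have ha2 : (0:ℝ) < (((n-k).choose (k'-l) : ℕ) : ℝ) := by
    exact_mod_cast Nat.choose_pos (by omega : k'-l ≤ n-k)
  have hb1 : (0:ℝ) < ((k.choose (l+1) : ℕ) : ℝ) := by
    exact_mod_cast Nat.choose_pos hl1k
  have hb2 : (0:ℝ) < (((n-k).choose (k'-(l+1)) : ℕ) : ℝ) := by
    exact_mod_cast Nat.choose_pos (by omega : k'-(l+1) ≤ n-k)
  have hb1log : (0:ℝ) ≤ Real.log ((k.choose (l+1) : ℕ) : ℝ) := by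
    apply Real.log_nonneg
    exact_mod_cast Nat.one_le_iff_ne_zero.mpr (Nat.choose_pos hl1k).ne'
  -- T positive
  have hTarg : (1:ℝ) < ((l:ℝ)+1) * n / ((k':ℝ) * k) := by
    rw [one_lt_div (by positivity)]
    have : ((k*k' : ℕ) : ℝ) < (((l+1)*n : ℕ) : ℝ) := by exact_mod_cast hlb
    push_cast at this
    linarith only [this]
  have hTpos : (0:ℝ) < Real.log (((l:ℝ)+1) * n / ((k':ℝ) * k)) := Real.log_pos hTarg
  have hQnn : (0:ℝ) ≤ Real.sqrt ((k':ℝ) / ((n:ℝ) * Real.log ((n:ℝ)/(k':ℝ)))) :=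
    Real.sqrt_nonneg _
  constructor
  · -- main inequality
    have hQ6 : (k':ℝ) / ((n:ℝ) * Real.log ((n:ℝ)/(k':ℝ))) ≤ (lam / (2*(1+ε)))^2 :=
      q6aux _ _ _ _ hK'.le (mul_pos hN hL'pos) hε (by linarith only [h6])
    have hQ7 : (k':ℝ) / ((n:ℝ) * Real.log ((n:ℝ)/(k':ℝ))) ≤ (lam*(k':ℝ)/(2*(1+ε)*(k:ℝ)))^2 :=
      q7aux _ _ _ _ _ hK'.le (mul_pos hN hL'pos) hε hK (by linarith only [h7])
    -- log expansion equalities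
    have eXa : 1/(n:ℝ) * Real.log ((k.choose l : ℝ) * ((n-k).choose (k'-l) : ℝ)) =
        1/(n:ℝ) * (Real.log (k.choose l : ℝ) + Real.log ((n-k).choose (k'-l) : ℝ)) := by
      rw [Real.log_mul ha1.ne' ha2.ne']
    have eXb : 1/(n:ℝ) * Real.log ((k.choose (l+1) : ℝ) * ((n-k).choose (k'-(l+1)) : ℝ)) =
        1/(n:ℝ) * (Real.log (k.choose (l+1) : ℝ) + Real.log ((n-k).choose (k'-(l+1)) : ℝ)) := by
      rw [Real.log_mul hb1.ne' hb2.ne']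
    -- identity 1
    have hc1 : ((k.choose (l+1) : ℕ):ℝ) * ((l:ℝ)+1) = ((k.choose l : ℕ):ℝ) * ((k:ℝ) - (l:ℝ)) := by
      have h := congrArg (fun x : ℕ => (x:ℝ)) (Nat.choose_succ_right_eq k l)
      push_cast [Nat.cast_sub (show l ≤ k by omega)] at h
      linarith only [h]
    have I1 : Real.log (k.choose (l+1) : ℝ) + Real.log ((l:ℝ)+1) =
        Real.log (k.choose l : ℝ) + Real.log ((k:ℝ) - (l:ℝ)) := by
      have h := congrArg Real.log hc1
      rwa [Real.log_mul hb1.ne' (by positivity), Real.log_mul ha1.ne' hKsub.ne'] at h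
    -- identity 2
    have hr1 : k' - (l+1) + 1 = k' - l := by omega
    have hnat2 : (n-k).choose (k'-l) * (k'-l) =
        (n-k).choose (k'-(l+1)) * ((n-k) - (k'-(l+1))) := by
      have h := Nat.choose_succ_right_eq (n-k) (k'-(l+1))
      rwa [hr1] at h
    have hE1 : (0:ℝ) < (((n-k) - (k'-(l+1)) : ℕ) : ℝ) := by
      exact_mod_cast (by omega : 0 < (n-k) - (k'-(l+1)))
    have hc2 : (((n-k).choose (k'-l) : ℕ):ℝ) * ((k':ℝ) - (l:ℝ)) =
        (((n-k).choose (k'-(l+1)) : ℕ):ℝ) * (((n-k) - (k'-(l+1)) : ℕ) : ℝ) := by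
      have h := congrArg (fun x : ℕ => (x:ℝ)) hnat2
      push_cast [Nat.cast_sub (show l ≤ k' by omega)] at h
      linarith only [h]
    have I2 : Real.log ((n-k).choose (k'-l) : ℝ) + Real.log ((k':ℝ) - (l:ℝ)) =
        Real.log ((n-k).choose (k'-(l+1)) : ℝ) + Real.log (((n-k) - (k'-(l+1)) : ℕ) : ℝ) := by
      have h := congrArg Real.log hc2
      rwa [Real.log_mul ha2.ne' hK'sub.ne', Real.log_mul hb2.ne' hE1.ne'] at h
    have hEN : Real.log (((n-k) - (k'-(l+1)) : ℕ) : ℝ) ≤ Real.log (n:ℝ) :=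
      Real.log_le_log hE1 (by exact_mod_cast (by omega : (n-k) - (k'-(l+1)) ≤ n))
    have hTexp : Real.log (((l:ℝ)+1) * (n:ℝ) / ((k':ℝ) * (k:ℝ))) =
        Real.log ((l:ℝ)+1) + Real.log (n:ℝ) - Real.log (k':ℝ) - Real.log (k:ℝ) := by
      rw [Real.log_div (by positivity) (by positivity), Real.log_mul (by positivity) hNne,
        Real.log_mul hK'ne hKne]
      ring
    have hη1exp : Real.log ((k:ℝ)/((k:ℝ) - (l:ℝ))) =
        Real.log (k:ℝ) - Real.log ((k:ℝ) - (l:ℝ)) := Real.log_div hKne hKsub.ne'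
    have hη2exp : Real.log ((k':ℝ)/((k':ℝ) - (l:ℝ))) =
        Real.log (k':ℝ) - Real.log ((k':ℝ) - (l:ℝ)) := Real.log_div hK'ne hK'sub.ne'
    have hD : (Real.log (k.choose l : ℝ) + Real.log ((n-k).choose (k'-l) : ℝ)) -
        (Real.log (k.choose (l+1) : ℝ) + Real.log ((n-k).choose (k'-(l+1)) : ℝ)) ≤
        Real.log (((l:ℝ)+1) * (n:ℝ) / ((k':ℝ) * (k:ℝ))) +
          (Real.log ((k:ℝ)/((k:ℝ) - (l:ℝ))) + Real.log ((k':ℝ)/((k':ℝ) - (l:ℝ)))) := by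
      rw [hTexp, hη1exp, hη2exp]
      linarith only [I1, I2, hEN]
    have hXdiff : 1/(n:ℝ) * Real.log ((k.choose l : ℝ) * ((n-k).choose (k'-l) : ℝ)) -
        1/(n:ℝ) * Real.log ((k.choose (l+1) : ℝ) * ((n-k).choose (k'-(l+1)) : ℝ)) ≤
        (Real.log (((l:ℝ)+1) * (n:ℝ) / ((k':ℝ) * (k:ℝ))) +
          (Real.log ((k:ℝ)/((k:ℝ) - (l:ℝ))) + Real.log ((k':ℝ)/((k':ℝ) - (l:ℝ))))) / (n:ℝ) := by
      rw [eXa, eXb]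
      have h := mul_le_mul_of_nonneg_left hD (by positivity : (0:ℝ) ≤ 1/(n:ℝ))
      have hexp : (Real.log (((l:ℝ)+1) * (n:ℝ) / ((k':ℝ) * (k:ℝ))) +
          (Real.log ((k:ℝ)/((k:ℝ) - (l:ℝ))) + Real.log ((k':ℝ)/((k':ℝ) - (l:ℝ))))) / (n:ℝ) =
          1/(n:ℝ) * (Real.log (((l:ℝ)+1) * (n:ℝ) / ((k':ℝ) * (k:ℝ))) +
          (Real.log ((k:ℝ)/((k:ℝ) - (l:ℝ))) + Real.log ((k':ℝ)/((k':ℝ) - (l:ℝ))))) := by ring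
      rw [hexp]
      linarith only [h]
    -- lower bound on Xb
    have hml := choose_log_lb (n-k) (k'-(l+1)) (by omega) (by omega)
    have hrcast : ((k'-(l+1) : ℕ):ℝ) = (k':ℝ) - ((l:ℝ)+1) := by
      push_cast [Nat.cast_sub (show l+1 ≤ k' by omega)]
      ring
    have hGlow : (n:ℝ) ≤ 2 * ((n - k + 1 - (k'-(l+1)) : ℕ):ℝ) := by
      exact_mod_cast (by omega : n ≤ 2 * (n - k + 1 - (k'-(l+1))))
    have hGpos : (0:ℝ) < ((n - k + 1 - (k'-(l+1)) : ℕ):ℝ) := by linarith only [hGlow, hN]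
    have hrup : ((k'-(l+1) : ℕ):ℝ) ≤ (k':ℝ) := by
      exact_mod_cast (by omega : k'-(l+1) ≤ k')
    have hrpos : (0:ℝ) < ((k'-(l+1) : ℕ):ℝ) := by
      exact_mod_cast (by omega : 0 < k'-(l+1))
    have hrlow : (k':ℝ)/(1+ε) ≤ ((k'-(l+1) : ℕ):ℝ) := by
      rw [hrcast]
      have hid : (k':ℝ)/(1+ε) + ε/(1+ε)*(k':ℝ) = (k':ℝ) := by field_simp
      linarith only [hdel, hid]
    have hlogarg : Real.log ((n:ℝ)/(k':ℝ))/(1+ε) ≤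
        Real.log (((n - k + 1 - (k'-(l+1)) : ℕ):ℝ) / ((k'-(l+1) : ℕ):ℝ)) := by
      have hq : (n:ℝ)/(2*(k':ℝ)) ≤ ((n - k + 1 - (k'-(l+1)) : ℕ):ℝ) / ((k'-(l+1) : ℕ):ℝ) := by
        have h := div_le_div₀ hGpos.le (by linarith only [hGlow] : (n:ℝ)/2 ≤ ((n - k + 1 - (k'-(l+1)) : ℕ):ℝ))
          hrpos hrup
        calc (n:ℝ)/(2*(k':ℝ)) = (n:ℝ)/2/(k':ℝ) := by ring
          _ ≤ _ := h
      have hq2 : Real.log ((n:ℝ)/(2*(k':ℝ))) ≤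
          Real.log (((n - k + 1 - (k'-(l+1)) : ℕ):ℝ) / ((k'-(l+1) : ℕ):ℝ)) :=
        Real.log_le_log (by positivity) hq
      have hq3 : Real.log ((n:ℝ)/(2*(k':ℝ))) = Real.log ((n:ℝ)/(k':ℝ)) - Real.log 2 := by
        rw [show (n:ℝ)/(2*(k':ℝ)) = ((n:ℝ)/(k':ℝ))/2 from by ring,
          Real.log_div (by positivity) (by norm_num)]
      have hlog2 : Real.log 2 ≤ 1 := by
        linarith only [Real.log_le_sub_one_of_pos (by norm_num : (0:ℝ) < 2)]
      have hL'sub : Real.log ((n:ℝ)/(k':ℝ))/(1+ε) ≤ Real.log ((n:ℝ)/(k':ℝ)) - 1 := by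
        rw [div_le_iff₀ hεp]
        have h := mul_le_mul_of_nonneg_left hL1 hε.le
        have hid : ε*((1+ε)/ε) = 1+ε := by field_simp
        nlinarith only [h, hid, hε, hεp]
      linarith only [hq2, hq3, hlog2, hL'sub]
    have hb2low : (k':ℝ) * Real.log ((n:ℝ)/(k':ℝ)) / (1+ε)^2 ≤
        Real.log ((n-k).choose (k'-(l+1)) : ℝ) := by
      have hm2 : (k':ℝ)/(1+ε) * (Real.log ((n:ℝ)/(k':ℝ))/(1+ε)) ≤
          ((k'-(l+1) : ℕ):ℝ) * Real.log (((n - k + 1 - (k'-(l+1)) : ℕ):ℝ) / ((k'-(l+1) : ℕ):ℝ)) :=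
        mul_le_mul hrlow hlogarg (div_nonneg hL'pos.le hεp.le) (by positivity)
      have hm3 := le_trans hm2 hml
      have hid : (k':ℝ)/(1+ε) * (Real.log ((n:ℝ)/(k':ℝ))/(1+ε)) =
          (k':ℝ) * Real.log ((n:ℝ)/(k':ℝ)) / (1+ε)^2 := by field_simp [hεne]
      linarith only [hm3, hid]
    have hXb : (k':ℝ) * Real.log ((n:ℝ)/(k':ℝ)) / ((1+ε)^2 * (n:ℝ)) ≤
        1/(n:ℝ) * Real.log ((k.choose (l+1) : ℝ) * ((n-k).choose (k'-(l+1)) : ℝ)) := by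
      rw [eXb]
      calc (k':ℝ) * Real.log ((n:ℝ)/(k':ℝ)) / ((1+ε)^2 * (n:ℝ))
          = 1/(n:ℝ) * ((k':ℝ) * Real.log ((n:ℝ)/(k':ℝ)) / (1+ε)^2) := by
            field_simp
        _ ≤ 1/(n:ℝ) * (Real.log (k.choose (l+1) : ℝ) + Real.log ((n-k).choose (k'-(l+1)) : ℝ)) := by
            apply mul_le_mul_of_nonneg_left _ (by positivity : (0:ℝ) ≤ 1/(n:ℝ))
            linarith only [hb1log, hb2low]
    -- apply key inequality
    have hkey := key_ineq (n:ℝ) (k:ℝ) (k':ℝ) (l:ℝ) lam ε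
      (1/(n:ℝ) * Real.log ((k.choose l : ℝ) * ((n-k).choose (k'-l) : ℝ)))
      (1/(n:ℝ) * Real.log ((k.choose (l+1) : ℝ) * ((n-k).choose (k'-(l+1)) : ℝ)))
      (Real.log (((l:ℝ)+1) * (n:ℝ) / ((k':ℝ) * (k:ℝ))))
      (Real.log ((n:ℝ)/(k':ℝ)))
      hN hK hK' hLc hε hlam hL'pos hTpos hXb hXdiff hKsub hK'sub h2lkR h2lk'R hQ6 hQ7
    simp only [gammaCurve]
    have hco : ((l+1 : ℕ) : ℝ) = (l:ℝ)+1 := by push_cast; ring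
    rw [hco]
    have hr : -(lam*((l:ℝ)+1)^2/(k:ℝ)) + lam*(l:ℝ)^2/(k:ℝ) = -(lam*(2*(l:ℝ)+1)/(k:ℝ)) := by
      field_simp [hKne]
      ring
    linarith only [hkey, hr]
  · -- second inequality
    have hlK : (l:ℝ) + 1 ≤ k := by exact_mod_cast hl1k
    have harg : ((l:ℝ)+1) * n / ((k':ℝ) * k) ≤ (n:ℝ)/(k':ℝ) := by
      rw [div_le_div_iff₀ (by positivity) (by positivity)]
      have h := mul_le_mul_of_nonneg_right hlK (by positivity : (0:ℝ) ≤ (n:ℝ)*k')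
      nlinarith only [h]
    have hTL : Real.log (((l:ℝ)+1) * n / ((k':ℝ) * k)) ≤ Real.log ((n:ℝ)/(k':ℝ)) :=
      Real.log_le_log (by positivity) harg
    have hQL : Real.sqrt ((k':ℝ) / ((n:ℝ) * Real.log ((n:ℝ)/(k':ℝ)))) *
        Real.log ((n:ℝ)/(k':ℝ)) = Real.sqrt ((k':ℝ)/(n:ℝ) * Real.log ((n:ℝ)/(k':ℝ))) := by
      calc Real.sqrt ((k':ℝ) / ((n:ℝ) * Real.log ((n:ℝ)/(k':ℝ)))) * Real.log ((n:ℝ)/(k':ℝ))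
          = Real.sqrt ((k':ℝ) / ((n:ℝ) * Real.log ((n:ℝ)/(k':ℝ)))) *
            Real.sqrt ((Real.log ((n:ℝ)/(k':ℝ)))^2) := by rw [Real.sqrt_sq hL'pos.le]
        _ = Real.sqrt ((k':ℝ) / ((n:ℝ) * Real.log ((n:ℝ)/(k':ℝ))) *
            (Real.log ((n:ℝ)/(k':ℝ)))^2) := (Real.sqrt_mul (by positivity) _).symm
        _ = Real.sqrt ((k':ℝ)/(n:ℝ) * Real.log ((n:ℝ)/(k':ℝ))) := by
            congr 1
            field_simp
    calc (1 + ε) * Real.sqrt ((k':ℝ) / ((n:ℝ) * Real.log ((n:ℝ)/(k':ℝ)))) *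
          Real.log (((l:ℝ)+1) * n / ((k':ℝ) * k))
        ≤ (1 + ε) * Real.sqrt ((k':ℝ) / ((n:ℝ) * Real.log ((n:ℝ)/(k':ℝ)))) *
          Real.log ((n:ℝ)/(k':ℝ)) := by
          apply mul_le_mul_of_nonneg_left hTL (by positivity)
      _ = (1 + ε) * Real.sqrt ((k':ℝ)/(n:ℝ) * Real.log ((n:ℝ)/(k':ℝ))) := by
          rw [mul_assoc, hQL]

/-- Theorem FM2, part (b): upper bound on increments of `Γ_{k'}`.
Under Assumptions (λ) and (k') with `k, k' = o(n)`, for any `ε > 0` and any sequence of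
overlaps `ℓ` with `⌊kk'/n⌋ ≤ ℓ` and `ℓ = o(min{k,k'})`, for sufficiently large `n`:
`Γ_{k'}(ℓ+1) - Γ_{k'}(ℓ) ≤ (1+ε)·√(k'/(n·log(n/k')))·log((ℓ+1)n/(k'k))
  ≤ (1+ε)·√((k'/n)·log(n/k'))`. -/

theorem stmt_9 (k k' : ℕ → ℕ) (lam : ℕ → ℝ) (hlam : ∀ n, 0 < lam n)
    (hkle : ∀ n, k n ≤ n) (hk'le : ∀ n, k' n ≤ n)
    (hkTop : Tendsto (fun n => k n) atTop atTop) (hk'Top : Tendsto (fun n => k' n) atTop atTop)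
    (hko : (fun n => (k n : ℝ)) =o[atTop] fun n => (n : ℝ))
    (hk'o : (fun n => (k' n : ℝ)) =o[atTop] fun n => (n : ℝ))
    (hAL : AssumLambda k lam) (hAK : AssumKprime k k' lam)
    (ℓ : ℕ → ℕ)
    (hℓlb : ∀ᶠ n in atTop, k n * k' n / n ≤ ℓ n)
    (hℓo : (fun n => (ℓ n : ℝ)) =o[atTop] fun n => (min (k n) (k' n) : ℝ))
    (ε : ℝ) (hε : 0 < ε) :
    ∀ᶠ n in atTop,
      gammaCurve n (k n) (k' n) (lam n) (ℓ n + 1) - gammaCurve n (k n) (k' n) (lam n) (ℓ n) ≤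
        (1 + ε) * Real.sqrt ((k' n : ℝ) / ((n : ℝ) * Real.log ((n : ℝ) / (k' n : ℝ)))) *
          Real.log (((ℓ n : ℝ) + 1) * (n : ℝ) / ((k' n : ℝ) * (k n : ℝ))) ∧
      (1 + ε) * Real.sqrt ((k' n : ℝ) / ((n : ℝ) * Real.log ((n : ℝ) / (k' n : ℝ)))) *
          Real.log (((ℓ n : ℝ) + 1) * (n : ℝ) / ((k' n : ℝ) * (k n : ℝ))) ≤
        (1 + ε) * Real.sqrt ((k' n : ℝ) / (n : ℝ) * Real.log ((n : ℝ) / (k' n : ℝ))) := by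
  have hεp : (0:ℝ) < 1 + ε := by linarith
  have hδ : (0:ℝ) < ε / (1 + ε) := div_pos hε hεp
  have F1 := hko.bound (by norm_num : (0:ℝ) < 1/4)
  have F2 := hk'o.bound (by norm_num : (0:ℝ) < 1/4)
  have F3 := hℓo.bound (by norm_num : (0:ℝ) < 1/16)
  have F4 := hℓo.bound (show (0:ℝ) < ε/(1+ε)/2 by positivity)
  have F5 := hkTop.eventually_ge_atTop 8
  have F5' := hk'Top.eventually_ge_atTop (max 8 ⌈2/(ε/(1+ε))⌉₊)
  have F7 := hk'o.bound (Real.exp_pos (-((1+ε)/ε)))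
  have F8 := hAL.2.bound one_pos
  have F9 := hAK.2.1.bound one_pos
  have F10 := (Real.tendsto_log_atTop.comp
    (tendsto_natCast_atTop_atTop (R := ℝ))).eventually_ge_atTop (max 2 (16*(1+ε)^2))
  have F11 := hAK.1.bound (show (0:ℝ) < 1/(16*(1+ε)^2) by positivity)
  have F12 := hAL.1.bound (Real.exp_pos (-2))
  have F13 := hko.bound (Real.exp_pos (-1))
  have F14 : ∀ᶠ n : ℕ in atTop, 2 ≤ n := eventually_ge_atTop 2
  filter_upwards [F1, F2, F3, F4, F5, F5', F7, F8, F9, F10, F11, F12, F13, F14, hℓlb]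
    with n f1 f2 f3 f4 f5 f5' f7 f8 f9 f10 f11 f12 f13 f14 flb
  simp only [Function.comp_apply] at f10
  have hlogn2 : (2:ℝ) ≤ Real.log n := le_trans (le_max_left _ _) f10
  have hlognE : 16*(1+ε)^2 ≤ Real.log n := le_trans (le_max_right _ _) f10
  -- clean norms
  have f1' : (k n : ℝ) ≤ 1/4 * (n:ℝ) := normclean (Nat.cast_nonneg n) f1
  have f2' : (k' n : ℝ) ≤ 1/4 * (n:ℝ) := normclean (Nat.cast_nonneg n) f2
  have hminnn : (0:ℝ) ≤ min ((k n : ℕ):ℝ) ((k' n : ℕ):ℝ) :=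
    le_min (Nat.cast_nonneg _) (Nat.cast_nonneg _)
  have f3' : (ℓ n : ℝ) ≤ 1/16 * min ((k n:ℕ):ℝ) ((k' n:ℕ):ℝ) := normclean hminnn f3
  have f4' : (ℓ n : ℝ) ≤ ε/(1+ε)/2 * min ((k n:ℕ):ℝ) ((k' n:ℕ):ℝ) := normclean hminnn f4
  have f7' : (k' n : ℝ) ≤ Real.exp (-((1+ε)/ε)) * (n:ℝ) := normclean (Nat.cast_nonneg n) f7
  have f13' : (k n : ℝ) ≤ Real.exp (-1) * (n:ℝ) := normclean (Nat.cast_nonneg n) f13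
  have f11' : (k n : ℝ)^2 / (lam n^2 * n) * (Real.log ((n:ℝ)/(k n : ℝ)))^2 /
      Real.log (lam n * n / (k n * Real.log ((n:ℝ)/(k n:ℝ)))) ≤
      1/(16*(1+ε)^2) * (k' n : ℝ) := normclean (Nat.cast_nonneg _) f11
  have f12' : (k n : ℝ)/n * Real.log ((n:ℝ)/(k n:ℝ)) ≤ Real.exp (-2) * lam n :=
    normclean (hlam n).le f12
  -- basic nat facts
  have h8k : 8 ≤ k n := f5
  have h8k' : 8 ≤ k' n := le_trans (le_max_left _ _) f5'
  have hk'ceil : ⌈2/(ε/(1+ε))⌉₊ ≤ k' n := le_trans (le_max_right _ _) f5'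
  have h4k : 4 * k n ≤ n := by
    have h : ((4 * k n : ℕ):ℝ) ≤ (n:ℝ) := by push_cast; linarith only [f1']
    exact_mod_cast h
  have h4k' : 4 * k' n ≤ n := by
    have h : ((4 * k' n : ℕ):ℝ) ≤ (n:ℝ) := by push_cast; linarith only [f2']
    exact_mod_cast h
  have hNpos : (0:ℝ) < n := by
    have : (0:ℕ) < n := by omega
    exact_mod_cast this
  have hKpos : (0:ℝ) < k n := by
    have : (0:ℕ) < k n := by omega
    exact_mod_cast this
  have hK'pos : (0:ℝ) < k' n := by
    have : (0:ℕ) < k' n := by omega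
    exact_mod_cast this
  have h8l : 8 * ℓ n ≤ min (k n) (k' n) := by
    have h1 : (ℓ n : ℝ) ≤ 1/16 * (k n : ℝ) := by
      have hm := min_le_left ((k n:ℕ):ℝ) ((k' n:ℕ):ℝ)
      linarith only [f3', hm]
    have h2 : (ℓ n : ℝ) ≤ 1/16 * (k' n : ℝ) := by
      have hm := min_le_right ((k n:ℕ):ℝ) ((k' n:ℕ):ℝ)
      linarith only [f3', hm]
    have h1' : 16 * ℓ n ≤ k n := by
      have hx : ((16 * ℓ n : ℕ):ℝ) ≤ (k n : ℝ) := by push_cast; linarith only [h1]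
      exact_mod_cast hx
    have h2' : 16 * ℓ n ≤ k' n := by
      have hx : ((16 * ℓ n : ℕ):ℝ) ≤ (k' n : ℝ) := by push_cast; linarith only [h2]
      exact_mod_cast hx
    exact le_min (by omega) (by omega)
  have hlb : k n * k' n < (ℓ n + 1) * n := by
    have h0 : 0 < n := by omega
    exact (Nat.div_lt_iff_lt_mul h0).mp (Nat.lt_succ_of_le flb)
  -- hdel
  have hdel : (ℓ n : ℝ) + 1 ≤ ε/(1+ε) * (k' n : ℝ) := by
    have hc1 : (2/(ε/(1+ε)) : ℝ) ≤ (k' n : ℝ) :=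
      le_trans (Nat.le_ceil _) (by exact_mod_cast hk'ceil)
    have hc2 : (1:ℝ) ≤ ε/(1+ε)/2 * (k' n : ℝ) := by
      have h := mul_le_mul_of_nonneg_left hc1 (by positivity : (0:ℝ) ≤ ε/(1+ε)/2)
      have hid : ε/(1+ε)/2 * (2/(ε/(1+ε))) = 1 := by field_simp
      linarith only [h, hid]
    have h3 : (ℓ n : ℝ) ≤ ε/(1+ε)/2 * (k' n : ℝ) := by
      have hm := mul_le_mul_of_nonneg_left (min_le_right ((k n:ℕ):ℝ) ((k' n:ℕ):ℝ))
        (by positivity : (0:ℝ) ≤ ε/(1+ε)/2)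
      linarith only [f4', hm]
    have hsum : ε/(1+ε)/2 * (k' n:ℝ) + ε/(1+ε)/2 * (k' n:ℝ) = ε/(1+ε) * (k' n:ℝ) := by ring
    linarith only [h3, hc2, hsum]
  -- hL1
  have hL1 : (1+ε)/ε ≤ Real.log ((n:ℝ)/(k' n : ℝ)) := by
    have h1 : Real.exp ((1+ε)/ε) ≤ (n:ℝ)/(k' n : ℝ) := by
      rw [le_div_iff₀ hK'pos]
      have h2 := mul_le_mul_of_nonneg_left f7' (Real.exp_pos ((1+ε)/ε)).le
      have h3 : Real.exp ((1+ε)/ε) * (Real.exp (-((1+ε)/ε)) * (n:ℝ)) = (n:ℝ) := by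
        rw [← mul_assoc, ← Real.exp_add]
        simp
      linarith only [h2, h3]
    calc (1+ε)/ε = Real.log (Real.exp ((1+ε)/ε)) := (Real.log_exp _).symm
      _ ≤ Real.log ((n:ℝ)/(k' n:ℝ)) := Real.log_le_log (Real.exp_pos _) h1
  have hL'1 : (1:ℝ) ≤ Real.log ((n:ℝ)/(k' n : ℝ)) := by
    have hx : (1:ℝ) ≤ (1+ε)/ε := by rw [le_div_iff₀ hε]; linarith only [hε]
    linarith only [hx, hL1]
  -- lam ≤ 1
  have hlogn0 : (0:ℝ) ≤ Real.log n := by linarith only [hlogn2]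
  have hx0 : (0:ℝ) ≤ (k n : ℝ)/(Real.sqrt n * Real.log n) :=
    div_nonneg (Nat.cast_nonneg _) (mul_nonneg (Real.sqrt_nonneg _) hlogn0)
  have hlam1 : lam n ≤ 1 := by
    have h := normclean (le_min zero_le_one hx0) f8
    have hm := min_le_left (1:ℝ) ((k n : ℝ)/(Real.sqrt n * Real.log n))
    linarith only [h, hm]
  -- h6
  have h6 : 16*(1+ε)^2*(k' n : ℝ) ≤ lam n^2 * n * Real.log ((n:ℝ)/(k' n : ℝ)) := by
    have hlog3 : (0:ℝ) < (Real.log n)^3 := by positivity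
    have f9' : (k' n : ℝ) ≤ 1 * (lam n^2 * n / (Real.log n)^3) :=
      normclean (le_of_lt (div_pos (mul_pos (pow_pos (hlam n) 2) hNpos) hlog3)) f9
    have h1 : (k' n : ℝ) * (Real.log n)^3 ≤ lam n^2 * n := by
      rw [one_mul] at f9'
      exact (le_div_iff₀ hlog3).mp f9'
    have h2 : 16*(1+ε)^2 ≤ (Real.log n)^3 :=
      le_trans hlognE (le_self_pow₀ (by linarith only [hlogn2] : (1:ℝ) ≤ Real.log n)
        (by norm_num))
    have h3 := mul_le_mul_of_nonneg_left h2 ((by positivity : (0:ℝ) ≤ ((k' n:ℕ):ℝ)))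
    have h5 := mul_le_mul_of_nonneg_left hL'1
      (mul_nonneg (sq_nonneg (lam n)) hNpos.le)
    linarith only [h1, h3, h5]
  -- h7
  have h7 : 16*(1+ε)^2*(k n : ℝ)^2 ≤
      lam n^2 * n * Real.log ((n:ℝ)/(k' n : ℝ)) * (k' n : ℝ) := by
    have hLk1 : (1:ℝ) ≤ Real.log ((n:ℝ)/(k n : ℝ)) := by
      have h1 : Real.exp 1 ≤ (n:ℝ)/(k n : ℝ) := by
        rw [le_div_iff₀ hKpos]
        have h2 := mul_le_mul_of_nonneg_left f13' (Real.exp_pos 1).le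
        have h3 : Real.exp 1 * (Real.exp (-1) * (n:ℝ)) = (n:ℝ) := by
          rw [← mul_assoc, ← Real.exp_add]
          simp
        linarith only [h2, h3]
      calc (1:ℝ) = Real.log (Real.exp 1) := (Real.log_exp _).symm
        _ ≤ _ := Real.log_le_log (Real.exp_pos _) h1
    have hLkpos : (0:ℝ) < Real.log ((n:ℝ)/(k n : ℝ)) := by linarith only [hLk1]
    have hdenpos : (0:ℝ) < (k n:ℝ) * Real.log ((n:ℝ)/(k n : ℝ)) := mul_pos hKpos hLkpos
    have hMpos : (0:ℝ) < lam n * n / ((k n:ℝ) * Real.log ((n:ℝ)/(k n : ℝ))) :=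
      div_pos (mul_pos (hlam n) hNpos) hdenpos
    have hM2 : (2:ℝ) ≤ Real.log (lam n * n / ((k n:ℝ) * Real.log ((n:ℝ)/(k n : ℝ)))) := by
      have hMge : Real.exp 2 ≤ lam n * n / ((k n:ℝ) * Real.log ((n:ℝ)/(k n : ℝ))) := by
        rw [le_div_iff₀ hdenpos]
        have h1 := mul_le_mul_of_nonneg_left f12'
          (by positivity : (0:ℝ) ≤ Real.exp 2 * (n:ℝ))
        have e1 : Real.exp 2 * (n:ℝ) * ((k n:ℝ)/n * Real.log ((n:ℝ)/(k n:ℝ))) =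
            Real.exp 2 * ((k n:ℝ) * Real.log ((n:ℝ)/(k n:ℝ))) := by
          field_simp
        have e2 : Real.exp 2 * (n:ℝ) * (Real.exp (-2) * lam n) = lam n * (n:ℝ) := by
          rw [show Real.exp 2 * (n:ℝ) * (Real.exp (-2) * lam n) =
            Real.exp 2 * Real.exp (-2) * (lam n * (n:ℝ)) from by ring, ← Real.exp_add]
          simp
        rw [e1, e2] at h1
        linarith only [h1]
      calc (2:ℝ) = Real.log (Real.exp 2) := (Real.log_exp _).symm
        _ ≤ _ := Real.log_le_log (Real.exp_pos _) hMge
    have hMLk : Real.log (lam n * n / ((k n:ℝ) * Real.log ((n:ℝ)/(k n : ℝ)))) ≤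
        Real.log ((n:ℝ)/(k n : ℝ)) := by
      have hMle : lam n * n / ((k n:ℝ) * Real.log ((n:ℝ)/(k n : ℝ))) ≤ (n:ℝ)/(k n:ℝ) := by
        apply div_le_div₀ (Nat.cast_nonneg n)
          (by nlinarith only [hlam n, hlam1, hNpos.le] : lam n * (n:ℝ) ≤ (n:ℝ)) hKpos
        have hk1 := mul_le_mul_of_nonneg_left hLk1 hKpos.le
        linarith only [hk1]
      exact Real.log_le_log hMpos hMle
    have hMlogpos : (0:ℝ) <
        Real.log (lam n * n / ((k n:ℝ) * Real.log ((n:ℝ)/(k n : ℝ)))) := by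
      linarith only [hM2]
    have hLkdiv : Real.log ((n:ℝ)/(k n : ℝ)) ≤
        (Real.log ((n:ℝ)/(k n : ℝ)))^2 /
          Real.log (lam n * n / ((k n:ℝ) * Real.log ((n:ℝ)/(k n : ℝ)))) := by
      rw [le_div_iff₀ hMlogpos]
      have hp := mul_nonneg (sub_nonneg.mpr hMLk) hLkpos.le
      nlinarith only [hp]
    have hF : (k n:ℝ)^2 * Real.log ((n:ℝ)/(k n : ℝ)) / (lam n^2 * n) ≤
        (k n : ℝ)^2 / (lam n^2 * n) * (Real.log ((n:ℝ)/(k n : ℝ)))^2 /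
          Real.log (lam n * n / ((k n:ℝ) * Real.log ((n:ℝ)/(k n:ℝ)))) := by
      have h := mul_le_mul_of_nonneg_left hLkdiv
        (by positivity : (0:ℝ) ≤ (k n:ℝ)^2/(lam n^2 * n))
      calc (k n:ℝ)^2 * Real.log ((n:ℝ)/(k n : ℝ)) / (lam n^2 * n)
          = (k n:ℝ)^2/(lam n^2 * n) * Real.log ((n:ℝ)/(k n : ℝ)) := by ring
        _ ≤ (k n:ℝ)^2/(lam n^2 * n) * ((Real.log ((n:ℝ)/(k n : ℝ)))^2 /
            Real.log (lam n * n / ((k n:ℝ) * Real.log ((n:ℝ)/(k n:ℝ))))) := h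
        _ = _ := by ring
    have hcomb := le_trans hF f11'
    have hlamn2 : (0:ℝ) < lam n^2 * n := mul_pos (pow_pos (hlam n) 2) hNpos
    have h1 : (k n:ℝ)^2 * Real.log ((n:ℝ)/(k n : ℝ)) ≤
        1/(16*(1+ε)^2) * (k' n:ℝ) * (lam n^2 * n) := (div_le_iff₀ hlamn2).mp hcomb
    have h2 : 16*(1+ε)^2*(k n:ℝ)^2 ≤ 16*(1+ε)^2*((k n:ℝ)^2 *
        Real.log ((n:ℝ)/(k n : ℝ))) := by
      have hp := mul_le_mul_of_nonneg_left
        (mul_le_mul_of_nonneg_left hLk1 (sq_nonneg ((k n:ℝ))))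
        (by positivity : (0:ℝ) ≤ 16*(1+ε)^2)
      linarith only [hp]
    have h3 : 16*(1+ε)^2*(1/(16*(1+ε)^2) * (k' n:ℝ) * (lam n^2 * n)) =
        lam n^2 * n * (k' n:ℝ) := by field_simp
    have h4 : 16*(1+ε)^2*((k n:ℝ)^2 * Real.log ((n:ℝ)/(k n : ℝ))) ≤
        lam n^2 * n * (k' n:ℝ) := by
      have hq := mul_le_mul_of_nonneg_left h1 (by positivity : (0:ℝ) ≤ 16*(1+ε)^2)
      linarith only [hq, h3.le, h3.ge]
    have h5 : lam n^2 * n * (k' n:ℝ) ≤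
        lam n^2 * n * Real.log ((n:ℝ)/(k' n : ℝ)) * (k' n:ℝ) := by
      have hp := mul_le_mul_of_nonneg_left hL'1
        (mul_nonneg (mul_nonneg (sq_nonneg (lam n)) hNpos.le)
          ((by positivity : (0:ℝ) ≤ ((k' n:ℕ):ℝ))))
      nlinarith only [hp]
    linarith only [h2, h4, h5]
  exact core n (k n) (k' n) (ℓ n) (lam n) ε hε (hlam n) h4k h4k' h8k h8k' h8l hlb hdel hL1 h6 h7
end

section
/- (Monotonicity of depth in the signal strength.) Fix the noise matrix W (any n×n symmetric matrix), the signal x ∈ {0,1}ⁿ with exactly k ones, β ≥ 0, ℓ > 0 and sparsity k', and for a signal strength λ > 0 let D_{β,ℓ}(λ) denote the free energy well depth computed from Y = (λ/k)·x·xᵀ + W. If λ̃ ≥ λ > 0 then D_{β,ℓ}(λ) ≥ D_{β,ℓ}(λ̃). Equivalently, ( Σ_{v∈A} e^{βλ⟨x,v⟩² + βvᵀWv} ) / ( Σ_{v∈B} e^{βλ⟨x,v⟩² + βvᵀWv} ) ≥ ( Σ_{v∈A} e^{βλ̃⟨x,v⟩² + βvᵀWv} ) / ( Σ_{v∈B}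 e^{βλ̃⟨x,v⟩² + βvᵀWv} ). -/
open MeasureTheory ProbabilityTheory Filter Asymptotics

open Classical


private lemma quad_split_aux {n : ℕ} (k : ℕ) (lam : ℝ) (x : Finset (Fin n))
    (W : Fin n → Fin n → ℝ) (S : Finset (Fin n)) :
    quadForm (Ymat k lam x W) S = lam / k * ((x ∩ S).card : ℝ) ^ 2 + quadForm W S := by
  classical
  have hcard : ((x ∩ S).card : ℝ) = ∑ i ∈ S, (if i ∈ x then (1:ℝ) else 0) := by
    rw [Finset.sum_boole, Finset.filter_mem_eq_inter, Finset.inter_comm]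
  unfold quadForm Ymat
  simp only [Finset.sum_add_distrib]
  rw [hcard]
  congr 1
  rw [sq, Finset.sum_mul_sum, Finset.mul_sum]
  refine Finset.sum_congr rfl fun i _ => ?_
  rw [Finset.mul_sum]

/-- Lemma: monotonicity of the depth in the signal strength.
Fix the symmetric noise matrix `W`, the `k`-sparse signal `x`, `β ≥ 0`, `ℓ > 0` and
sparsity `k'`, with the regions `A` and `B` nonempty. If `λ̃ ≥ λ > 0` then
`D_{β,ℓ}(λ) ≥ D_{β,ℓ}(λ̃)`, where `D_{β,ℓ}(λ)` is computed from `Y = (λ/k)xxᵀ + W`;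
equivalently, the ratio `(Σ_{v∈A} e^{βλ⟨x,v⟩²/k + βvᵀWv}) / (Σ_{v∈B} e^{βλ⟨x,v⟩²/k + βvᵀWv})`
is at least the corresponding ratio for `λ̃`. -/
theorem stmt_16 {n : ℕ} (k k' : ℕ) (x : Finset (Fin n)) (hx : x.card = k)
    (W : Fin n → Fin n → ℝ) (hW : ∀ i j, W i j = W j i)
    (β ℓ : ℝ) (hβ : 0 ≤ β) (hℓ : 0 < ℓ)
    (hA : ∃ S : Finset (Fin n), S.card = k' ∧ ((x ∩ S).card : ℝ) < ℓ)
    (hB : ∃ S : Finset (Fin n), S.card = k' ∧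
      ℓ ≤ ((x ∩ S).card : ℝ) ∧ ((x ∩ S).card : ℝ) ≤ 2 * ℓ)
    (lam lam' : ℝ) (hlam : 0 < lam) (hle : lam ≤ lam') :
    FEWdepth k k' lam' β ℓ x W ≤ FEWdepth k k' lam β ℓ x W ∧
    ((∑ S ∈ Finset.univ.filter (fun S : Finset (Fin n) =>
          S.card = k' ∧ ((x ∩ S).card : ℝ) < ℓ),
        Real.exp (β * lam' * ((x ∩ S).card : ℝ) ^ 2 / k + β * quadForm W S)) /
      (∑ S ∈ Finset.univ.filter (fun S : Finset (Fin n) =>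
          S.card = k' ∧ ℓ ≤ ((x ∩ S).card : ℝ) ∧ ((x ∩ S).card : ℝ) ≤ 2 * ℓ),
        Real.exp (β * lam' * ((x ∩ S).card : ℝ) ^ 2 / k + β * quadForm W S))) ≤
    ((∑ S ∈ Finset.univ.filter (fun S : Finset (Fin n) =>
          S.card = k' ∧ ((x ∩ S).card : ℝ) < ℓ),
        Real.exp (β * lam * ((x ∩ S).card : ℝ) ^ 2 / k + β * quadForm W S)) /
      (∑ S ∈ Finset.univ.filter (fun S : Finset (Fin n) =>
          S.card = k' ∧ ℓ ≤ ((x ∩ S).card : ℝ) ∧ ((x ∩ S).card : ℝ) ≤ 2 * ℓ),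
        Real.exp (β * lam * ((x ∩ S).card : ℝ) ^ 2 / k + β * quadForm W S))) := by
  classical
  set A : Finset (Finset (Fin n)) := Finset.univ.filter
      (fun S : Finset (Fin n) => S.card = k' ∧ ((x ∩ S).card : ℝ) < ℓ) with hAdef
  set B : Finset (Finset (Fin n)) := Finset.univ.filter
      (fun S : Finset (Fin n) => S.card = k' ∧
        ℓ ≤ ((x ∩ S).card : ℝ) ∧ ((x ∩ S).card : ℝ) ≤ 2 * ℓ) with hBdef
  set f : ℝ → ℝ := fun t => ∑ S ∈ A,
      Real.exp (β * t * ((x ∩ S).card : ℝ) ^ 2 / k + β * quadForm W S) with hf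
  set g : ℝ → ℝ := fun t => ∑ S ∈ B,
      Real.exp (β * t * ((x ∩ S).card : ℝ) ^ 2 / k + β * quadForm W S) with hg
  have hAne : A.Nonempty := by
    obtain ⟨S, h1, h2⟩ := hA
    exact ⟨S, by simp [hAdef, h1, h2]⟩
  have hBne : B.Nonempty := by
    obtain ⟨S, h1, h2⟩ := hB
    exact ⟨S, by simp [hBdef, h1, h2]⟩
  have hfpos : ∀ t : ℝ, 0 < f t := fun t =>
    Finset.sum_pos (fun S _ => Real.exp_pos _) hAne
  have hgpos : ∀ t : ℝ, 0 < g t := fun t =>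
    Finset.sum_pos (fun S _ => Real.exp_pos _) hBne
  -- the key cross inequality
  have hcross : f lam' * g lam ≤ f lam * g lam' := by
    rw [hf, hg]
    rw [Finset.sum_mul_sum, Finset.sum_mul_sum]
    refine Finset.sum_le_sum fun S hS => Finset.sum_le_sum fun T hT => ?_
    have hSA : ((x ∩ S).card : ℝ) < ℓ := by
      simp only [hAdef, Finset.mem_filter] at hS; exact hS.2.2
    have hTB : ℓ ≤ ((x ∩ T).card : ℝ) := by
      simp only [hBdef, Finset.mem_filter] at hT; exact hT.2.2.1
    set a : ℝ := ((x ∩ S).card : ℝ)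
    set b : ℝ := ((x ∩ T).card : ℝ)
    have ha0 : (0:ℝ) ≤ a := Nat.cast_nonneg _
    have hab : a ^ 2 ≤ b ^ 2 := by nlinarith
    rw [← Real.exp_add, ← Real.exp_add, Real.exp_le_exp]
    have hk0 : (0:ℝ) ≤ ((k:ℝ))⁻¹ := by positivity
    simp only [div_eq_mul_inv]
    nlinarith [mul_nonneg (mul_nonneg (mul_nonneg hβ (sub_nonneg.2 hle))
      (sub_nonneg.2 hab)) hk0]
  have hratio : f lam' / g lam' ≤ f lam / g lam := by
    rw [div_le_div_iff₀ (hgpos lam') (hgpos lam)]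
    linarith [hcross]
  -- identify regionSums with f, g
  have hregA : ∀ t : ℝ, regionSum k' β (Ymat k t x W)
      (fun S => ((x ∩ S).card : ℝ) < ℓ) = f t := by
    intro t
    unfold regionSum
    refine Finset.sum_congr rfl fun S _ => ?_
    rw [quad_split_aux]
    ring_nf
  have hregB : ∀ t : ℝ, regionSum k' β (Ymat k t x W)
      (fun S => ℓ ≤ ((x ∩ S).card : ℝ) ∧ ((x ∩ S).card : ℝ) ≤ 2 * ℓ) = g t := by
    intro t
    unfold regionSum
    refine Finset.sum_congr (by rw [hBdef]; ext S; simp) fun S _ => ?_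
    rw [quad_split_aux]
    ring_nf
  have hTpos : ∀ t : ℝ, 0 < regionSum k' β (Ymat k t x W) (fun _ => True) := by
    intro t
    unfold regionSum
    refine Finset.sum_pos (fun S _ => Real.exp_pos _) ?_
    obtain ⟨S, h1, _⟩ := hA
    exact ⟨S, by simp [h1]⟩
  constructor
  · -- depth monotone
    unfold FEWdepth FEWdepthY gibbsProb
    rw [hregA, hregA, hregB, hregB]
    rw [Real.log_div (hfpos lam').ne' (hTpos lam').ne',
        Real.log_div (hgpos lam').ne' (hTpos lam').ne',
        Real.log_div (hfpos lam).ne' (hTpos lam).ne',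
        Real.log_div (hgpos lam).ne' (hTpos lam).ne']
    have hlog : Real.log (f lam') - Real.log (g lam') ≤
        Real.log (f lam) - Real.log (g lam) := by
      rw [← Real.log_div (hfpos lam').ne' (hgpos lam').ne',
          ← Real.log_div (hfpos lam).ne' (hgpos lam).ne']
      exact Real.log_le_log (by positivity) hratio
    linarith
  · exact hratio
end

section
/- Let x ∈ {0,1}ⁿ have exactly k ones and define T_ℓ = {v ∈ {0,1}ⁿ : ‖v‖₀ = k', ⟨v,x⟩ = ℓ}. Under the assumptions k' = o(n), k = o(n), k, k' = ω(√(log n)), there exists a sufficiently small constant c > 0 such that for sufficiently large n the following hold for every ℓ ≤ c·min{k, k'}: (a) max{ 32ℓ²/k, 16(k')²/n } ≤ k'/2; and (b) for every integer m with max{ 32ℓ²/k, 16(k')²/n } ≤ m ≤ k'−1, |{(v,u) ∈ T_ℓ × T_ℓ : ⟨v,u⟩ = m+1}| / |{(v,u) ∈ T_ℓ × T_ℓ : ⟨v,u⟩ = m}| ≤ 1/2. -/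
open Filter Asymptotics

/-- The number of pairs `(v, u) ∈ T_ℓ × T_ℓ` with `⟨v, u⟩ = m`, where
`T_ℓ = {v ∈ {0,1}ⁿ : ‖v‖₀ = k', ⟨v, x⟩ = ℓ}` (vectors identified with their supports). -/
def pairCount (n : ℕ) (k' ℓ m : ℕ) (x : Finset (Fin n)) : ℕ :=
  ((Finset.univ : Finset (Finset (Fin n) × Finset (Fin n))).filter
    (fun p => p.1.card = k' ∧ p.2.card = k' ∧
      (x ∩ p.1).card = ℓ ∧ (x ∩ p.2).card = ℓ ∧ (p.1 ∩ p.2).card = m)).card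


section Aux
open Finset


def pairCountA (n : ℕ) (k' ℓ m a : ℕ) (x : Finset (Fin n)) : ℕ :=
  ((Finset.univ : Finset (Finset (Fin n) × Finset (Fin n))).filter
    (fun p => p.1.card = k' ∧ p.2.card = k' ∧
      (x ∩ p.1).card = ℓ ∧ (x ∩ p.2).card = ℓ ∧ (p.1 ∩ p.2).card = m ∧
      (x ∩ (p.1 ∩ p.2)).card = a)).card

variable {n : ℕ}

lemma swap_card {u : Finset (Fin n)} {z z' : Fin n} (hz : z ∈ u) (hz' : z' ∉ u) :
    (insert z' (u.erase z)).card = u.card := by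
  rw [card_insert_of_notMem (fun h => hz' (mem_of_mem_erase h)), card_erase_of_mem hz]
  exact Nat.succ_pred_eq_of_pos (card_pos.2 ⟨z, hz⟩)

lemma swap_inter_both {w u : Finset (Fin n)} {z z' : Fin n} (hzw : z ∈ w) (hz'w : z' ∈ w) :
    w ∩ insert z' (u.erase z) = insert z' ((w ∩ u).erase z) := by
  ext t
  by_cases h : t = z' <;> simp [h, hzw, hz'w, mem_inter, mem_insert, mem_erase] <;> tauto

lemma swap_inter_none {w u : Finset (Fin n)} {z z' : Fin n} (hzw : z ∉ w) (hz'w : z' ∉ w) :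
    w ∩ insert z' (u.erase z) = w ∩ u := by
  ext t
  constructor
  · intro ht
    simp only [mem_inter, mem_insert, mem_erase] at ht ⊢
    rcases ht with ⟨htw, h | ⟨_, htu⟩⟩
    · exact absurd (h ▸ htw) hz'w
    · exact ⟨htw, htu⟩
  · intro ht
    simp only [mem_inter, mem_insert, mem_erase] at ht ⊢
    refine ⟨ht.1, Or.inr ⟨fun h => hzw (h ▸ ht.1), ht.2⟩⟩

lemma swap_inter_fst {w u : Finset (Fin n)} {z z' : Fin n} (hzw : z ∈ w) (hz'w : z' ∉ w) :
    w ∩ insert z' (u.erase z) = (w ∩ u).erase z := by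
  ext t
  by_cases h : t = z' <;> simp [h, hz'w, mem_inter, mem_insert, mem_erase] <;> tauto

lemma branch1 (k' ℓ m a : ℕ) (x : Finset (Fin n)) :
    pairCountA n k' ℓ (m+1) a x * (a * (x.card - 2*ℓ)) ≤
      pairCountA n k' ℓ m (a-1) x * (ℓ * ℓ) := by
  classical
  set A := ((Finset.univ : Finset (Finset (Fin n) × Finset (Fin n))).filter
    (fun p => p.1.card = k' ∧ p.2.card = k' ∧
      (x ∩ p.1).card = ℓ ∧ (x ∩ p.2).card = ℓ ∧ (p.1 ∩ p.2).card = m+1 ∧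
      (x ∩ (p.1 ∩ p.2)).card = a)) with hA
  set B := ((Finset.univ : Finset (Finset (Fin n) × Finset (Fin n))).filter
    (fun p => p.1.card = k' ∧ p.2.card = k' ∧
      (x ∩ p.1).card = ℓ ∧ (x ∩ p.2).card = ℓ ∧ (p.1 ∩ p.2).card = m ∧
      (x ∩ (p.1 ∩ p.2)).card = a-1)) with hB
  have : pairCountA n k' ℓ (m+1) a x = A.card := rfl
  rw [this]
  have : pairCountA n k' ℓ m (a-1) x = B.card := rfl
  rw [this]
  set r : (Finset (Fin n) × Finset (Fin n)) → (Finset (Fin n) × Finset (Fin n)) → Prop :=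
    fun p' p => p.1 = p'.1 ∧ ∃ z ∈ x ∩ (p'.1 ∩ p'.2), ∃ z' ∈ x \ (p'.1 ∪ p'.2),
      p.2 = insert z' (p'.2.erase z) with hr
  apply Finset.card_mul_le_card_mul r
  · -- lower bound on degrees from A
    rintro p' hp'
    rw [hA, Finset.mem_filter] at hp'
    obtain ⟨-, h1, h2, h3, h4, h5, h6⟩ := hp'
    set D := (x ∩ (p'.1 ∩ p'.2)) ×ˢ (x \ (p'.1 ∪ p'.2)) with hD
    have hDcard : a * (x.card - 2*ℓ) ≤ D.card := by
      rw [hD, Finset.card_product, h6]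
      apply Nat.mul_le_mul_left
      have e1 : (x ∩ (p'.1 ∪ p'.2)).card + (x \ (p'.1 ∪ p'.2)).card = x.card :=
        Finset.card_inter_add_card_sdiff _ _
      have e2 : (x ∩ (p'.1 ∪ p'.2)).card ≤ 2*ℓ := by
        rw [Finset.inter_union_distrib_left]
        calc ((x ∩ p'.1) ∪ (x ∩ p'.2)).card ≤ (x ∩ p'.1).card + (x ∩ p'.2).card :=
          Finset.card_union_le _ _
        _ = 2*ℓ := by omega
      omega
    set φ : (Fin n × Fin n) → (Finset (Fin n) × Finset (Fin n)) :=
      fun q => (p'.1, insert q.2 (p'.2.erase q.1)) with hφ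
    have hinj : Set.InjOn φ D := by
      rintro ⟨z1, z1'⟩ hq1 ⟨z2, z2'⟩ hq2 heq
      simp only [hD, Finset.mem_coe, Finset.mem_product, Finset.mem_inter, Finset.mem_sdiff,
        Finset.mem_union] at hq1 hq2
      obtain ⟨⟨-, -, hz1u⟩, -, hz1'⟩ := hq1
      obtain ⟨⟨-, -, hz2u⟩, -, hz2'⟩ := hq2
      have heq2 : insert z1' (p'.2.erase z1) = insert z2' (p'.2.erase z2) :=
        congrArg Prod.snd heq
      have hz1'u : z1' ∉ p'.2 := fun h => hz1' (Or.inr h)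
      have hz2'u : z2' ∉ p'.2 := fun h => hz2' (Or.inr h)
      have e1 : z1' = z2' := by
        have : z1' ∈ insert z2' (p'.2.erase z2) := heq2 ▸ Finset.mem_insert_self _ _
        rcases Finset.mem_insert.1 this with h | h
        · exact h
        · exact absurd (Finset.mem_of_mem_erase h) hz1'u
      have e2 : z1 = z2 := by
        by_contra hne
        have hz1ne : z1 ≠ z1' := fun h => hz1'u (h ▸ hz1u)
        have : z1 ∈ insert z2' (p'.2.erase z2) :=
          Finset.mem_insert_of_mem (Finset.mem_erase.2 ⟨hne, hz1u⟩)
        rw [← heq2, Finset.mem_insert, Finset.mem_erase] at this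
        rcases this with h | ⟨h, -⟩
        · exact hz1ne h
        · exact h rfl
      simp [e1, e2]
    calc a * (x.card - 2*ℓ) ≤ D.card := hDcard
    _ = (D.image φ).card := (Finset.card_image_of_injOn hinj).symm
    _ ≤ (B.bipartiteAbove r p').card := by
      apply Finset.card_le_card
      intro p hp
      rw [Finset.mem_image] at hp
      obtain ⟨⟨z, z'⟩, hq, hpq⟩ := hp
      simp only [hD, Finset.mem_product, Finset.mem_inter, Finset.mem_sdiff,
        Finset.mem_union] at hq
      obtain ⟨⟨hzx, hzv, hzu⟩, hz'x, hz'⟩ := hq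
      have hz'v : z' ∉ p'.1 := fun h => hz' (Or.inl h)
      have hz'u : z' ∉ p'.2 := fun h => hz' (Or.inr h)
      rw [Finset.mem_bipartiteAbove]
      subst hpq
      constructor
      · rw [hB, Finset.mem_filter]
        refine ⟨Finset.mem_univ _, h1, ?_, h3, ?_, ?_, ?_⟩
        · rw [hφ]; simpa using (swap_card hzu hz'u).trans h2
        · show (x ∩ insert z' (p'.2.erase z)).card = ℓ
          rw [swap_inter_both hzx hz'x,
            swap_card (Finset.mem_inter.2 ⟨hzx, hzu⟩) (fun h => hz'u (Finset.mem_inter.1 h).2)]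
          exact h4
        · show (p'.1 ∩ insert z' (p'.2.erase z)).card = m
          rw [swap_inter_fst hzv hz'v, Finset.card_erase_of_mem (Finset.mem_inter.2 ⟨hzv, hzu⟩)]
          omega
        · show (x ∩ (p'.1 ∩ insert z' (p'.2.erase z))).card = a - 1
          rw [swap_inter_fst hzv hz'v, Finset.inter_erase, Finset.card_erase_of_mem
            (by rw [Finset.mem_inter, Finset.mem_inter]; exact ⟨hzx, hzv, hzu⟩), h6]
      · refine ⟨rfl, z, ?_, z', ?_, rfl⟩
        · simp [hzx, hzv, hzu]
        · simp only [Finset.mem_sdiff, Finset.mem_union]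
          exact ⟨hz'x, hz'⟩
  · -- upper bound on degrees from B
    rintro p hp
    rw [hB, Finset.mem_filter] at hp
    obtain ⟨-, g1, g2, g3, g4, g5, g6⟩ := hp
    have hsub : A.bipartiteBelow r p ⊆
        ((x ∩ p.1) ×ˢ (x ∩ p.2)).image (fun q => (p.1, insert q.1 (p.2.erase q.2))) := by
      intro p' hp'
      rw [Finset.mem_bipartiteBelow] at hp'
      obtain ⟨hp'A, hfst, z, hz, z', hz', hsnd⟩ := hp'
      rw [Finset.mem_inter, Finset.mem_inter] at hz
      obtain ⟨hzx, hzv, hzu⟩ := hz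
      rw [Finset.mem_sdiff, Finset.mem_union] at hz'
      obtain ⟨hz'x, hz'vu⟩ := hz'
      have hz'u : z' ∉ p'.2 := fun h => hz'vu (Or.inr h)
      rw [Finset.mem_image]
      refine ⟨(z, z'), ?_, ?_⟩
      · rw [Finset.mem_product, Finset.mem_inter, Finset.mem_inter]
        exact ⟨⟨hzx, hfst ▸ hzv⟩, hz'x, hsnd ▸ Finset.mem_insert_self _ _⟩
      · have he : p.2.erase z' = p'.2.erase z := by
          rw [hsnd, Finset.erase_insert (fun h => hz'u (Finset.mem_of_mem_erase h))]
        have h2snd : insert z (p.2.erase z') = p'.2 := by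
          rw [he, Finset.insert_erase hzu]
        exact Prod.ext hfst h2snd
    calc (A.bipartiteBelow r p).card ≤ _ := Finset.card_le_card hsub
    _ ≤ ((x ∩ p.1) ×ˢ (x ∩ p.2)).card := Finset.card_image_le
    _ = ℓ * ℓ := by rw [Finset.card_product, g3, g4]

lemma branch2 (k' ℓ m a : ℕ) (x : Finset (Fin n)) :
    pairCountA n k' ℓ (m+1) a x * ((m+1-a) * (n - x.card - 2*k')) ≤
      pairCountA n k' ℓ m a x * (k' * k') := by
  classical
  set A := ((Finset.univ : Finset (Finset (Fin n) × Finset (Fin n))).filter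
    (fun p => p.1.card = k' ∧ p.2.card = k' ∧
      (x ∩ p.1).card = ℓ ∧ (x ∩ p.2).card = ℓ ∧ (p.1 ∩ p.2).card = m+1 ∧
      (x ∩ (p.1 ∩ p.2)).card = a)) with hA
  set B := ((Finset.univ : Finset (Finset (Fin n) × Finset (Fin n))).filter
    (fun p => p.1.card = k' ∧ p.2.card = k' ∧
      (x ∩ p.1).card = ℓ ∧ (x ∩ p.2).card = ℓ ∧ (p.1 ∩ p.2).card = m ∧
      (x ∩ (p.1 ∩ p.2)).card = a)) with hB
  have : pairCountA n k' ℓ (m+1) a x = A.card := rfl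
  rw [this]
  have : pairCountA n k' ℓ m a x = B.card := rfl
  rw [this]
  set r : (Finset (Fin n) × Finset (Fin n)) → (Finset (Fin n) × Finset (Fin n)) → Prop :=
    fun p' p => p.1 = p'.1 ∧ ∃ z ∈ (p'.1 ∩ p'.2) \ x,
      ∃ z' ∈ (Finset.univ \ (x ∪ p'.1 ∪ p'.2)), p.2 = insert z' (p'.2.erase z) with hr
  apply Finset.card_mul_le_card_mul r
  · rintro p' hp'
    rw [hA, Finset.mem_filter] at hp'
    obtain ⟨-, h1, h2, h3, h4, h5, h6⟩ := hp'
    set D := ((p'.1 ∩ p'.2) \ x) ×ˢ (Finset.univ \ (x ∪ p'.1 ∪ p'.2)) with hD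
    have hDcard : (m+1-a) * (n - x.card - 2*k') ≤ D.card := by
      rw [hD, Finset.card_product]
      have e1 : ((p'.1 ∩ p'.2) ∩ x).card + ((p'.1 ∩ p'.2) \ x).card = (p'.1 ∩ p'.2).card :=
        Finset.card_inter_add_card_sdiff _ _
      rw [Finset.inter_comm, h6] at e1
      have e2 : ((Finset.univ : Finset (Fin n)) \ (x ∪ p'.1 ∪ p'.2)).card
          = n - (x ∪ p'.1 ∪ p'.2).card := by
        rw [Finset.card_sdiff_of_subset (Finset.subset_univ _), Finset.card_univ, Fintype.card_fin]
      have e3 : (x ∪ p'.1 ∪ p'.2).card ≤ x.card + k' + k' := by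
        calc (x ∪ p'.1 ∪ p'.2).card ≤ (x ∪ p'.1).card + p'.2.card := Finset.card_union_le _ _
        _ ≤ x.card + p'.1.card + p'.2.card := by
            have := Finset.card_union_le x p'.1
            omega
        _ = x.card + k' + k' := by omega
      apply Nat.mul_le_mul
      · omega
      · omega
    set φ : (Fin n × Fin n) → (Finset (Fin n) × Finset (Fin n)) :=
      fun q => (p'.1, insert q.2 (p'.2.erase q.1)) with hφ
    have hinj : Set.InjOn φ D := by
      rintro ⟨z1, z1'⟩ hq1 ⟨z2, z2'⟩ hq2 heq
      simp only [hD, Finset.mem_coe, Finset.mem_product, Finset.mem_inter, Finset.mem_sdiff,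
        Finset.mem_union] at hq1 hq2
      obtain ⟨⟨⟨-, hz1u⟩, -⟩, -, hz1'⟩ := hq1
      obtain ⟨⟨⟨-, hz2u⟩, -⟩, -, hz2'⟩ := hq2
      have heq2 : insert z1' (p'.2.erase z1) = insert z2' (p'.2.erase z2) :=
        congrArg Prod.snd heq
      have hz1'u : z1' ∉ p'.2 := fun h => hz1' (Or.inr h)
      have hz2'u : z2' ∉ p'.2 := fun h => hz2' (Or.inr h)
      have e1 : z1' = z2' := by
        have : z1' ∈ insert z2' (p'.2.erase z2) := heq2 ▸ Finset.mem_insert_self _ _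
        rcases Finset.mem_insert.1 this with h | h
        · exact h
        · exact absurd (Finset.mem_of_mem_erase h) hz1'u
      have e2 : z1 = z2 := by
        by_contra hne
        have hz1ne : z1 ≠ z1' := fun h => hz1'u (h ▸ hz1u)
        have : z1 ∈ insert z2' (p'.2.erase z2) :=
          Finset.mem_insert_of_mem (Finset.mem_erase.2 ⟨hne, hz1u⟩)
        rw [← heq2, Finset.mem_insert, Finset.mem_erase] at this
        rcases this with h | ⟨h, -⟩
        · exact hz1ne h
        · exact h rfl
      simp [e1, e2]
    calc (m+1-a) * (n - x.card - 2*k') ≤ D.card := hDcard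
    _ = (D.image φ).card := (Finset.card_image_of_injOn hinj).symm
    _ ≤ (B.bipartiteAbove r p').card := by
      apply Finset.card_le_card
      intro p hp
      rw [Finset.mem_image] at hp
      obtain ⟨⟨z, z'⟩, hq, hpq⟩ := hp
      simp only [hD, Finset.mem_product, Finset.mem_inter, Finset.mem_sdiff,
        Finset.mem_union] at hq
      obtain ⟨⟨⟨hzv, hzu⟩, hzx⟩, -, hz'⟩ := hq
      have hz'x : z' ∉ x := fun h => hz' (Or.inl (Or.inl h))
      have hz'v : z' ∉ p'.1 := fun h => hz' (Or.inl (Or.inr h))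
      have hz'u : z' ∉ p'.2 := fun h => hz' (Or.inr h)
      rw [Finset.mem_bipartiteAbove]
      subst hpq
      constructor
      · rw [hB, Finset.mem_filter]
        refine ⟨Finset.mem_univ _, h1, ?_, h3, ?_, ?_, ?_⟩
        · rw [hφ]; simpa using (swap_card hzu hz'u).trans h2
        · show (x ∩ insert z' (p'.2.erase z)).card = ℓ
          rw [swap_inter_none hzx hz'x]
          exact h4
        · show (p'.1 ∩ insert z' (p'.2.erase z)).card = m
          rw [swap_inter_fst hzv hz'v, Finset.card_erase_of_mem (Finset.mem_inter.2 ⟨hzv, hzu⟩)]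
          omega
        · show (x ∩ (p'.1 ∩ insert z' (p'.2.erase z))).card = a
          rw [swap_inter_fst hzv hz'v, Finset.inter_erase,
            Finset.erase_eq_of_notMem (fun h => hzx (Finset.mem_inter.1 h).1), h6]
      · refine ⟨rfl, z, ?_, z', ?_, rfl⟩
        · simp only [Finset.mem_sdiff, Finset.mem_inter]
          exact ⟨⟨hzv, hzu⟩, hzx⟩
        · simp only [Finset.mem_sdiff, Finset.mem_union, Finset.mem_univ, true_and]
          exact hz'
  · rintro p hp
    rw [hB, Finset.mem_filter] at hp
    obtain ⟨-, g1, g2, g3, g4, g5, g6⟩ := hp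
    have hsub : A.bipartiteBelow r p ⊆
        ((p.1 \ x) ×ˢ (p.2 \ x)).image (fun q => (p.1, insert q.1 (p.2.erase q.2))) := by
      intro p' hp'
      rw [Finset.mem_bipartiteBelow] at hp'
      obtain ⟨hp'A, hfst, z, hz, z', hz', hsnd⟩ := hp'
      rw [Finset.mem_sdiff, Finset.mem_inter] at hz
      obtain ⟨⟨hzv, hzu⟩, hzx⟩ := hz
      rw [Finset.mem_sdiff, Finset.mem_union, Finset.mem_union] at hz'
      obtain ⟨-, hz'vu⟩ := hz'
      have hz'x : z' ∉ x := fun h => hz'vu (Or.inl (Or.inl h))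
      have hz'u : z' ∉ p'.2 := fun h => hz'vu (Or.inr h)
      rw [Finset.mem_image]
      refine ⟨(z, z'), ?_, ?_⟩
      · rw [Finset.mem_product, Finset.mem_sdiff, Finset.mem_sdiff]
        exact ⟨⟨hfst ▸ hzv, hzx⟩, hsnd ▸ Finset.mem_insert_self _ _, hz'x⟩
      · have he : p.2.erase z' = p'.2.erase z := by
          rw [hsnd, Finset.erase_insert (fun h => hz'u (Finset.mem_of_mem_erase h))]
        have h2snd : insert z (p.2.erase z') = p'.2 := by
          rw [he, Finset.insert_erase hzu]
        exact Prod.ext hfst h2snd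
    calc (A.bipartiteBelow r p).card ≤ _ := Finset.card_le_card hsub
    _ ≤ ((p.1 \ x) ×ˢ (p.2 \ x)).card := Finset.card_image_le
    _ ≤ k' * k' := by
      rw [Finset.card_product]
      exact Nat.mul_le_mul (g1 ▸ Finset.card_le_card (Finset.sdiff_subset))
        (g2 ▸ Finset.card_le_card (Finset.sdiff_subset))

lemma pairCount_eq_sum (n k' ℓ m : ℕ) (x : Finset (Fin n)) :
    pairCount n k' ℓ m x = ∑ a ∈ Finset.range (m+2), pairCountA n k' ℓ m a x := by
  classical
  unfold pairCount pairCountA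
  rw [Finset.card_eq_sum_card_fiberwise
    (f := fun p : Finset (Fin n) × Finset (Fin n) => (x ∩ (p.1 ∩ p.2)).card)
    (t := Finset.range (m+2)) ?_]
  · refine Finset.sum_congr rfl fun a _ => ?_
    rw [Finset.filter_filter]
    apply congrArg
    apply Finset.filter_congr
    intro p _
    tauto
  · intro p hp
    simp only [Finset.mem_coe, Finset.mem_filter] at hp ⊢
    rw [Finset.mem_range]
    calc (x ∩ (p.1 ∩ p.2)).card ≤ (p.1 ∩ p.2).card := card_le_card inter_subset_right
    _ = m := hp.2.2.2.2.2
    _ < m + 2 := by omega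

lemma pairCountA_zero_of_lt_a (n k' ℓ m a : ℕ) (x : Finset (Fin n)) (h : ℓ < a) :
    pairCountA n k' ℓ m a x = 0 := by
  classical
  unfold pairCountA
  rw [Finset.card_eq_zero, Finset.filter_eq_empty_iff]
  rintro p - ⟨-, -, -, h4, -, h6⟩
  have : (x ∩ (p.1 ∩ p.2)).card ≤ (x ∩ p.2).card :=
    card_le_card (by intro t ht; simp only [mem_inter] at ht ⊢; tauto)
  omega

lemma pairCountA_zero_of_m_lt_a (n k' ℓ m a : ℕ) (x : Finset (Fin n)) (h : m < a) :
    pairCountA n k' ℓ m a x = 0 := by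
  classical
  unfold pairCountA
  rw [Finset.card_eq_zero, Finset.filter_eq_empty_iff]
  rintro p - ⟨-, -, -, -, h5, h6⟩
  have : (x ∩ (p.1 ∩ p.2)).card ≤ (p.1 ∩ p.2).card := card_le_card inter_subset_right
  omega

lemma pairCountA_zero_of_k'_lt_m (n k' ℓ m a : ℕ) (x : Finset (Fin n)) (h : k' < m) :
    pairCountA n k' ℓ m a x = 0 := by
  classical
  unfold pairCountA
  rw [Finset.card_eq_zero, Finset.filter_eq_empty_iff]
  rintro p - ⟨-, h2, -, -, h5, -⟩
  have : (p.1 ∩ p.2).card ≤ p.2.card := card_le_card inter_subset_right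
  omega

lemma key_step (n k' ℓ m : ℕ) (x : Finset (Fin n))
    (Hx : 16 * (ℓ * ℓ) ≤ (m+1) * (x.card - 2*ℓ))
    (Hn : 8 * (k' * k') ≤ (m+1) * (n - x.card - 2*k')) :
    2 * pairCount n k' ℓ (m+1) x ≤ pairCount n k' ℓ m x := by
  have hper : ∀ a, 8 * pairCountA n k' ℓ (m+1) a x ≤
      pairCountA n k' ℓ m (a-1) x + 2 * pairCountA n k' ℓ m a x := by
    intro a
    rcases le_or_gt (m+1) (2*a) with hcase | hcase
    · rcases lt_or_ge ℓ a with hl | hl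
      · rw [pairCountA_zero_of_lt_a n k' ℓ (m+1) a x hl]
        omega
      · have hl0 : 0 < ℓ := by omega
        have hb := branch1 k' ℓ m a x
        have h8 : 8 * (ℓ * ℓ) ≤ a * (x.card - 2*ℓ) := by
          have c1 : (m+1) * (x.card - 2*ℓ) ≤ (2*a) * (x.card - 2*ℓ) :=
            Nat.mul_le_mul_right _ hcase
          have c2 : (2*a) * (x.card - 2*ℓ) = 2 * (a * (x.card - 2*ℓ)) := by ring
          omega
        have : (8 * pairCountA n k' ℓ (m+1) a x) * (ℓ * ℓ) ≤
            pairCountA n k' ℓ m (a-1) x * (ℓ * ℓ) := by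
          calc (8 * pairCountA n k' ℓ (m+1) a x) * (ℓ * ℓ)
              = pairCountA n k' ℓ (m+1) a x * (8 * (ℓ * ℓ)) := by ring
          _ ≤ pairCountA n k' ℓ (m+1) a x * (a * (x.card - 2*ℓ)) :=
              Nat.mul_le_mul_left _ h8
          _ ≤ _ := hb
        have := Nat.le_of_mul_le_mul_right this (by positivity)
        omega
    · rcases lt_or_ge k' (m+1) with hk | hk
      · rw [pairCountA_zero_of_k'_lt_m n k' ℓ (m+1) a x hk]
        omega
      · have hb := branch2 k' ℓ m a x
        have h8 : 4 * (k' * k') ≤ (m+1-a) * (n - x.card - 2*k') := by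
          have c1 : (m+1) * (n - x.card - 2*k') ≤ (2*(m+1-a)) * (n - x.card - 2*k') :=
            Nat.mul_le_mul_right _ (by omega)
          have c2 : (2*(m+1-a)) * (n - x.card - 2*k') = 2 * ((m+1-a) * (n - x.card - 2*k')) := by
            ring
          omega
        have : (4 * pairCountA n k' ℓ (m+1) a x) * (k' * k') ≤
            pairCountA n k' ℓ m a x * (k' * k') := by
          calc (4 * pairCountA n k' ℓ (m+1) a x) * (k' * k')
              = pairCountA n k' ℓ (m+1) a x * (4 * (k' * k')) := by ring
          _ ≤ pairCountA n k' ℓ (m+1) a x * ((m+1-a) * (n - x.card - 2*k')) :=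
              Nat.mul_le_mul_left _ h8
          _ ≤ _ := hb
        have hk'pos : 0 < k' := by omega
        have := Nat.le_of_mul_le_mul_right this (Nat.mul_pos hk'pos hk'pos)
        omega
  have hsum : ∑ a ∈ Finset.range (m+3), 8 * pairCountA n k' ℓ (m+1) a x ≤
      ∑ a ∈ Finset.range (m+3),
        (pairCountA n k' ℓ m (a-1) x + 2 * pairCountA n k' ℓ m a x) :=
    Finset.sum_le_sum (fun a _ => hper a)
  rw [Finset.sum_add_distrib, ← Finset.mul_sum, ← Finset.mul_sum] at hsum
  have hshift : ∑ a ∈ Finset.range (m+3), pairCountA n k' ℓ m (a-1) x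
      = (∑ i ∈ Finset.range (m+2), pairCountA n k' ℓ m i x) + pairCountA n k' ℓ m 0 x := by
    rw [Finset.sum_range_succ' (fun a => pairCountA n k' ℓ m (a-1) x) (m+2)]
    simp
  have hB0 : pairCountA n k' ℓ m 0 x ≤ ∑ i ∈ Finset.range (m+2), pairCountA n k' ℓ m i x :=
    Finset.single_le_sum (f := fun i => pairCountA n k' ℓ m i x)
      (fun i _ => Nat.zero_le _) (Finset.mem_range.2 (Nat.succ_pos _))
  have hlast : ∑ a ∈ Finset.range (m+3), pairCountA n k' ℓ m a x
      = (∑ i ∈ Finset.range (m+2), pairCountA n k' ℓ m i x) + pairCountA n k' ℓ m (m+2) x :=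
    Finset.sum_range_succ _ _
  have hz : pairCountA n k' ℓ m (m+2) x = 0 := pairCountA_zero_of_m_lt_a _ _ _ _ _ _ (by omega)
  have e1 : pairCount n k' ℓ (m+1) x = ∑ a ∈ Finset.range (m+3), pairCountA n k' ℓ (m+1) a x :=
    pairCount_eq_sum n k' ℓ (m+1) x
  have e2 : pairCount n k' ℓ m x = ∑ a ∈ Finset.range (m+2), pairCountA n k' ℓ m a x :=
    pairCount_eq_sum n k' ℓ m x
  omega

end Aux

set_option maxHeartbeats 2000000 in
/-- Combinatorial lemma.
Under `k' = o(n)`, `k = o(n)`, `k, k' = ω(√(log n))`, there is a small constant `c > 0` such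
that for sufficiently large `n` and every `ℓ ≤ c·min{k,k'}`:
(a) `max{32ℓ²/k, 16(k')²/n} ≤ k'/2`; and
(b) for every `m` with `max{32ℓ²/k, 16(k')²/n} ≤ m ≤ k'-1`,
`|{(v,u) ∈ T_ℓ² : ⟨v,u⟩ = m+1}| / |{(v,u) ∈ T_ℓ² : ⟨v,u⟩ = m}| ≤ 1/2`. -/
theorem stmt_18 (k k' : ℕ → ℕ)
    (x : ∀ n, Finset (Fin n)) (hx : ∀ n, (x n).card = k n)
    (hkn : ∀ n, max (k n) (k' n) ≤ n)
    (hko : (fun n => (k n : ℝ)) =o[atTop] fun n => (n : ℝ))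
    (hk'o : (fun n => (k' n : ℝ)) =o[atTop] fun n => (n : ℝ))
    (hkω : (fun n : ℕ => Real.sqrt (Real.log n)) =o[atTop] fun n => (k n : ℝ))
    (hk'ω : (fun n : ℕ => Real.sqrt (Real.log n)) =o[atTop] fun n => (k' n : ℝ)) :
    ∃ c : ℝ, 0 < c ∧
      ∀ᶠ n in atTop, ∀ ℓ : ℕ, (ℓ : ℝ) ≤ c * min (k n : ℝ) (k' n : ℝ) →
        (max (32 * (ℓ : ℝ) ^ 2 / (k n : ℝ)) (16 * (k' n : ℝ) ^ 2 / (n : ℝ)) ≤ (k' n : ℝ) / 2) ∧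
        ∀ m : ℕ, max (32 * (ℓ : ℝ) ^ 2 / (k n : ℝ)) (16 * (k' n : ℝ) ^ 2 / (n : ℝ)) ≤ (m : ℝ) →
          m ≤ k' n - 1 →
          (pairCount n (k' n) ℓ (m + 1) (x n) : ℝ) / (pairCount n (k' n) ℓ m (x n) : ℝ) ≤
            1 / 2 := by
  refine ⟨1/8, by norm_num, ?_⟩
  have h1 := hko.def (show (0:ℝ) < 1/4 by norm_num)
  have h2 := hk'o.def (show (0:ℝ) < 1/64 by norm_num)
  have h3 := hkω.def one_pos
  have h4 := hk'ω.def one_pos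
  filter_upwards [h1, h2, h3, h4, eventually_ge_atTop 3] with n hn1 hn2 hn3 hn4 hn5
  simp only [Real.norm_natCast, one_mul,
    Real.norm_of_nonneg (Real.sqrt_nonneg _)] at hn1 hn2 hn3 hn4
  have hN3 : (3:ℝ) ≤ (n:ℝ) := by exact_mod_cast hn5
  have hN0 : (0:ℝ) < (n:ℝ) := by linarith
  have hsq : (1:ℝ) ≤ Real.sqrt (Real.log n) := by
    have hlog : (1:ℝ) ≤ Real.log n := by
      rw [Real.le_log_iff_exp_le hN0]
      have := Real.exp_one_lt_d9
      linarith
    calc (1:ℝ) = Real.sqrt 1 := Real.sqrt_one.symm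
    _ ≤ _ := Real.sqrt_le_sqrt hlog
  have hk1 : (1:ℝ) ≤ (k n:ℝ) := hsq.trans hn3
  have hk'1 : (1:ℝ) ≤ (k' n:ℝ) := hsq.trans hn4
  have hK0 : (0:ℝ) < (k n:ℝ) := by linarith
  have hK'0 : (0:ℝ) < (k' n:ℝ) := by linarith
  intro ℓ hℓ
  have hℓk : (ℓ:ℝ) ≤ (k n:ℝ)/8 := by
    have h := min_le_left (k n:ℝ) (k' n:ℝ)
    linarith [hℓ]
  have hℓk' : (ℓ:ℝ) ≤ (k' n:ℝ)/8 := by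
    have h := min_le_right (k n:ℝ) (k' n:ℝ)
    linarith [hℓ]
  have hℓ0 : (0:ℝ) ≤ (ℓ:ℝ) := Nat.cast_nonneg _
  constructor
  · -- part (a)
    apply max_le
    · rw [div_le_div_iff₀ hK0 (by norm_num : (0:ℝ) < 2)]
      nlinarith [hℓk, hℓk', hℓ0, hK0, hK'0]
    · rw [div_le_div_iff₀ hN0 (by norm_num : (0:ℝ) < 2)]
      nlinarith [hn2, hK'0]
  · -- part (b)
    intro m hm _hm2
    have hma : 32 * (ℓ:ℝ)^2 ≤ (m:ℝ) * (k n:ℝ) := by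
      have h := (le_max_left (32 * (ℓ:ℝ)^2 / (k n:ℝ)) (16 * (k' n:ℝ)^2 / (n:ℝ))).trans hm
      rw [div_le_iff₀ hK0] at h
      linarith
    have hmb : 16 * (k' n:ℝ)^2 ≤ (m:ℝ) * (n:ℝ) := by
      have h := (le_max_right (32 * (ℓ:ℝ)^2 / (k n:ℝ)) (16 * (k' n:ℝ)^2 / (n:ℝ))).trans hm
      rw [div_le_iff₀ hN0] at h
      linarith
    have h2ℓk : 2 * ℓ ≤ k n := by
      have h : (2 * ℓ : ℝ) ≤ (k n : ℝ) := by push_cast; linarith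
      exact_mod_cast h
    have hsumn : k n + 2 * k' n ≤ n := by
      have h : ((k n:ℝ)) + 2 * (k' n:ℝ) ≤ (n:ℝ) := by linarith [hn1, hn2]
      exact_mod_cast h
    have Hx : 16 * (ℓ * ℓ) ≤ (m+1) * ((x n).card - 2*ℓ) := by
      rw [hx n]
      have hcast : ((k n - 2*ℓ : ℕ) : ℝ) = (k n:ℝ) - 2*(ℓ:ℝ) := by
        push_cast [Nat.cast_sub h2ℓk]
        ring
      have hreal : ((16 * (ℓ * ℓ) : ℕ) : ℝ) ≤ (((m+1) : ℕ) : ℝ) * ((k n - 2*ℓ : ℕ) : ℝ) := by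
        rw [hcast]
        push_cast
        have hm0 : (0:ℝ) ≤ (m:ℝ) := Nat.cast_nonneg _
        nlinarith [hma, hℓk, mul_nonneg hm0 (by linarith : (0:ℝ) ≤ (k n:ℝ)/2 - 2*(ℓ:ℝ))]
      exact_mod_cast hreal
    have Hn : 8 * (k' n * k' n) ≤ (m+1) * (n - (x n).card - 2*(k' n)) := by
      rw [hx n]
      have hc1 : k n ≤ n := by omega
      have hc2 : 2 * k' n ≤ n - k n := by omega
      have hcast : ((n - k n - 2*(k' n) : ℕ) : ℝ) = (n:ℝ) - (k n:ℝ) - 2*(k' n:ℝ) := by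
        push_cast [Nat.cast_sub hc1, Nat.cast_sub hc2]
        ring
      have hhalf : (n:ℝ)/2 ≤ (n:ℝ) - (k n:ℝ) - 2*(k' n:ℝ) := by linarith [hn1, hn2]
      have hreal : ((8 * (k' n * k' n) : ℕ) : ℝ)
          ≤ (((m+1) : ℕ) : ℝ) * ((n - k n - 2*(k' n) : ℕ) : ℝ) := by
        rw [hcast]
        push_cast
        have hm0 : (0:ℝ) ≤ (m:ℝ) := Nat.cast_nonneg _
        nlinarith [hmb, mul_nonneg hm0
          (by linarith : (0:ℝ) ≤ ((n:ℝ) - (k n:ℝ) - 2*(k' n:ℝ)) - (n:ℝ)/2)]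
      exact_mod_cast hreal
    have hkey := key_step n (k' n) ℓ m (x n) Hx Hn
    rcases Nat.eq_zero_or_pos (pairCount n (k' n) ℓ m (x n)) with h0 | hpos
    · have hz : pairCount n (k' n) ℓ (m+1) (x n) = 0 := by omega
      rw [hz]
      norm_num
    · rw [div_le_div_iff₀ (by exact_mod_cast hpos) (by norm_num : (0:ℝ) < 2)]
      have hcast := (Nat.cast_le (α := ℝ)).2 hkey
      push_cast at hcast ⊢
      linarith
end
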